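/- arXiv:2506.03311 — 15 statements merged into one kernel-verified Lean document; each statement's English description precedes it below -/
import Mathlib

section
/- Let M ∈ ℂ^{n×n} be an invertible matrix. Then the vector a ★_M b = M⁻¹((Ma) ∘ (Mb)) lies in ℝⁿ for all real vectors a, b ∈ ℝⁿ if and only if every row of M is either real, or is the entrywise complex conjugate of exactly one other row of M. -/
open Matrix

noncomputable section

/-- A real vector viewed as a complex vector. -/
def cvec {n : ℕ} (a : Fin n → ℝ) : Fin n → ℂ := fun i => (a i : ℂ)

/-- The ★_M-product of two real vectors, as a complex vector:
`a ★_M b := M⁻¹ ((M a) ∘ (M b))` with `∘` the entrywise product. -/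
def starC {n : ℕ} (M : Matrix (Fin n) (Fin n) ℂ) (a b : Fin n → ℝ) : Fin n → ℂ :=
  M⁻¹ *ᵥ ((M *ᵥ cvec a) * (M *ᵥ cvec b))

/-- The conjugate-row condition: every row of `M` is either real, or is the entrywise
complex conjugate of exactly one other row of `M`. -/
def ConjRows {n : ℕ} (M : Matrix (Fin n) (Fin n) ℂ) : Prop :=
  ∀ j, (∀ k, (M j k).im = 0) ∨
    (∃! l, l ≠ j ∧ ∀ k, M l k = (starRingEnd ℂ) (M j k))

namespace Stmt0Aux

variable {n : ℕ}

/-- Rows of an invertible matrix are pairwise distinct (indices with equal rows coincide). -/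
lemma rows_inj (M : Matrix (Fin n) (Fin n) ℂ) (hM : IsUnit M.det) {l l' : Fin n}
    (h : ∀ k, M l k = M l' k) : l = l' := by
  classical
  have h1 : (Pi.single l 1 : Fin n → ℂ) ᵥ* M = Pi.single l' 1 ᵥ* M := by
    rw [Matrix.single_one_vecMul, Matrix.single_one_vecMul]
    funext k; exact h k
  have cancel : ∀ v : Fin n → ℂ, v ᵥ* M ᵥ* M⁻¹ = v := by
    intro v; rw [Matrix.vecMul_vecMul, Matrix.mul_nonsing_inv M hM, Matrix.vecMul_one]
  have h2 : (Pi.single l 1 : Fin n → ℂ) = Pi.single l' 1 := by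
    rw [← cancel (Pi.single l 1), h1, cancel]
  by_contra hne
  have h4 := congrFun h2 l
  rw [Pi.single_eq_same, Pi.single_apply, if_neg hne] at h4
  exact one_ne_zero h4

lemma forward (M : Matrix (Fin n) (Fin n) ℂ) (hM : IsUnit M.det)
    (h : ∀ a b : Fin n → ℝ, ∀ i, (starC M a b i).im = 0) : ConjRows M := by
  classical
  set C := M.map (starRingEnd ℂ) with hC
  set P := C * M⁻¹ with hP
  have hMinv : M * M⁻¹ = 1 := Matrix.mul_nonsing_inv M hM
  have hPM : P * M = C := by
    rw [hP, Matrix.mul_assoc, Matrix.nonsing_inv_mul M hM, Matrix.mul_one]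
  -- Step 1: multiplicativity of P on products coming from real vectors
  have key : ∀ a b : Fin n → ℝ, P *ᵥ ((M *ᵥ cvec a) * (M *ᵥ cvec b))
      = (C *ᵥ cvec a) * (C *ᵥ cvec b) := by
    intro a b
    have hreal : ∀ m, (starRingEnd ℂ) (starC M a b m) = starC M a b m := fun m =>
      Complex.conj_eq_iff_im.mpr (h a b m)
    have hMs : M *ᵥ starC M a b = (M *ᵥ cvec a) * (M *ᵥ cvec b) := by
      rw [starC, Matrix.mulVec_mulVec, hMinv, Matrix.one_mulVec]
    have hstep : P *ᵥ ((M *ᵥ cvec a) * (M *ᵥ cvec b)) = C *ᵥ starC M a b := by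
      rw [hP, ← Matrix.mulVec_mulVec]; rfl
    rw [hstep]
    funext i
    have h1 : (C *ᵥ starC M a b) i = (starRingEnd ℂ) ((M *ᵥ starC M a b) i) := by
      simp only [Matrix.mulVec, dotProduct, map_sum, _root_.map_mul, hC, Matrix.map_apply]
      exact Finset.sum_congr rfl fun m _ => by rw [hreal m]
    rw [h1, hMs]
    simp only [Pi.mul_apply, Matrix.mulVec, dotProduct, _root_.map_mul, map_sum, hC,
      Matrix.map_apply, cvec, Complex.conj_ofReal]
  -- Step 2: entrywise key identity at basis vectors
  have hA : ∀ i j k, ∑ m, P i m * (M m j * M m k)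
      = (starRingEnd ℂ) (M i j) * (starRingEnd ℂ) (M i k) := by
    intro i j k
    have hcv : ∀ t : Fin n, cvec (Pi.single t (1:ℝ)) = Pi.single t (1:ℂ) := by
      intro t; funext m
      by_cases hm : m = t <;> simp [cvec, Pi.single_apply, hm]
    have h0 := congrFun (key (Pi.single j 1) (Pi.single k 1)) i
    rw [hcv, hcv] at h0
    simpa [Matrix.mulVec_single, Matrix.mulVec, dotProduct, Pi.mul_apply, hC,
      Matrix.map_apply] using h0
  have hsurj : ∀ x : Fin n → ℂ, ∃ u, M *ᵥ u = x := fun x =>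
    ⟨M⁻¹ *ᵥ x, by rw [Matrix.mulVec_mulVec, hMinv, Matrix.one_mulVec]⟩
  -- Step 3: full multiplicativity of P
  have hmul : ∀ x y : Fin n → ℂ, P *ᵥ (x * y) = (P *ᵥ x) * (P *ᵥ y) := by
    intro x y
    obtain ⟨u, rfl⟩ := hsurj x
    obtain ⟨v, rfl⟩ := hsurj y
    funext i
    have hPx : (P *ᵥ (M *ᵥ u)) i = ∑ j, (starRingEnd ℂ) (M i j) * u j := by
      rw [Matrix.mulVec_mulVec, hPM]
      simp [Matrix.mulVec, dotProduct, hC, Matrix.map_apply]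
    have hPy : (P *ᵥ (M *ᵥ v)) i = ∑ k, (starRingEnd ℂ) (M i k) * v k := by
      rw [Matrix.mulVec_mulVec, hPM]
      simp [Matrix.mulVec, dotProduct, hC, Matrix.map_apply]
    calc (P *ᵥ ((M *ᵥ u) * (M *ᵥ v))) i
        = ∑ m, P i m * ((∑ j, M m j * u j) * (∑ k, M m k * v k)) := by
          simp [Matrix.mulVec, dotProduct, Pi.mul_apply]
      _ = ∑ m, ∑ j, ∑ k, P i m * (M m j * M m k) * (u j * v k) := by
          refine Finset.sum_congr rfl fun m _ => ?_
          rw [Finset.sum_mul_sum, Finset.mul_sum]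
          refine Finset.sum_congr rfl fun j _ => ?_
          rw [Finset.mul_sum]
          exact Finset.sum_congr rfl fun k _ => by ring
      _ = ∑ j, ∑ k, (∑ m, P i m * (M m j * M m k)) * (u j * v k) := by
          rw [Finset.sum_comm]
          refine Finset.sum_congr rfl fun j _ => ?_
          rw [Finset.sum_comm]
          refine Finset.sum_congr rfl fun k _ => ?_
          rw [Finset.sum_mul]
      _ = ∑ j, ∑ k, ((starRingEnd ℂ) (M i j) * u j) * ((starRingEnd ℂ) (M i k) * v k) := by
          refine Finset.sum_congr rfl fun j _ => Finset.sum_congr rfl fun k _ => ?_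
          rw [hA i j k]; ring
      _ = (∑ j, (starRingEnd ℂ) (M i j) * u j) * (∑ k, (starRingEnd ℂ) (M i k) * v k) :=
          (Finset.sum_mul_sum _ _ _ _).symm
      _ = ((P *ᵥ (M *ᵥ u)) * (P *ᵥ (M *ᵥ v))) i := by rw [Pi.mul_apply, hPx, hPy]
  -- Step 4: the entries of P are 0 or 1 and rows have disjoint supports
  have hP01 : ∀ i m, P i m = 0 ∨ P i m = 1 := by
    intro i m
    have hss : ((Pi.single m 1 : Fin n → ℂ) * Pi.single m 1) = Pi.single m 1 := by
      funext t; by_cases ht : t = m <;> simp [Pi.single_apply, ht]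
    have h0 := congrFun (hmul (Pi.single m 1) (Pi.single m 1)) i
    rw [hss] at h0
    simp only [Matrix.mulVec_single_one, Matrix.col_apply, mul_one, Pi.mul_apply] at h0
    have h1 : P i m * (P i m - 1) = 0 := by linear_combination -h0
    rcases mul_eq_zero.mp h1 with h2 | h2
    · exact Or.inl h2
    · exact Or.inr (by linear_combination h2)
  have hPdisj : ∀ i m m', m ≠ m' → P i m * P i m' = 0 := by
    intro i m m' hmm
    have hss : ((Pi.single m 1 : Fin n → ℂ) * Pi.single m' 1) = 0 := by
      funext t
      by_cases ht : t = m
      · subst ht; simp [Pi.single_apply, hmm]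
      · simp [Pi.single_apply, ht]
    have h0 := congrFun (hmul (Pi.single m 1) (Pi.single m' 1)) i
    rw [hss] at h0
    simp only [Matrix.mulVec_zero, Pi.zero_apply, Matrix.mulVec_single_one, Matrix.col_apply, mul_one,
      Pi.mul_apply] at h0
    exact h0.symm
  -- Step 5: P is invertible, hence each row has a (unique) nonzero entry
  have hCdet : IsUnit C.det := by
    have hd : C.det = (starRingEnd ℂ) M.det := by
      rw [hC]
      exact ((starRingEnd ℂ).map_det M).symm
    rw [hd]
    exact hM.map (starRingEnd ℂ)
  have hPdet : IsUnit P.det := by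
    rw [hP, Matrix.det_mul]
    exact hCdet.mul (Matrix.isUnit_nonsing_inv_det M hM)
  have hrow : ∀ i, ∃ m, P i m ≠ 0 := by
    intro i
    by_contra hcon
    push_neg at hcon
    have h0 := congrFun (congrFun (Matrix.mul_nonsing_inv P hPdet) i) i
    rw [Matrix.mul_apply] at h0
    simp [hcon, Matrix.one_apply] at h0
  choose σ hσ using hrow
  have hPσ : ∀ i, P i (σ i) = 1 := fun i => (hP01 i (σ i)).resolve_left (hσ i)
  have hPo : ∀ i m, m ≠ σ i → P i m = 0 := by
    intro i m hm
    rcases mul_eq_zero.mp (hPdisj i m (σ i) hm) with h2 | h2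
    · exact h2
    · exact absurd h2 (hσ i)
  have hrowconj : ∀ i k, M (σ i) k = (starRingEnd ℂ) (M i k) := by
    intro i k
    have h0 := congrFun (congrFun hPM i) k
    rw [Matrix.mul_apply, Finset.sum_eq_single (σ i)] at h0
    · rw [hPσ i, one_mul] at h0
      rw [h0, hC, Matrix.map_apply]
    · intro m _ hm
      rw [hPo i m hm, zero_mul]
    · intro habs; exact absurd (Finset.mem_univ _) habs
  -- Conclude
  intro j
  by_cases hjj : σ j = j
  · left
    intro k
    have h0 := hrowconj j k
    rw [hjj] at h0
    exact Complex.conj_eq_iff_im.mp h0.symm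
  · right
    refine ⟨σ j, ⟨hjj, fun k => hrowconj j k⟩, ?_⟩
    rintro l ⟨hl, hlk⟩
    exact rows_inj M hM fun k => (hlk k).trans (hrowconj j k).symm

lemma backward (M : Matrix (Fin n) (Fin n) ℂ) (hM : IsUnit M.det) (hc : ConjRows M) :
    ∀ a b : Fin n → ℝ, ∀ i, (starC M a b i).im = 0 := by
  classical
  have hMinv : M⁻¹ * M = 1 := Matrix.nonsing_inv_mul M hM
  set σ : Fin n → Fin n := fun j =>
    if h : ∃ l, l ≠ j ∧ ∀ k, M l k = (starRingEnd ℂ) (M j k) then h.choose else j with hσdef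
  have hσ : ∀ j k, M (σ j) k = (starRingEnd ℂ) (M j k) := by
    intro j k
    by_cases h : ∃ l, l ≠ j ∧ ∀ k, M l k = (starRingEnd ℂ) (M j k)
    · simp only [hσdef, dif_pos h]
      exact h.choose_spec.2 k
    · simp only [hσdef, dif_neg h]
      rcases hc j with hre | hex
      · exact (Complex.conj_eq_iff_im.mpr (hre k)).symm
      · exact absurd hex.exists h
  have hinv : Function.Involutive σ := by
    intro j
    apply rows_inj M hM
    intro k
    rw [hσ (σ j) k, hσ j k]
    exact Complex.conj_conj _
  set N : Matrix (Fin n) (Fin n) ℂ := Matrix.of (fun i m => M⁻¹ i (σ m)) with hNdef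
  have hNC : N * M.map (starRingEnd ℂ) = 1 := by
    ext i k
    rw [Matrix.mul_apply]
    calc ∑ m, N i m * (M.map (starRingEnd ℂ)) m k
        = ∑ m, M⁻¹ i (σ m) * M (σ m) k := by
          refine Finset.sum_congr rfl fun m _ => ?_
          rw [hNdef, Matrix.of_apply, Matrix.map_apply, ← hσ m k]
      _ = ∑ m, M⁻¹ i m * M m k :=
          Fintype.sum_equiv (Function.Involutive.toPerm σ hinv) _ _ fun m => rfl
      _ = (1 : Matrix (Fin n) (Fin n) ℂ) i k := by rw [← Matrix.mul_apply, hMinv]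
  have hCdet : IsUnit (M.map (starRingEnd ℂ)).det := by
    have hd : (M.map (starRingEnd ℂ)).det = (starRingEnd ℂ) M.det :=
      ((starRingEnd ℂ).map_det M).symm
    rw [hd]
    exact hM.map (starRingEnd ℂ)
  have h1 : (M.map (starRingEnd ℂ))⁻¹ = N := Matrix.inv_eq_left_inv hNC
  have h2 : (M.map (starRingEnd ℂ))⁻¹ = (M⁻¹).map (starRingEnd ℂ) := by
    apply Matrix.inv_eq_left_inv
    rw [← Matrix.map_mul, hMinv]
    exact Matrix.map_one _ (map_zero _) (map_one _)
  have hMinvconj : ∀ i m, (starRingEnd ℂ) (M⁻¹ i m) = M⁻¹ i (σ m) := by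
    intro i m
    have h3 := congrFun (congrFun (h2.symm.trans h1) i) m
    simpa [Matrix.map_apply, hNdef] using h3
  intro a b i
  rw [← Complex.conj_eq_iff_im]
  set x := M *ᵥ cvec a with hx
  set y := M *ᵥ cvec b with hy
  have hMa : ∀ m, (starRingEnd ℂ) (x m) = x (σ m) := by
    intro m
    rw [hx]
    simp only [Matrix.mulVec, dotProduct, map_sum, _root_.map_mul, cvec, Complex.conj_ofReal]
    exact Finset.sum_congr rfl fun j _ => by rw [hσ m j]
  have hMb : ∀ m, (starRingEnd ℂ) (y m) = y (σ m) := by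
    intro m
    rw [hy]
    simp only [Matrix.mulVec, dotProduct, map_sum, _root_.map_mul, cvec, Complex.conj_ofReal]
    exact Finset.sum_congr rfl fun j _ => by rw [hσ m j]
  have hsC : starC M a b i = ∑ m, M⁻¹ i m * (x m * y m) := by
    simp only [starC, ← hx, ← hy, Matrix.mulVec, dotProduct, Pi.mul_apply]
  rw [hsC, map_sum]
  calc ∑ m, (starRingEnd ℂ) (M⁻¹ i m * (x m * y m))
      = ∑ m, M⁻¹ i (σ m) * (x (σ m) * y (σ m)) := by
        refine Finset.sum_congr rfl fun m _ => ?_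
        rw [_root_.map_mul, _root_.map_mul, hMinvconj, hMa m, hMb m]
    _ = ∑ m, M⁻¹ i m * (x m * y m) :=
        Fintype.sum_equiv (Function.Involutive.toPerm σ hinv) _ _ fun m => rfl

end Stmt0Aux

/-- for invertible `M`, `a ★_M b` is real for all real `a, b` iff
`M` satisfies the conjugate-row condition. -/
theorem stmt0 {n : ℕ} (M : Matrix (Fin n) (Fin n) ℂ) (hM : IsUnit M.det) :
    (∀ a b : Fin n → ℝ, ∀ i, (starC M a b i).im = 0) ↔ ConjRows M :=
  ⟨Stmt0Aux.forward M hM, Stmt0Aux.backward M hM⟩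
end
end

section
/- Let M ∈ ℂ^{n×n} be an invertible matrix satisfying the conjugate-row condition. Then ℝⁿ equipped with the usual vector addition and the binary operation ★_M is a commutative ring with a unit: ★_M maps pairs of real vectors to real vectors, is commutative, associative, distributes over addition, and the real vector e_M := M⁻¹𝟙 (where 𝟙 is the all-ones vector) satisfies e_M ★_M a = a for all a ∈ ℝⁿ. -/
open Matrix

noncomputable section

/-- The ★_M-product of two real vectors, as a real vector (its real part; under the
conjugate-row condition the product is real so no information is lost). -/
def sprod {n : ℕ} (M : Matrix (Fin n) (Fin n) ℂ) (a b : Fin n → ℝ) : Fin n → ℝ :=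
  fun i => (starC M a b i).re

/-- The unit tube `e_M = M⁻¹ 𝟙` (as a real vector). -/
def eM {n : ℕ} (M : Matrix (Fin n) (Fin n) ℂ) : Fin n → ℝ :=
  fun i => ((M⁻¹ *ᵥ fun _ => (1 : ℂ)) i).re

/-- From the conjugate-row condition, extract a map `σ` with row `σ j` = conjugate of row `j`. -/
lemma exists_sigma {n : ℕ} (M : Matrix (Fin n) (Fin n) ℂ) (hcr : ConjRows M) :
    ∃ σ : Fin n → Fin n, ∀ j k, M (σ j) k = (starRingEnd ℂ) (M j k) := by
  have h : ∀ j, ∃ l, ∀ k, M l k = (starRingEnd ℂ) (M j k) := by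
    intro j
    rcases hcr j with h | ⟨l, ⟨_, hl⟩, _⟩
    · exact ⟨j, fun k => (Complex.conj_eq_iff_im.mpr (h k)).symm⟩
    · exact ⟨l, hl⟩
  choose σ hσ using h
  exact ⟨σ, hσ⟩

/-- Key lemma: if `w` is `σ`-conjugate-symmetric, then `M⁻¹ *ᵥ w` is real. -/
lemma key_real {n : ℕ} (M : Matrix (Fin n) (Fin n) ℂ) (hM : IsUnit M.det)
    (σ : Fin n → Fin n) (hσ : ∀ j k, M (σ j) k = (starRingEnd ℂ) (M j k))
    (w : Fin n → ℂ) (hw : ∀ j, (starRingEnd ℂ) (w j) = w (σ j)) (i : Fin n) :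
    ((M⁻¹ *ᵥ w) i).im = 0 := by
  set Q : Matrix (Fin n) (Fin n) ℂ := Matrix.of fun j k => if k = σ j then 1 else 0 with hQdef
  have hQM : Q * M = M.map (starRingEnd ℂ) := by
    ext j k
    simp [Matrix.mul_apply, hQdef, ite_mul, hσ j k]
  have hQw : Q *ᵥ w = fun j => w (σ j) := by
    funext j
    simp [Matrix.mulVec, dotProduct, hQdef, ite_mul]
  have hdetmap : IsUnit (M.map (starRingEnd ℂ)).det := by
    rw [show (M.map (starRingEnd ℂ)).det = (starRingEnd ℂ) M.det from
      (RingHom.map_det (starRingEnd ℂ) M).symm]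
    exact hM.map (starRingEnd ℂ)
  have hQdet : IsUnit Q.det := by
    have : IsUnit (Q.det * M.det) := by rw [← Matrix.det_mul, hQM]; exact hdetmap
    exact isUnit_of_mul_isUnit_left this
  have hinvmap : (M.map (starRingEnd ℂ))⁻¹ = M⁻¹.map (starRingEnd ℂ) := by
    apply Matrix.inv_eq_left_inv
    rw [← @Matrix.map_mul, Matrix.nonsing_inv_mul M hM, Matrix.map_one _ (map_zero _) (map_one _)]
  have hconj : (starRingEnd ℂ) ((M⁻¹ *ᵥ w) i) = (M⁻¹ *ᵥ w) i := by
    have h1 : (starRingEnd ℂ) ((M⁻¹ *ᵥ w) i)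
        = ((M⁻¹.map (starRingEnd ℂ)) *ᵥ (fun j => (starRingEnd ℂ) (w j))) i := by
      simp [Matrix.mulVec, dotProduct, map_sum, _root_.map_mul]
    rw [h1]
    have h2 : (fun j => (starRingEnd ℂ) (w j)) = Q *ᵥ w := by
      rw [hQw]; funext j; exact hw j
    rw [h2, ← hinvmap, ← hQM, Matrix.mul_inv_rev, Matrix.mulVec_mulVec, Matrix.mul_assoc,
      Matrix.nonsing_inv_mul Q hQdet, Matrix.mul_one]
  exact Complex.conj_eq_iff_im.mp hconj

lemma mulVec_cvec_conj {n : ℕ} (M : Matrix (Fin n) (Fin n) ℂ)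
    (σ : Fin n → Fin n) (hσ : ∀ j k, M (σ j) k = (starRingEnd ℂ) (M j k))
    (a : Fin n → ℝ) (j : Fin n) :
    (starRingEnd ℂ) ((M *ᵥ cvec a) j) = (M *ᵥ cvec a) (σ j) := by
  simp only [Matrix.mulVec, dotProduct, map_sum, _root_.map_mul, cvec, Complex.conj_ofReal, hσ]

/-- under the conjugate-row condition, `(ℝⁿ, +, ★_M)` is a commutative
unital ring: the product of real vectors is real, commutative, associative,
distributive over addition, and `e_M = M⁻¹𝟙` is a (real) multiplicative unit. -/
theorem stmt1 {n : ℕ} (M : Matrix (Fin n) (Fin n) ℂ) (hM : IsUnit M.det)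
    (hcr : ConjRows M) :
    (∀ a b : Fin n → ℝ, ∀ i, (starC M a b i).im = 0) ∧
    (∀ a b : Fin n → ℝ, sprod M a b = sprod M b a) ∧
    (∀ a b c : Fin n → ℝ, sprod M (sprod M a b) c = sprod M a (sprod M b c)) ∧
    (∀ a b c : Fin n → ℝ, sprod M a (b + c) = sprod M a b + sprod M a c) ∧
    (∀ i, ((M⁻¹ *ᵥ fun _ => (1 : ℂ)) i).im = 0) ∧
    (∀ a : Fin n → ℝ, sprod M (eM M) a = a) := by
  obtain ⟨σ, hσ⟩ := exists_sigma M hcr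
  -- part 1
  have him : ∀ a b : Fin n → ℝ, ∀ i, (starC M a b i).im = 0 := by
    intro a b i
    apply key_real M hM σ hσ
    intro j
    simp only [Pi.mul_apply, _root_.map_mul, mulVec_cvec_conj M σ hσ]
  -- a key consequence: cvec of sprod is starC
  have hcv : ∀ a b : Fin n → ℝ, cvec (sprod M a b) = starC M a b := by
    intro a b; funext i
    exact Complex.ext rfl (by simp [cvec, (him a b i).symm])
  have hMM : ∀ v : Fin n → ℂ, M *ᵥ (M⁻¹ *ᵥ v) = v := by
    intro v
    rw [Matrix.mulVec_mulVec, Matrix.mul_nonsing_inv M hM, Matrix.one_mulVec]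
  -- part 5
  have hone : ∀ i, ((M⁻¹ *ᵥ fun _ => (1 : ℂ)) i).im = 0 := by
    intro i
    exact key_real M hM σ hσ _ (fun j => by simp) i
  refine ⟨him, ?_, ?_, ?_, hone, ?_⟩
  · intro a b
    funext i
    simp only [sprod, starC, mul_comm]
  · intro a b c
    funext i
    simp only [sprod, starC, hcv]
    rw [hMM, hMM, mul_assoc]
  · intro a b c
    funext i
    have : cvec (b + c) = cvec b + cvec c := by funext k; simp [cvec]
    simp only [sprod, starC, this, Matrix.mulVec_add, mul_add, Pi.add_apply,
      Complex.add_re]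
  · intro a
    funext i
    have hcve : cvec (eM M) = M⁻¹ *ᵥ (fun _ => (1 : ℂ)) := by
      funext j
      exact Complex.ext rfl (by simp [cvec, (hone j).symm])
    simp only [sprod, starC, hcve, hMM]
    have : ((fun _ => (1:ℂ)) * (M *ᵥ cvec a)) = M *ᵥ cvec a := by
      funext j; simp
    rw [this]
    have : M⁻¹ *ᵥ (M *ᵥ cvec a) = cvec a := by
      rw [Matrix.mulVec_mulVec, Matrix.nonsing_inv_mul M hM, Matrix.one_mulVec]
    rw [this]
    rfl
end
end

section
/- Let M ∈ ℂ^{n×n} be an invertible matrix satisfying the conjugate-row condition. If row j of M is real, then column j of M⁻¹ is real; and if row j of M is complex and is the entrywise conjugate of row k of M (k ≠ j), then columns j and k of M⁻¹ are entrywise complex conjugates of each other. -/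
open Matrix

noncomputable section

lemma conjcol {n : ℕ} (M : Matrix (Fin n) (Fin n) ℂ) (hM : IsUnit M.det)
    (hcr : ConjRows M) (j k : Fin n)
    (hjk : ∀ i, M k i = (starRingEnd ℂ) (M j i)) :
    ∀ i, M⁻¹ i k = (starRingEnd ℂ) (M⁻¹ i j) := by
  have hne : ∀ {a b : Fin n}, a ≠ b → M a = M b → False := by
    intro a b hab h
    have h0 := Matrix.det_zero_of_row_eq hab h
    rw [h0] at hM
    simp at hM
  set y : Fin n → ℂ := fun l => (starRingEnd ℂ) (M⁻¹ l j) with hy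
  set z : Fin n → ℂ := fun l => M⁻¹ l k with hz
  have hMz : ∀ i, (M *ᵥ z) i = (1 : Matrix (Fin n) (Fin n) ℂ) i k := by
    intro i
    have : (M *ᵥ z) i = (M * M⁻¹) i k := by
      simp [Matrix.mulVec, Matrix.mul_apply, dotProduct, hz]
    rw [this, Matrix.mul_nonsing_inv M hM]
  have hMy : ∀ i, (M *ᵥ y) i = (1 : Matrix (Fin n) (Fin n) ℂ) i k := by
    intro i
    rcases hcr i with hre | ⟨l, ⟨hli, hl⟩, hlu⟩
    · -- row i real
      have hci : ∀ m, (starRingEnd ℂ) (M i m) = M i m := fun m =>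
        Complex.conj_eq_iff_im.mpr (hre m)
      have h1 : (M *ᵥ y) i = (starRingEnd ℂ) ((M * M⁻¹) i j) := by
        simp only [Matrix.mulVec, dotProduct, Matrix.mul_apply, hy, map_sum]
        refine Finset.sum_congr rfl fun m _ => ?_
        rw [_root_.map_mul, hci m]
      rw [h1, Matrix.mul_nonsing_inv M hM]
      rcases eq_or_ne i j with hij | hij
      · have hik : i = k := by
          by_contra hik
          refine hne (a := k) (b := i) (Ne.symm hik) (funext fun m => ?_)
          rw [hjk m, ← hij, hci m]
        subst hij; subst hik; simp
      · have hik : i ≠ k := by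
          intro hik
          refine hne hij (funext fun m => ?_)
          have h2 : M i m = (starRingEnd ℂ) (M j m) := by rw [hik]; exact hjk m
          calc M i m = (starRingEnd ℂ) (M i m) := (hci m).symm
            _ = (starRingEnd ℂ) ((starRingEnd ℂ) (M j m)) := by rw [h2]
            _ = M j m := Complex.conj_conj _
        simp [Matrix.one_apply, hij, hik]
    · -- M l = conj of row i
      have h1 : (M *ᵥ y) i = (starRingEnd ℂ) ((M * M⁻¹) l j) := by
        simp only [Matrix.mulVec, dotProduct, Matrix.mul_apply, hy, map_sum]
        refine Finset.sum_congr rfl fun m _ => ?_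
        rw [_root_.map_mul, hl m, Complex.conj_conj]
      rw [h1, Matrix.mul_nonsing_inv M hM]
      rcases eq_or_ne i k with hik | hik
      · have hlj : l = j := by
          by_contra hlj
          refine hne hlj (funext fun m => ?_)
          calc M l m = (starRingEnd ℂ) (M i m) := hl m
            _ = (starRingEnd ℂ) (M k m) := by rw [hik]
            _ = (starRingEnd ℂ) ((starRingEnd ℂ) (M j m)) := by rw [hjk m]
            _ = M j m := Complex.conj_conj _
        subst hlj; subst hik; simp
      · have hlj : l ≠ j := by
          intro hlj
          refine hne hik (funext fun m => ?_)
          calc M i m = (starRingEnd ℂ) ((starRingEnd ℂ) (M i m)) := (Complex.conj_conj _).symm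
            _ = (starRingEnd ℂ) (M l m) := by rw [hl m]
            _ = (starRingEnd ℂ) (M j m) := by rw [hlj]
            _ = M k m := (hjk m).symm
        simp [Matrix.one_apply, hlj, hik]
  have hyz : y = z := by
    have hMyz : M *ᵥ y = M *ᵥ z := funext fun i => by rw [hMy i, hMz i]
    have h3 := congrArg (fun v => M⁻¹ *ᵥ v) hMyz
    simpa [Matrix.mulVec_mulVec, Matrix.nonsing_inv_mul M hM] using h3
  intro i
  exact (congrFun hyz i).symm

/-- if row `j` of `M` is real then column `j` of `M⁻¹` is real; if rows
`j` and `k` (`k ≠ j`) of `M` are entrywise conjugate then columns `j` and `k` of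
`M⁻¹` are entrywise conjugate. -/
theorem stmt3 {n : ℕ} (M : Matrix (Fin n) (Fin n) ℂ) (hM : IsUnit M.det)
    (hcr : ConjRows M) :
    (∀ j, (∀ k, (M j k).im = 0) → ∀ i, (M⁻¹ i j).im = 0) ∧
    (∀ j k, k ≠ j → (¬ ∀ i, (M j i).im = 0) →
      (∀ i, M k i = (starRingEnd ℂ) (M j i)) →
      ∀ i, M⁻¹ i k = (starRingEnd ℂ) (M⁻¹ i j)) := by
  constructor
  · intro j hre i
    have h := conjcol M hM hcr j j (fun m => (Complex.conj_eq_iff_im.mpr (hre m)).symm) i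
    exact Complex.conj_eq_iff_im.mp h.symm
  · intro j k _ _ hjk
    exact conjcol M hM hcr j k hjk
end
end

section
/- Let M ∈ ℂ^{n×n} be an invertible matrix satisfying the conjugate-row condition. Then the matrix M⁻¹·conj(M) is real, where conj(M) denotes the entrywise complex conjugate of M. -/
open Matrix

noncomputable section

/-- under the conjugate-row condition, `M⁻¹ ⬝ conj(M)` is a real matrix. -/
theorem stmt4 {n : ℕ} (M : Matrix (Fin n) (Fin n) ℂ) (hM : IsUnit M.det)
    (hcr : ConjRows M) :
    ∀ i j, ((M⁻¹ * M.map (starRingEnd ℂ)) i j).im = 0 := by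
  set c := starRingEnd ℂ with hc
  -- a function selecting the "conjugate row"
  classical
  have hf : ∃ f : Fin n → Fin n, ∀ j k, M (f j) k = c (M j k) := by
    refine ⟨fun j => if h : ∃! l, l ≠ j ∧ ∀ k, M l k = c (M j k) then h.choose else j, ?_⟩
    intro j k
    dsimp only
    split_ifs with h
    · exact h.choose_spec.1.2 k
    · rcases hcr j with hre | hex
      · exact (Complex.conj_eq_iff_im.mpr (hre k)).symm
      · exact absurd hex h
  obtain ⟨f, key⟩ := hf
  -- rows of M are pairwise distinct
  have hrows : ∀ a b : Fin n, (∀ k, M a k = M b k) → a = b := by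
    have hli : LinearIndependent ℂ (fun i => M i) :=
      linearIndependent_rows_iff_isUnit.mpr ((isUnit_iff_isUnit_det M).mpr hM)
    intro a b hab
    exact hli.injective (funext hab)
  have hinj : Function.Injective f := by
    intro a b hab
    refine hrows a b fun k => ?_
    have h1 : c (M a k) = c (M b k) := by rw [← key, ← key, hab]
    exact (starRingEnd ℂ).injective h1
  let e : Equiv.Perm (Fin n) := Equiv.ofBijective f (Finite.injective_iff_bijective.mp hinj)
  have he : ∀ j k, M (e j) k = c (M j k) := key
  -- the inverse of conj(M)
  have hMc : M.map c = M.submatrix (⇑e) id := by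
    ext i j; simp [he i j]
  have hinvc : (M.map c)⁻¹ = M⁻¹.submatrix id (⇑e) := by
    refine inv_eq_right_inv ?_
    ext i j
    have : (M.map c * M⁻¹.submatrix id ⇑e) i j = (M * M⁻¹) (e i) (e j) := by
      rw [hMc]
      simp only [Matrix.mul_apply, submatrix_apply, id_eq]
    rw [this, Matrix.mul_nonsing_inv M hM]
    simp [Matrix.one_apply, EmbeddingLike.apply_eq_iff_eq]
  -- conj of M⁻¹ is (conj M)⁻¹
  have hinvmap : M⁻¹.map c = (M.map c)⁻¹ := by
    refine (inv_eq_right_inv ?_).symm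
    have : M.map c * M⁻¹.map c = (M * M⁻¹).map c := (Matrix.map_mul).symm
    rw [this, Matrix.mul_nonsing_inv M hM]
    ext i j
    simp [Matrix.one_apply, apply_ite c]
  intro i j
  rw [← Complex.conj_eq_iff_im]
  have lhs : c ((M⁻¹ * M.map c) i j) = (M⁻¹.map c * M) i j := by
    simp only [Matrix.mul_apply, map_sum, _root_.map_mul, Matrix.map_apply]
    exact Finset.sum_congr rfl fun k _ => by simp [hc]
  rw [lhs, hinvmap, hinvc]
  simp only [Matrix.mul_apply, submatrix_apply, id_eq, Matrix.map_apply]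
  exact Fintype.sum_equiv e _ _ fun k => by rw [he k j]; simp [hc]
end
end

section
/- Let M ∈ ℂ^{n×n} be an invertible matrix satisfying the conjugate-row condition. Then for every x ∈ ℝⁿ, the weak inverse x⁻ := M⁻¹((Mx)⁺) is a real vector, where for a complex vector v the vector v⁺ is obtained by inverting each nonzero entry of v and leaving zero entries zero. -/
open Matrix

noncomputable section

/-- under the conjugate-row condition, the weak inverse
`x⁻ = M⁻¹ ((M x)⁺)` of every real vector `x` is real.  (In Lean, `z⁻¹ = 0` for
`z = 0` in `ℂ`, so entrywise inversion is exactly the `⁺` operation.) -/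
theorem stmt5 {n : ℕ} (M : Matrix (Fin n) (Fin n) ℂ) (hM : IsUnit M.det)
    (hcr : ConjRows M) :
    ∀ x : Fin n → ℝ, ∀ i,
      ((M⁻¹ *ᵥ fun k => ((M *ᵥ cvec x) k)⁻¹) i).im = 0 := by
  classical
  -- the conjugation permutation σ
  set σ : Fin n → Fin n := fun j =>
    if h : ∃! l, l ≠ j ∧ ∀ k, M l k = (starRingEnd ℂ) (M j k) then h.choose else j with hσ
  have hA : ∀ j k, M (σ j) k = (starRingEnd ℂ) (M j k) := by
    intro j k
    by_cases h : ∃! l, l ≠ j ∧ ∀ k, M l k = (starRingEnd ℂ) (M j k)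
    · simp only [hσ, dif_pos h]
      exact h.choose_spec.1.2 k
    · simp only [hσ, dif_neg h]
      have := (hcr j).resolve_right h
      exact (Complex.conj_eq_iff_im.2 (this k)).symm
  have hB : ∀ j, σ (σ j) = j := by
    intro j
    by_cases h : ∃! l, l ≠ j ∧ ∀ k, M l k = (starRingEnd ℂ) (M j k)
    · have hl : σ j = h.choose := by simp only [hσ, dif_pos h]
      set l := h.choose with hldef
      obtain ⟨⟨hlj, hrow⟩, huniqj⟩ := h.choose_spec
      have hjl : ∀ k, M j k = (starRingEnd ℂ) (M l k) := by
        intro k; rw [hrow k]; simp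
      have h' : ∃! m, m ≠ l ∧ ∀ k, M m k = (starRingEnd ℂ) (M l k) := by
        refine ⟨j, ⟨fun hc => hlj hc.symm, hjl⟩, ?_⟩
        rintro m ⟨hml, hm⟩
        by_contra hmj
        have hmrow : ∀ k, M m k = M j k := by
          intro k; rw [hm k, hjl k]
        rcases hcr l with hreal | huniq
        · have : m = l := huniqj m ⟨hmj, fun k => by
            rw [hmrow k, hjl k]
            exact congrArg _ (Complex.conj_eq_iff_im.2 (hreal k)).symm⟩
          exact hml this
        · exact hmj (huniq.unique ⟨hml, hm⟩ ⟨fun hc => hlj hc.symm, hjl⟩)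
      have hσl : σ l = j := by
        simp only [hσ, dif_pos h']
        exact (h'.choose_spec.2 j ⟨fun hc => hlj hc.symm, hjl⟩).symm
      rw [hl, hσl]
    · have hj : σ j = j := by simp only [hσ, dif_neg h]
      rw [hj, hj]
  intro x i
  -- notation
  set v : Fin n → ℂ := M *ᵥ cvec x with hv
  set w : Fin n → ℂ := fun k => (v k)⁻¹ with hw
  set y : Fin n → ℂ := M⁻¹ *ᵥ w with hy
  -- conj(v j) = v (σ j)
  have hvconj : ∀ j, (starRingEnd ℂ) (v j) = v (σ j) := by
    intro j
    simp only [hv, mulVec, dotProduct, map_sum, _root_.map_mul]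
    refine Finset.sum_congr rfl fun k _ => ?_
    rw [hA j k]
    congr 1
    simp [cvec]
  have hwconj : ∀ j, (starRingEnd ℂ) (w j) = w (σ j) := by
    intro j
    simp only [hw, map_inv₀, hvconj j]
  -- M *ᵥ y = w
  have hMy : M *ᵥ y = w := by
    rw [hy, mulVec_mulVec, Matrix.mul_nonsing_inv M hM, one_mulVec]
  -- conj y satisfies the same equation
  set z : Fin n → ℂ := fun k => (starRingEnd ℂ) (y k) with hz
  have hMz : M *ᵥ z = w := by
    funext j
    obtain ⟨j', hj'⟩ : ∃ j', σ j' = j := ⟨σ j, hB j⟩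
    subst hj'
    have : (M *ᵥ z) (σ j') = (starRingEnd ℂ) ((M *ᵥ y) j') := by
      simp only [mulVec, dotProduct, map_sum, hz]
      exact Finset.sum_congr rfl fun k _ => by rw [hA j' k, _root_.map_mul]
    rw [this, hMy, hwconj]
  have hzy : z = y := by
    have := congrArg (fun u => M⁻¹ *ᵥ u) (hMz.trans hMy.symm)
    simpa [mulVec_mulVec, Matrix.nonsing_inv_mul M hM, one_mulVec] using this
  have := congrFun hzy i
  have him : (starRingEnd ℂ) (y i) = y i := this
  have : (y i).im = 0 := by
    have := Complex.conj_eq_iff_im.mp him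
    exact this
  simpa [hy, hw, hv] using this
end
end

section
/- Let M ∈ ℂ^{n×n} be an invertible matrix satisfying the conjugate-row condition, and for a ∈ ℝⁿ define a⁻ := M⁻¹((Ma)⁺) and a* := M⁻¹·conj(Ma). Then for every a ∈ ℝⁿ, a⁻ is the unique element of ℝⁿ satisfying the four properties: (1) a ★_M a⁻ ★_M a = a; (2) a⁻ ★_M a ★_M a⁻ = a⁻; (3) (a ★_M a⁻)* = a ★_M a⁻; (4) (a⁻ ★_M a)* = a⁻ ★_M a. -/
open Matrix

noncomputable section

/-- The ★_M-conjugate `a* = M⁻¹ conj(M a)` (as a real vector). -/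
def astarR {n : ℕ} (M : Matrix (Fin n) (Fin n) ℂ) (a : Fin n → ℝ) : Fin n → ℝ :=
  fun i => ((M⁻¹ *ᵥ fun k => (starRingEnd ℂ) ((M *ᵥ cvec a) k)) i).re

/-- The weak inverse `a⁻ = M⁻¹ ((M a)⁺)` (as a real vector). Note `(0 : ℂ)⁻¹ = 0`,
so entrywise inversion implements `⁺`. -/
def winvR {n : ℕ} (M : Matrix (Fin n) (Fin n) ℂ) (a : Fin n → ℝ) : Fin n → ℝ :=
  fun i => ((M⁻¹ *ᵥ fun k => ((M *ᵥ cvec a) k)⁻¹) i).re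

section helpers

variable {n : ℕ} {M : Matrix (Fin n) (Fin n) ℂ}

lemma cvec_inj {x y : Fin n → ℝ} (h : cvec x = cvec y) : x = y :=
  funext fun i => by
    have := congrFun h i
    simp only [cvec] at this
    exact_mod_cast this

lemma conjRows_sigma (hcr : ConjRows M) :
    ∃ σ : Fin n → Fin n, ∀ j k, M (σ j) k = (starRingEnd ℂ) (M j k) := by
  have h : ∀ j, ∃ l, ∀ k, M l k = (starRingEnd ℂ) (M j k) := fun j => by
    rcases hcr j with h | h
    · exact ⟨j, fun k => (Complex.conj_eq_iff_im.2 (h k)).symm⟩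
    · obtain ⟨l, ⟨_, hl⟩, _⟩ := h
      exact ⟨l, hl⟩
  exact ⟨fun j => (h j).choose, fun j => (h j).choose_spec⟩

lemma mulVec_invVec (hM : IsUnit M.det) (w : Fin n → ℂ) :
    M *ᵥ (M⁻¹ *ᵥ w) = w := by
  rw [Matrix.mulVec_mulVec, Matrix.mul_nonsing_inv M hM, Matrix.one_mulVec]

lemma invVec_mulVec (hM : IsUnit M.det) (w : Fin n → ℂ) :
    M⁻¹ *ᵥ (M *ᵥ w) = w := by
  rw [Matrix.mulVec_mulVec, Matrix.nonsing_inv_mul M hM, Matrix.one_mulVec]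

lemma adm_mulVec_cvec {σ : Fin n → Fin n}
    (hσ : ∀ j k, M (σ j) k = (starRingEnd ℂ) (M j k)) (x : Fin n → ℝ) :
    ∀ j, (M *ᵥ cvec x) (σ j) = (starRingEnd ℂ) ((M *ᵥ cvec x) j) := by
  intro j
  simp only [Matrix.mulVec, dotProduct, cvec, map_sum, _root_.map_mul,
    Complex.conj_ofReal, hσ]

lemma re_real (hM : IsUnit M.det) {σ : Fin n → Fin n}
    (hσ : ∀ j k, M (σ j) k = (starRingEnd ℂ) (M j k))
    {w : Fin n → ℂ} (hw : ∀ j, w (σ j) = (starRingEnd ℂ) (w j)) :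
    (fun i => (((M⁻¹ *ᵥ w) i).re : ℂ)) = M⁻¹ *ᵥ w := by
  set z := M⁻¹ *ᵥ w with hz
  have h1 : M *ᵥ z = w := mulVec_invVec hM w
  have h2 : M *ᵥ (fun k => (starRingEnd ℂ) (z k)) = w := by
    funext j
    have key : (M *ᵥ fun k => (starRingEnd ℂ) (z k)) j
        = (starRingEnd ℂ) ((M *ᵥ z) (σ j)) := by
      simp only [Matrix.mulVec, dotProduct, map_sum, _root_.map_mul, hσ,
        Complex.conj_conj]
    rw [key, h1, hw, Complex.conj_conj]
  have h3 : (fun k => (starRingEnd ℂ) (z k)) = z := by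
    calc (fun k => (starRingEnd ℂ) (z k))
        = M⁻¹ *ᵥ (M *ᵥ fun k => (starRingEnd ℂ) (z k)) :=
          (invVec_mulVec hM _).symm
      _ = M⁻¹ *ᵥ w := by rw [h2]
      _ = z := hz.symm
  funext i
  have hi := congrFun h3 i
  have him : (z i).im = 0 := by
    have := congrArg Complex.im hi
    simp only [Complex.conj_im] at this
    linarith
  exact Complex.ext (by simp) (by simp [him])

lemma cvec_sprod (hM : IsUnit M.det) {σ : Fin n → Fin n}
    (hσ : ∀ j k, M (σ j) k = (starRingEnd ℂ) (M j k)) (x y : Fin n → ℝ) :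
    cvec (sprod M x y) = M⁻¹ *ᵥ ((M *ᵥ cvec x) * (M *ᵥ cvec y)) := by
  have hx := adm_mulVec_cvec hσ x
  have hy := adm_mulVec_cvec hσ y
  have hp : ∀ j, ((M *ᵥ cvec x) * (M *ᵥ cvec y)) (σ j)
      = (starRingEnd ℂ) (((M *ᵥ cvec x) * (M *ᵥ cvec y)) j) := fun j => by
    simp only [Pi.mul_apply, hx j, hy j, _root_.map_mul]
  exact re_real hM hσ hp

lemma mulVec_cvec_sprod (hM : IsUnit M.det) {σ : Fin n → Fin n}
    (hσ : ∀ j k, M (σ j) k = (starRingEnd ℂ) (M j k)) (x y : Fin n → ℝ) :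
    M *ᵥ cvec (sprod M x y) = (M *ᵥ cvec x) * (M *ᵥ cvec y) := by
  rw [cvec_sprod hM hσ, mulVec_invVec hM]

lemma cvec_winv (hM : IsUnit M.det) {σ : Fin n → Fin n}
    (hσ : ∀ j k, M (σ j) k = (starRingEnd ℂ) (M j k)) (a : Fin n → ℝ) :
    cvec (winvR M a) = M⁻¹ *ᵥ (fun k => ((M *ᵥ cvec a) k)⁻¹) := by
  have ha := adm_mulVec_cvec hσ a
  have hp : ∀ j, (fun k => ((M *ᵥ cvec a) k)⁻¹) (σ j)
      = (starRingEnd ℂ) ((fun k => ((M *ᵥ cvec a) k)⁻¹) j) := fun j => by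
    simp only [ha j, map_inv₀]
  exact re_real hM hσ hp

lemma mulVec_cvec_winv (hM : IsUnit M.det) {σ : Fin n → Fin n}
    (hσ : ∀ j k, M (σ j) k = (starRingEnd ℂ) (M j k)) (a : Fin n → ℝ) :
    M *ᵥ cvec (winvR M a) = fun k => ((M *ᵥ cvec a) k)⁻¹ := by
  rw [cvec_winv hM hσ, mulVec_invVec hM]

lemma astar_fixed (hM : IsUnit M.det) (b : Fin n → ℝ)
    (hb : ∀ k, (starRingEnd ℂ) ((M *ᵥ cvec b) k) = (M *ᵥ cvec b) k) :
    astarR M b = b := by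
  funext i
  have hc : (fun k => (starRingEnd ℂ) ((M *ᵥ cvec b) k)) = M *ᵥ cvec b :=
    funext hb
  show ((M⁻¹ *ᵥ fun k => (starRingEnd ℂ) ((M *ᵥ cvec b) k)) i).re = b i
  rw [hc, invVec_mulVec hM]
  simp [cvec]

end helpers

/-- `a⁻` is the unique real vector satisfying the four Moore–Penrose-like
properties. -/
theorem stmt6 {n : ℕ} (M : Matrix (Fin n) (Fin n) ℂ) (hM : IsUnit M.det)
    (hcr : ConjRows M) (a : Fin n → ℝ) :
    (sprod M (sprod M a (winvR M a)) a = a ∧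
     sprod M (sprod M (winvR M a) a) (winvR M a) = winvR M a ∧
     astarR M (sprod M a (winvR M a)) = sprod M a (winvR M a) ∧
     astarR M (sprod M (winvR M a) a) = sprod M (winvR M a) a) ∧
    (∀ y : Fin n → ℝ,
      (sprod M (sprod M a y) a = a ∧
       sprod M (sprod M y a) y = y ∧
       astarR M (sprod M a y) = sprod M a y ∧
       astarR M (sprod M y a) = sprod M y a) → y = winvR M a) := by
  obtain ⟨σ, hσ⟩ := conjRows_sigma hcr
  set u : Fin n → ℂ := M *ᵥ cvec a with hu_def
  set w : Fin n → ℝ := winvR M a with hw_def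
  have hMw : M *ᵥ cvec w = fun k => (u k)⁻¹ := mulVec_cvec_winv hM hσ a
  -- products of M-images of sprods
  have hMaw : M *ᵥ cvec (sprod M a w) = fun k => u k * (u k)⁻¹ := by
    rw [mulVec_cvec_sprod hM hσ, hMw]; rfl
  have hMwa : M *ᵥ cvec (sprod M w a) = fun k => (u k)⁻¹ * u k := by
    rw [mulVec_cvec_sprod hM hσ, hMw]; rfl
  constructor
  · refine ⟨?_, ?_, ?_, ?_⟩
    · -- a ★ a⁻ ★ a = a
      apply cvec_inj
      rw [cvec_sprod hM hσ, hMaw, ← hu_def]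
      have : (fun k => u k * (u k)⁻¹) * u = u := by
        funext k
        rcases eq_or_ne (u k) 0 with h | h <;>
          simp [Pi.mul_apply, h, mul_inv_cancel₀]
      rw [this, hu_def, invVec_mulVec hM]
    · -- a⁻ ★ a ★ a⁻ = a⁻
      apply cvec_inj
      rw [cvec_sprod hM hσ, hMwa, hMw]
      have : (fun k => (u k)⁻¹ * u k) * (fun k => (u k)⁻¹)
          = fun k => (u k)⁻¹ := by
        funext k
        rcases eq_or_ne (u k) 0 with h | h <;>
          simp [Pi.mul_apply, h, inv_mul_cancel₀]
      rw [this, ← cvec_winv hM hσ]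
    · -- star condition 1
      apply astar_fixed hM
      intro k
      rw [hMaw]
      rcases eq_or_ne (u k) 0 with h | h <;> simp [h, mul_inv_cancel₀]
    · -- star condition 2
      apply astar_fixed hM
      intro k
      rw [hMwa]
      rcases eq_or_ne (u k) 0 with h | h <;> simp [h, inv_mul_cancel₀]
  · rintro y ⟨h1, h2, -, -⟩
    set v : Fin n → ℂ := M *ᵥ cvec y with hv_def
    have hu1 : ∀ k, u k * v k * u k = u k := by
      intro k
      have := congrArg (fun t => (M *ᵥ cvec t) k) h1
      rw [mulVec_cvec_sprod hM hσ, mulVec_cvec_sprod hM hσ] at this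
      simpa [Pi.mul_apply, ← hu_def, ← hv_def] using this
    have hu2 : ∀ k, v k * u k * v k = v k := by
      intro k
      have := congrArg (fun t => (M *ᵥ cvec t) k) h2
      rw [mulVec_cvec_sprod hM hσ, mulVec_cvec_sprod hM hσ] at this
      simpa [Pi.mul_apply, ← hu_def, ← hv_def] using this
    have hv : v = fun k => (u k)⁻¹ := by
      funext k
      rcases eq_or_ne (u k) 0 with h | h
      · have := hu2 k
        rw [h] at this
        simp only [mul_zero, zero_mul] at this
        rw [h, ← this]
        simp
      · have h2' : u k * (v k * u k) = u k * 1 := by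
          rw [mul_one, ← mul_assoc]; exact hu1 k
        have h3 : v k * u k = 1 := mul_left_cancel₀ h h2'
        exact eq_inv_of_mul_eq_one_left h3
    apply cvec_inj
    calc cvec y = M⁻¹ *ᵥ (M *ᵥ cvec y) := (invVec_mulVec hM _).symm
      _ = M⁻¹ *ᵥ (fun k => (u k)⁻¹) := by rw [← hv_def, hv]
      _ = cvec (winvR M a) := (cvec_winv hM hσ a).symm
end
end

section
/- Let · : ℝⁿ × ℝⁿ → ℝⁿ be a binary operation such that (ℝⁿ, +, ·) is a tubal ring, i.e.: · is ℝ-bilinear, associative, and commutative; there is a unit e ∈ ℝⁿ with e·a = a for all a; and the ring is von Neumann regular, meaning for every a ∈ ℝⁿ there exists x ∈ ℝⁿ with a·x·a = a. Then there exists an invertible matrix M ∈ ℂ^{n×n} such that for all a, b ∈ ℝⁿ, a·b = M⁻¹((Ma) ∘ (Mb)), where ∘ denotes the entrywise product in ℂⁿ. -/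
open Matrix

noncomputable section

/-! ### Auxiliary development -/

open TensorProduct

section Aux

lemma TRaux.isReduced_of_sq {R : Type*} [CommRing R] (h : ∀ x : R, x ^ 2 = 0 → x = 0) :
    IsReduced R := by
  constructor
  rintro x ⟨k, hk⟩
  induction k using Nat.strong_induction_on generalizing x with
  | _ k ih =>
    match k, hk with
    | 0, hk =>
      have h1 : (1 : R) = 0 := by simpa using hk
      calc x = x * 1 := (mul_one x).symm
        _ = 0 := by rw [h1, mul_zero]
    | 1, hk => simpa using hk
    | (m + 2), hk =>
      have hm : (x ^ (m + 1)) ^ 2 = 0 := by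
        have : (x ^ (m + 1)) ^ 2 = x ^ (m + 2) * x ^ m := by ring
        rw [this, hk, zero_mul]
      exact ih (m + 1) (by omega) _ (h _ hm)

/-- A bundled tubal ring structure on `ℝⁿ`. -/
structure TR (n : ℕ) where
  mul : (Fin n → ℝ) → (Fin n → ℝ) → (Fin n → ℝ)
  e : Fin n → ℝ
  hadd_left : ∀ a b c, mul (a + b) c = mul a c + mul b c
  hadd_right : ∀ a b c, mul a (b + c) = mul a b + mul a c
  hsmul_left : ∀ (r : ℝ) (a b : Fin n → ℝ), mul (r • a) b = r • mul a b
  hsmul_right : ∀ (r : ℝ) (a b : Fin n → ℝ), mul a (r • b) = r • mul a b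
  hcomm : ∀ a b, mul a b = mul b a
  hassoc : ∀ a b c, mul (mul a b) c = mul a (mul b c)
  hunit : ∀ a, mul e a = a
  hvnr : ∀ a, ∃ x, mul (mul a x) a = a

variable {n : ℕ}

/-- Type synonym for `Fin n → ℝ` carrying the tubal ring structure. -/
def TR.A (_T : TR n) : Type := Fin n → ℝ

variable (T : TR n)

instance : AddCommGroup T.A := (inferInstance : AddCommGroup (Fin n → ℝ))
instance (priority := 50) : Module ℝ T.A := (inferInstance : Module ℝ (Fin n → ℝ))

lemma TR.mul_zero' (a : T.A) : T.mul a 0 = 0 := by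
  have := T.hsmul_right 0 a 0
  simpa using this

instance : CommRing T.A :=
  { (inferInstance : AddCommGroup (Fin n → ℝ)) with
    mul := T.mul
    one := T.e
    left_distrib := T.hadd_right
    right_distrib := T.hadd_left
    mul_assoc := T.hassoc
    mul_comm := T.hcomm
    one_mul := T.hunit
    mul_one := fun a => (T.hcomm a T.e).trans (T.hunit a)
    zero_mul := fun a => (T.hcomm 0 a).trans (T.mul_zero' a)
    mul_zero := T.mul_zero' }

lemma TR.mul_eq (a b : T.A) : a * b = T.mul a b := rfl

instance : Algebra ℝ T.A :=
  Algebra.ofModule (fun r x y => T.hsmul_left r x y) (fun r x y => T.hsmul_right r x y)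

instance : Module.Finite ℝ T.A := (inferInstance : Module.Finite ℝ (Fin n → ℝ))

instance : IsReduced T.A := by
  constructor
  rintro a ⟨k, hk⟩
  obtain ⟨x0, hx0⟩ := T.hvnr a
  set x : T.A := x0 with hxdef
  have hx' : a * x * a = a := hx0
  rcases Nat.eq_zero_or_pos k with rfl | hkpos
  · have h1 : (1 : T.A) = 0 := by simpa using hk
    calc a = a * 1 := (mul_one a).symm
    _ = 0 := by rw [h1, mul_zero]
  · have h1 : ∀ m, a = a * (x * a) ^ m := by
      intro m
      induction m with
      | zero => simp
      | succ m ih =>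
        calc a = a * (x * a) ^ m := ih
          _ = (a * x * a) * (x * a) ^ m := by rw [hx']
          _ = a * (x * a) ^ (m + 1) := by ring
    have h2 : a = x ^ k * a ^ k * a := by rw [← mul_pow] at *; nth_rewrite 1 [h1 k]; ring
    rw [hk] at h2
    simpa using h2

/-- The basis of `T.A` given by the standard basis of `ℝⁿ`. -/
def TR.basisA : Module.Basis (Fin n) ℝ T.A := Pi.basisFun ℝ (Fin n)

lemma TR.basisA_repr (a : T.A) (i : Fin n) : T.basisA.repr a i = a i := rfl

/-! ### The complexification -/

/-- The complexification of the tubal ring. -/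
abbrev TR.B (T : TR n) : Type := ℂ ⊗[ℝ] T.A

instance : CommRing T.B := (inferInstance : CommRing (ℂ ⊗[ℝ] T.A))
instance : Algebra ℂ T.B := (inferInstance : Algebra ℂ (ℂ ⊗[ℝ] T.A))
instance : Module.Finite ℂ T.B := (inferInstance : Module.Finite ℂ (ℂ ⊗[ℝ] T.A))
instance : Module ℝ T.B := (inferInstance : Module ℝ (ℂ ⊗[ℝ] T.A))
instance : Module.Finite ℝ T.B := (inferInstance : Module.Finite ℝ (ℂ ⊗[ℝ] T.A))

instance : IsArtinianRing T.B := isArtinian_of_tower ℝ inferInstance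

lemma TR.repB (b : T.B) : ∃ u v : T.A, b = (1 ⊗ₜ u + Complex.I ⊗ₜ v : ℂ ⊗[ℝ] T.A) := by
  show ∃ u v : T.A, b = 1 ⊗ₜ u + Complex.I ⊗ₜ v
  induction b using TensorProduct.induction_on with
  | zero => exact ⟨0, 0, by simp⟩
  | tmul c a =>
    refine ⟨c.re • a, c.im • a, ?_⟩
    rw [tmul_smul, tmul_smul, smul_tmul', smul_tmul']
    rw [← add_tmul]
    congr 1
    simp [Complex.real_smul, Complex.ext_iff]
  | add x y hx hy =>
    obtain ⟨u1, v1, rfl⟩ := hx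
    obtain ⟨u2, v2, rfl⟩ := hy
    exact ⟨u1 + u2, v1 + v2, by rw [tmul_add, tmul_add]; ring⟩

/-- Real part projection of the complexification. -/
def TR.reB : T.B →ₗ[ℝ] T.A :=
  (TensorProduct.lid ℝ T.A).toLinearMap ∘ₗ TensorProduct.map Complex.reLm LinearMap.id

/-- Imaginary part projection of the complexification. -/
def TR.imB : T.B →ₗ[ℝ] T.A :=
  (TensorProduct.lid ℝ T.A).toLinearMap ∘ₗ TensorProduct.map Complex.imLm LinearMap.id

@[simp] lemma TR.reB_apply (c : ℂ) (u : T.A) : T.reB (c ⊗ₜ u : ℂ ⊗[ℝ] T.A) = c.re • u := by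
  simp only [TR.reB, LinearMap.coe_comp, LinearEquiv.coe_coe, Function.comp_apply,
    TensorProduct.map_tmul, TensorProduct.lid_tmul]
  rfl

@[simp] lemma TR.imB_apply (c : ℂ) (u : T.A) : T.imB (c ⊗ₜ u : ℂ ⊗[ℝ] T.A) = c.im • u := by
  simp only [TR.imB, LinearMap.coe_comp, LinearEquiv.coe_coe, Function.comp_apply,
    TensorProduct.map_tmul, TensorProduct.lid_tmul]
  rfl

instance : IsReduced T.B := by
  apply TRaux.isReduced_of_sq
  intro b hb
  obtain ⟨u, v, rfl⟩ := T.repB b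
  have hsq : ((1 ⊗ₜ u + Complex.I ⊗ₜ v : ℂ ⊗[ℝ] T.A)) * ((1 ⊗ₜ u + Complex.I ⊗ₜ v : ℂ ⊗[ℝ] T.A)) =
      (1 ⊗ₜ (u * u - v * v) + Complex.I ⊗ₜ (u * v + v * u) : ℂ ⊗[ℝ] T.A) := by
    rw [tmul_sub, tmul_add]
    simp only [add_mul, mul_add, Algebra.TensorProduct.tmul_mul_tmul,
      one_mul, mul_one, Complex.I_mul_I, neg_tmul]
    abel
  rw [sq, hsq] at hb
  have h1 : u * u - v * v = 0 := by
    have := congrArg T.reB hb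
    simpa using this
  have h2 : u * v + v * u = 0 := by
    have := congrArg T.imB hb
    simpa using this
  have huv : u * v = 0 := by
    have h2' : (2 : ℝ) • (u * v) = 0 := by
      rw [two_smul]; rw [mul_comm v u] at h2; exact h2
    have := congrArg (fun t => (2⁻¹ : ℝ) • t) h2'
    simpa [smul_smul] using this
  have hu : u = 0 := by
    have h3 : u ^ 3 = 0 := by
      have huu : u * u = v * v := by linear_combination h1
      calc u ^ 3 = u * (u * u) := by ring
        _ = u * (v * v) := by rw [huu]
        _ = (u * v) * v := by ring
        _ = 0 := by rw [huv, zero_mul]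
    exact IsReduced.pow_eq_zero h3
  have hv : v = 0 := by
    have h3 : v ^ 2 = 0 := by
      have hvv : v * v = u * u := by linear_combination -h1
      rw [sq, hvv, hu, mul_zero]
    exact IsReduced.pow_eq_zero h3
  rw [hu, hv]
  show (1 ⊗ₜ (0 : T.A) + Complex.I ⊗ₜ (0 : T.A) : ℂ ⊗[ℝ] T.A) = 0
  rw [tmul_zero, tmul_zero, add_zero]

end Aux

/-! ### Structure theory of finite-dimensional reduced commutative `ℂ`-algebras -/

section StructureC

variable (S : Type) [CommRing S] [Algebra ℂ S] [Module.Finite ℂ S] [IsReduced S]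
  [IsArtinianRing S]

/-- The set of maximal ideals. -/
abbrev TRaux.MI := MaximalSpectrum S

instance : Finite (TRaux.MI S) := inferInstance

/-- Each residue field is `ℂ`. -/
def TRaux.fieldEquiv (I : TRaux.MI S) : ℂ ≃+* (S ⧸ I.1) := by
  haveI : I.1.IsMaximal := I.2
  haveI : Module.Finite ℂ (S ⧸ I.1) := Module.Finite.quotient ℂ _
  exact RingEquiv.ofBijective (algebraMap ℂ (S ⧸ I.1))
    ⟨RingHom.injective _, IsAlgClosed.algebraMap_bijective_of_isIntegral.2⟩

/-- The structure isomorphism with a power of `ℂ`, as a ring isomorphism. -/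
def TRaux.bigEquiv : S ≃+* (TRaux.MI S → ℂ) :=
  (IsArtinianRing.equivPi S).toRingEquiv.trans
    (RingEquiv.piCongrRight fun I => (TRaux.fieldEquiv S I).symm)

lemma TRaux.equivPi_apply (x : S) (I : TRaux.MI S) :
    (IsArtinianRing.equivPi S) x I = Ideal.Quotient.mk I.1 x := rfl

/-- The structure isomorphism with a power of `ℂ`, as a `ℂ`-algebra isomorphism. -/
def TRaux.bigAlgEquiv : S ≃ₐ[ℂ] (TRaux.MI S → ℂ) :=
  AlgEquiv.ofRingEquiv (f := TRaux.bigEquiv S) (fun c => by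
    funext I
    show (TRaux.fieldEquiv S I).symm
      ((IsArtinianRing.equivPi S) (algebraMap ℂ S c) I) = c
    rw [TRaux.equivPi_apply]
    have h1 : Ideal.Quotient.mk I.1 (algebraMap ℂ S c) = TRaux.fieldEquiv S I c := rfl
    rw [h1, RingEquiv.symm_apply_apply])

end StructureC

/-- main theorem: every tubal ring structure on `ℝⁿ` — a commutative,
unital, von Neumann regular ring which is an associative ℝ-algebra for the usual
vector addition and scalar product — is `★_M` for some invertible `M ∈ ℂ^{n×n}`. -/
theorem stmt7 {n : ℕ}
    (mul : (Fin n → ℝ) → (Fin n → ℝ) → (Fin n → ℝ))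
    (hadd_left : ∀ a b c, mul (a + b) c = mul a c + mul b c)
    (hadd_right : ∀ a b c, mul a (b + c) = mul a b + mul a c)
    (hsmul_left : ∀ (r : ℝ) (a b : Fin n → ℝ), mul (r • a) b = r • mul a b)
    (hsmul_right : ∀ (r : ℝ) (a b : Fin n → ℝ), mul a (r • b) = r • mul a b)
    (hcomm : ∀ a b, mul a b = mul b a)
    (hassoc : ∀ a b c, mul (mul a b) c = mul a (mul b c))
    (e : Fin n → ℝ) (hunit : ∀ a, mul e a = a)
    (hvnr : ∀ a, ∃ x, mul (mul a x) a = a) :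
    ∃ M : Matrix (Fin n) (Fin n) ℂ, IsUnit M.det ∧
      ∀ a b : Fin n → ℝ,
        cvec (mul a b) = M⁻¹ *ᵥ ((M *ᵥ cvec a) * (M *ᵥ cvec b)) := by
  classical
  set T : TR n := ⟨mul, e, hadd_left, hadd_right, hsmul_left, hsmul_right,
    hcomm, hassoc, hunit, hvnr⟩ with hT
  haveI : Fintype (TRaux.MI T.B) := Fintype.ofFinite _
  -- dimension count
  have hdim : Module.finrank ℂ T.B = n := by
    have h1 : Module.finrank ℂ T.B = Module.finrank ℝ T.A := Module.finrank_baseChange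
    rw [h1]
    exact Module.finrank_fin_fun ℝ
  have hcard : Fintype.card (TRaux.MI T.B) = n := by
    have h2 : Module.finrank ℂ T.B = Module.finrank ℂ (TRaux.MI T.B → ℂ) :=
      (TRaux.bigAlgEquiv T.B).toLinearEquiv.finrank_eq
    rw [hdim, Module.finrank_pi] at h2
    omega
  -- the algebra isomorphism with ℂⁿ
  let eIdx : TRaux.MI T.B ≃ Fin n := Fintype.equivFinOfCardEq hcard
  let reIdx : (TRaux.MI T.B → ℂ) ≃ₐ[ℂ] (Fin n → ℂ) :=
    AlgEquiv.ofRingEquiv (f := RingEquiv.piCongrLeft (fun _ => ℂ) eIdx)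
      (fun c => by
        funext j
        show (RingEquiv.piCongrLeft' (fun _ => ℂ) eIdx.symm).symm _ j = c
        rw [RingEquiv.piCongrLeft'_symm]
        rfl)
  let Φ : T.B ≃ₐ[ℂ] (Fin n → ℂ) := (TRaux.bigAlgEquiv T.B).trans reIdx
  -- the coordinate equivalence
  let bC : Module.Basis (Fin n) ℂ T.B := (T.basisA.baseChange ℂ : Module.Basis (Fin n) ℂ (ℂ ⊗[ℝ] T.A))
  let E : (Fin n → ℂ) ≃ₗ[ℂ] T.B := bC.equivFun.symm
  have hE : ∀ a : Fin n → ℝ, E (cvec a) = (1 ⊗ₜ (a : T.A) : ℂ ⊗[ℝ] T.A) := by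
    intro a
    show bC.equivFun.symm (cvec a) = (1 ⊗ₜ (a : T.A) : ℂ ⊗[ℝ] T.A)
    rw [Module.Basis.equivFun_symm_apply]
    have step : ∀ i : Fin n, cvec a i • bC i
        = (1 ⊗ₜ ((a i • T.basisA i : T.A)) : ℂ ⊗[ℝ] T.A) := by
      intro i
      have h1 : bC i = (1 ⊗ₜ (T.basisA i) : ℂ ⊗[ℝ] T.A) := Module.Basis.baseChange_apply ℂ T.basisA i
      rw [h1]
      show (((a i : ℝ) : ℂ)) • ((1 ⊗ₜ (T.basisA i)) : ℂ ⊗[ℝ] T.A) = _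
      rw [smul_tmul']
      rw [show (((a i : ℝ) : ℂ)) • (1 : ℂ) = (a i : ℝ) • (1 : ℂ) by
        simp [Complex.real_smul]]
      rw [smul_tmul]
    rw [Finset.sum_congr rfl (fun i _ => step i), ← tmul_sum]
    congr 1
    -- ∑ i, a i • basisA i = a
    have := T.basisA.sum_repr (a : T.A)
    exact this
  let L : (Fin n → ℂ) ≃ₗ[ℂ] (Fin n → ℂ) := E.trans Φ.toLinearEquiv
  let M : Matrix (Fin n) (Fin n) ℂ := LinearMap.toMatrix' (L : (Fin n → ℂ) →ₗ[ℂ] (Fin n → ℂ))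
  have hMv : ∀ x : Fin n → ℂ, M *ᵥ x = L x := by
    intro x
    rw [← Matrix.toLin'_apply, Matrix.toLin'_toMatrix']
    rfl
  have hdet : IsUnit M.det := by
    apply Matrix.isUnit_det_of_right_inverse (B := LinearMap.toMatrix'
      ((L.symm : (Fin n → ℂ) ≃ₗ[ℂ] (Fin n → ℂ)) : (Fin n → ℂ) →ₗ[ℂ] (Fin n → ℂ)))
    rw [← LinearMap.toMatrix'_comp]
    rw [show (L : (Fin n → ℂ) →ₗ[ℂ] (Fin n → ℂ)) ∘ₗ
      (L.symm : (Fin n → ℂ) →ₗ[ℂ] (Fin n → ℂ)) = LinearMap.id from by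
        ext x; simp]
    exact LinearMap.toMatrix'_id
  refine ⟨M, hdet, fun a b => ?_⟩
  have hψ : ∀ a : Fin n → ℝ, M *ᵥ cvec a = Φ ((1 ⊗ₜ (a : T.A) : ℂ ⊗[ℝ] T.A)) := by
    intro a
    rw [hMv]
    show Φ (E (cvec a)) = _
    rw [hE]
  have key : M *ᵥ cvec (mul a b) = (M *ᵥ cvec a) * (M *ᵥ cvec b) := by
    rw [hψ, hψ, hψ]
    rw [← _root_.map_mul]
    congr 1
    show (1 ⊗ₜ ((mul a b : Fin n → ℝ) : T.A) : ℂ ⊗[ℝ] T.A)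
      = (1 ⊗ₜ (a : T.A) : ℂ ⊗[ℝ] T.A) * (1 ⊗ₜ (b : T.A) : ℂ ⊗[ℝ] T.A)
    refine (congrArg (fun t : T.A => (1 : ℂ) ⊗ₜ[ℝ] t) ?_).trans ((congrArg (fun c : ℂ => c ⊗ₜ[ℝ] (@HMul.hMul T.A T.A T.A _ a b)) (one_mul (1 : ℂ)).symm).trans (Algebra.TensorProduct.tmul_mul_tmul (R := ℝ) (B := T.A) (1 : ℂ) (1 : ℂ) a b).symm)
    rfl
  rw [← key, Matrix.mulVec_mulVec, Matrix.nonsing_inv_mul M hdet, Matrix.one_mulVec]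
end
end

section
/- Let M, M' ∈ ℂ^{n×n} be invertible matrices satisfying the conjugate-row condition, and suppose M and M' have the same realness, i.e., the same number of real rows. Then the rings (ℝⁿ, +, ★_M) and (ℝⁿ, +, ★_{M'}) are isomorphic: there exists an ℝ-linear bijection T : ℝⁿ → ℝⁿ such that T(a ★_M b) = T(a) ★_{M'} T(b) for all a, b ∈ ℝⁿ. -/
open Matrix

noncomputable section

/-- The realness of `M`: the number of real rows. -/
def realness {n : ℕ} (M : Matrix (Fin n) (Fin n) ℂ) : ℕ :=
  Nat.card {j : Fin n // ∀ k, (M j k).im = 0}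

namespace Stmt8Aux

variable {n : ℕ}

lemma exists_tau (M : Matrix (Fin n) (Fin n) ℂ) (hcr : ConjRows M) :
    ∃ τ : Fin n → Fin n, Function.Involutive τ ∧
      (∀ j k, M (τ j) k = (starRingEnd ℂ) (M j k)) ∧
      (∀ j, τ j = j ↔ ∀ k, (M j k).im = 0) := by
  classical
  set τ : Fin n → Fin n := fun j =>
    if h : ∀ k, (M j k).im = 0 then j else Classical.choose ((hcr j).resolve_left h) with hτ
  have hreal : ∀ j, (∀ k, (M j k).im = 0) → τ j = j := by
    intro j h; simp [hτ, h]
  have hnot : ∀ j, (h : ¬ ∀ k, (M j k).im = 0) →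
      (τ j ≠ j ∧ ∀ k, M (τ j) k = (starRingEnd ℂ) (M j k)) ∧
      ∀ y, (y ≠ j ∧ ∀ k, M y k = (starRingEnd ℂ) (M j k)) → y = τ j := by
    intro j h
    have h1 := Classical.choose_spec ((hcr j).resolve_left h)
    have h2 : τ j = Classical.choose ((hcr j).resolve_left h) := by simp [hτ, h]
    rw [h2]
    exact ⟨h1.1, fun y hy => h1.2 y hy⟩
  have hspec : ∀ j k, M (τ j) k = (starRingEnd ℂ) (M j k) := by
    intro j k
    by_cases h : ∀ k, (M j k).im = 0
    · rw [hreal j h]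
      exact (Complex.conj_eq_iff_im.mpr (h k)).symm
    · exact (hnot j h).1.2 k
  have hiff : ∀ j, τ j = j ↔ ∀ k, (M j k).im = 0 := by
    intro j
    constructor
    · intro he
      by_contra h
      exact (hnot j h).1.1 he
    · exact hreal j
  refine ⟨τ, ?_, hspec, hiff⟩
  intro j
  by_cases h : ∀ k, (M j k).im = 0
  · rw [hreal j h, hreal j h]
  · have hPl := (hnot j h).1
    have hconj : ∀ k, M j k = (starRingEnd ℂ) (M (τ j) k) := by
      intro k
      rw [hspec j k, Complex.conj_conj]
    have hlnot : ¬ (∀ k, (M (τ j) k).im = 0) := by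
      intro hlr
      apply h
      intro k
      rw [hconj k, Complex.conj_eq_iff_im.mpr (hlr k)]
      exact hlr k
    exact ((hnot (τ j) hlnot).2 j ⟨fun hjl => hPl.1 hjl.symm, hconj⟩).symm

lemma cycleType_invol (p : Equiv.Perm (Fin n)) (hp : ∀ x, p (p x) = x) :
    p.cycleType = Multiset.replicate (p.support.card / 2) 2 := by
  have hord : orderOf p ∣ 2 := by
    apply orderOf_dvd_of_pow_eq_one
    ext x
    simp [pow_two, hp x]
  have h2 : ∀ c ∈ p.cycleType, c = 2 := by
    intro c hc
    have hle := Equiv.Perm.two_le_of_mem_cycleType hc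
    have hdvd : c ∣ 2 := by
      have := Multiset.dvd_lcm hc
      rw [Equiv.Perm.lcm_cycleType] at this
      exact this.trans hord
    have := Nat.le_of_dvd (by norm_num) hdvd
    omega
  have hrep : p.cycleType = Multiset.replicate p.cycleType.card 2 :=
    Multiset.eq_replicate_card.mpr h2
  have hsum : p.cycleType.sum = p.support.card := Equiv.Perm.sum_cycleType p
  rw [hrep, Multiset.sum_replicate, smul_eq_mul] at hsum
  rw [hrep]
  congr 1
  omega

lemma fixed_card_support (p : Equiv.Perm (Fin n)) :
    p.support.card + Nat.card {j // p j = j} = n := by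
  classical
  have h1 : Nat.card {j // p j = j} = (Finset.univ.filter fun j => p j = j).card := by
    rw [Nat.card_eq_fintype_card, Fintype.card_subtype]
  have h2 : p.support = Finset.univ.filter fun j => ¬ p j = j := by
    ext x; simp [Equiv.Perm.mem_support]
  rw [h1, h2]
  have := Finset.card_filter_add_card_filter_not (s := Finset.univ)
    (p := fun j : Fin n => p j = j)
  simp only [Finset.card_univ, Fintype.card_fin] at this
  omega

lemma exists_semiconj (τ τ' : Fin n → Fin n) (hτ : Function.Involutive τ)
    (hτ' : Function.Involutive τ')
    (h : Nat.card {j // τ j = j} = Nat.card {j // τ' j = j}) :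
    ∃ π : Equiv.Perm (Fin n), ∀ i, π (τ' i) = τ (π i) := by
  classical
  set p : Equiv.Perm (Fin n) := hτ.toPerm τ with hpdef
  set p' : Equiv.Perm (Fin n) := hτ'.toPerm τ' with hpdef'
  have hpτ : ∀ x, p x = τ x := fun x => rfl
  have hpτ' : ∀ x, p' x = τ' x := fun x => rfl
  have hcards : p.support.card = p'.support.card := by
    have e1 := fixed_card_support p
    have e2 := fixed_card_support p'
    have : Nat.card {j // p j = j} = Nat.card {j // p' j = j} := by
      simpa [hpτ, hpτ'] using h
    omega
  have hct : p.cycleType = p'.cycleType := by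
    rw [cycleType_invol p (fun x => hτ x), cycleType_invol p' (fun x => hτ' x), hcards]
  have hconj : IsConj p p' := (Equiv.Perm.isConj_iff_cycleType_eq).mpr hct
  obtain ⟨c, hc⟩ := isConj_iff.mp hconj
  refine ⟨c⁻¹, fun i => ?_⟩
  have h1 : p' i = c (p (c⁻¹ i)) := by rw [← hc]; rfl
  have h2 : c⁻¹ (p' i) = p (c⁻¹ i) := by rw [h1, ← Equiv.Perm.mul_apply, inv_mul_cancel, Equiv.Perm.one_apply]
  simpa [hpτ, hpτ'] using h2

lemma mulVec_conj_row (M : Matrix (Fin n) (Fin n) ℂ) (τ : Fin n → Fin n)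
    (hspec : ∀ j k, M (τ j) k = (starRingEnd ℂ) (M j k))
    (x : Fin n → ℂ) (j : Fin n) :
    (M *ᵥ fun k => (starRingEnd ℂ) (x k)) j = (starRingEnd ℂ) ((M *ᵥ x) (τ j)) := by
  simp only [Matrix.mulVec, dotProduct, map_sum, _root_.map_mul, hspec, Complex.conj_conj]

lemma mulVec_cvec_conj (M : Matrix (Fin n) (Fin n) ℂ) (τ : Fin n → Fin n)
    (hspec : ∀ j k, M (τ j) k = (starRingEnd ℂ) (M j k)) (a : Fin n → ℝ) (j : Fin n) :
    (M *ᵥ cvec a) (τ j) = (starRingEnd ℂ) ((M *ᵥ cvec a) j) := by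
  have := mulVec_conj_row M τ hspec (cvec a) j
  have h2 : (fun k => (starRingEnd ℂ) (cvec a k)) = cvec a := by
    funext k; simp [cvec]
  rw [h2] at this
  rw [this, Complex.conj_conj]

lemma inv_mulVec_real (M : Matrix (Fin n) (Fin n) ℂ) (hM : IsUnit M.det)
    (τ : Fin n → Fin n) (hspec : ∀ j k, M (τ j) k = (starRingEnd ℂ) (M j k))
    (y : Fin n → ℂ) (hy : ∀ j, y (τ j) = (starRingEnd ℂ) (y j)) (i : Fin n) :
    ((M⁻¹ *ᵥ y) i).im = 0 := by
  set x := M⁻¹ *ᵥ y with hx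
  have hMx : M *ᵥ x = y := by
    rw [hx, Matrix.mulVec_mulVec, Matrix.mul_nonsing_inv _ hM, Matrix.one_mulVec]
  have hconj : M *ᵥ (fun k => (starRingEnd ℂ) (x k)) = y := by
    funext j
    rw [mulVec_conj_row M τ hspec x j, hMx, hy j, Complex.conj_conj]
  have hxx : (fun k => (starRingEnd ℂ) (x k)) = x := by
    have h3 : M⁻¹ *ᵥ (M *ᵥ fun k => (starRingEnd ℂ) (x k)) = M⁻¹ *ᵥ (M *ᵥ x) := by
      rw [hconj, hMx]
    rwa [Matrix.mulVec_mulVec, Matrix.mulVec_mulVec, Matrix.nonsing_inv_mul _ hM,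
      Matrix.one_mulVec, Matrix.one_mulVec] at h3
  exact Complex.conj_eq_iff_im.mp (congrFun hxx i)

end Stmt8Aux

/-- two tubal rings `★_M`, `★_{M'}` with equal realness are isomorphic
via an ℝ-linear bijection respecting the products. -/
theorem stmt8 {n : ℕ} (M M' : Matrix (Fin n) (Fin n) ℂ)
    (hM : IsUnit M.det) (hM' : IsUnit M'.det)
    (hcr : ConjRows M) (hcr' : ConjRows M')
    (hreal : realness M = realness M') :
    ∃ T : (Fin n → ℝ) ≃ₗ[ℝ] (Fin n → ℝ),
      ∀ a b : Fin n → ℝ, T (sprod M a b) = sprod M' (T a) (T b) := by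
  classical
  obtain ⟨τ, hτi, hτs, hτr⟩ := Stmt8Aux.exists_tau M hcr
  obtain ⟨τ', hτi', hτs', hτr'⟩ := Stmt8Aux.exists_tau M' hcr'
  have hcard : Nat.card {j // τ j = j} = Nat.card {j // τ' j = j} := by
    have e1 : Nat.card {j // τ j = j} = realness M :=
      Nat.card_congr (Equiv.subtypeEquivRight fun j => hτr j)
    have e2 : Nat.card {j // τ' j = j} = realness M' :=
      Nat.card_congr (Equiv.subtypeEquivRight fun j => hτr' j)
    rw [e1, e2, hreal]
  obtain ⟨π, hπ⟩ := Stmt8Aux.exists_semiconj τ τ' hτi hτi' hcard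
  have hMM : ∀ w : Fin n → ℂ, M *ᵥ (M⁻¹ *ᵥ w) = w := fun w => by
    rw [Matrix.mulVec_mulVec, Matrix.mul_nonsing_inv _ hM, Matrix.one_mulVec]
  have hM'M' : ∀ w : Fin n → ℂ, M' *ᵥ (M'⁻¹ *ᵥ w) = w := fun w => by
    rw [Matrix.mulVec_mulVec, Matrix.mul_nonsing_inv _ hM', Matrix.one_mulVec]
  have hMMinv : ∀ w : Fin n → ℂ, M⁻¹ *ᵥ (M *ᵥ w) = w := fun w => by
    rw [Matrix.mulVec_mulVec, Matrix.nonsing_inv_mul _ hM, Matrix.one_mulVec]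
  set F : (Fin n → ℂ) → (Fin n → ℂ) := fun y => M'⁻¹ *ᵥ fun i => (M *ᵥ y) (π i) with hF
  set f : (Fin n → ℝ) → (Fin n → ℝ) := fun a i => (F (cvec a) i).re with hf
  have hFim : ∀ (a : Fin n → ℝ) (i : Fin n), (F (cvec a) i).im = 0 := by
    intro a i
    apply Stmt8Aux.inv_mulVec_real M' hM' τ' hτs'
    intro j
    show (M *ᵥ cvec a) (π (τ' j)) = (starRingEnd ℂ) ((M *ᵥ cvec a) (π j))
    rw [hπ j]
    exact Stmt8Aux.mulVec_cvec_conj M τ hτs a (π j)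
  have hcvecf : ∀ a, cvec (f a) = F (cvec a) := by
    intro a; funext i
    apply Complex.ext
    · simp [cvec, hf]
    · simp [cvec, hFim a i]
  have Fadd : ∀ y z, F (y + z) = F y + F z := by
    intro y z
    show M'⁻¹ *ᵥ (fun i => (M *ᵥ (y + z)) (π i)) = _
    rw [Matrix.mulVec_add]
    have he : (fun i => (M *ᵥ y + M *ᵥ z) (π i))
        = (fun i => (M *ᵥ y) (π i)) + (fun i => (M *ᵥ z) (π i)) := rfl
    rw [he, Matrix.mulVec_add]
  have Fsmul : ∀ (c : ℂ) y, F (c • y) = c • F y := by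
    intro c y
    show M'⁻¹ *ᵥ (fun i => (M *ᵥ (c • y)) (π i)) = _
    rw [Matrix.mulVec_smul]
    have he : (fun i => (c • (M *ᵥ y)) (π i)) = c • (fun i => (M *ᵥ y) (π i)) := rfl
    rw [he, Matrix.mulVec_smul]
  have cvec_add : ∀ a b : Fin n → ℝ, cvec (a + b) = cvec a + cvec b := by
    intro a b; funext i; simp [cvec]
  have cvec_smul : ∀ (r : ℝ) (a : Fin n → ℝ), cvec (r • a) = (r : ℂ) • cvec a := by
    intro r a; funext i; simp [cvec]
  have hadd : ∀ a b, f (a + b) = f a + f b := by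
    intro a b; funext i
    simp only [hf, cvec_add, Fadd, Pi.add_apply, Complex.add_re]
  have hsmul : ∀ (r : ℝ) a, f (r • a) = r • f a := by
    intro r a; funext i
    simp only [hf, cvec_smul, Fsmul, Pi.smul_apply, smul_eq_mul, Complex.mul_re,
      Complex.ofReal_re, Complex.ofReal_im, Complex.smul_re]
    ring
  set T0 : (Fin n → ℝ) →ₗ[ℝ] (Fin n → ℝ) :=
    { toFun := f
      map_add' := hadd
      map_smul' := fun r a => hsmul r a } with hT0
  have hT0f : ∀ a, T0 a = f a := fun a => rfl
  have hinj : Function.Injective T0 := by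
    intro a b hab
    rw [hT0f, hT0f] at hab
    have h1 : F (cvec a) = F (cvec b) := by
      rw [← hcvecf, ← hcvecf, hab]
    have h2 : (fun i => (M *ᵥ cvec a) (π i)) = (fun i => (M *ᵥ cvec b) (π i)) := by
      have := congrArg (fun w => M' *ᵥ w) h1
      simpa only [hF, hM'M'] using this
    have h3 : M *ᵥ cvec a = M *ᵥ cvec b := by
      funext j
      have := congrFun h2 (π⁻¹ j)
      simpa using this
    have h4 : cvec a = cvec b := by
      rw [← hMMinv (cvec a), ← hMMinv (cvec b), h3]
    funext i
    have := congrFun h4 i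
    simpa [cvec] using this
  have hbij : Function.Bijective T0 := ⟨hinj, LinearMap.injective_iff_surjective.mp hinj⟩
  refine ⟨LinearEquiv.ofBijective T0 hbij, ?_⟩
  intro a b
  show f (sprod M a b) = sprod M' (f a) (f b)
  have hsprodC : cvec (sprod M a b) = starC M a b := by
    funext i
    have him : (starC M a b i).im = 0 := by
      apply Stmt8Aux.inv_mulVec_real M hM τ hτs
      intro j
      show ((M *ᵥ cvec a) * (M *ᵥ cvec b)) (τ j) = (starRingEnd ℂ) (((M *ᵥ cvec a) * (M *ᵥ cvec b)) j)
      simp only [Pi.mul_apply, _root_.map_mul]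
      rw [Stmt8Aux.mulVec_cvec_conj M τ hτs a j, Stmt8Aux.mulVec_cvec_conj M τ hτs b j]
    apply Complex.ext
    · simp [cvec, sprod]
    · simp [cvec, him]
  have hM'cf : ∀ c : Fin n → ℝ, M' *ᵥ cvec (f c) = fun i => (M *ᵥ cvec c) (π i) := by
    intro c
    rw [hcvecf, hF]
    exact hM'M' _
  have key : cvec (f (sprod M a b)) = starC M' (f a) (f b) := by
    rw [hcvecf, hsprodC]
    have hms : M *ᵥ starC M a b = (M *ᵥ cvec a) * (M *ᵥ cvec b) := by
      rw [starC]; exact hMM _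
    have harg : (fun i => (M *ᵥ starC M a b) (π i))
        = (M' *ᵥ cvec (f a)) * (M' *ᵥ cvec (f b)) := by
      rw [hM'cf a, hM'cf b, hms]
      rfl
    show M'⁻¹ *ᵥ (fun i => (M *ᵥ starC M a b) (π i)) = starC M' (f a) (f b)
    rw [harg]
    rfl
  funext i
  calc f (sprod M a b) i = (cvec (f (sprod M a b)) i).re := by simp [cvec]
    _ = (starC M' (f a) (f b) i).re := by rw [key]
    _ = sprod M' (f a) (f b) i := rfl
end
end

section
/- Let M ∈ ℂ^{n×n} be an invertible matrix satisfying the conjugate-row condition. For U, V : Fin m → ℝⁿ define the ★_M-dot product U ·_M V := Σ_{i=1}^{m} (Uᵢ)* ★_M Vᵢ ∈ ℝⁿ, where a* := M⁻¹·conj(Ma). Then for every U : Fin m → ℝⁿ, the vector M(U ·_M U) ∈ ℂⁿ is real with all entries nonnegative, and U ·_M U = 0 if and only if U = 0. -/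
open Matrix

noncomputable section

/-- The ★_M-dot product of two oriented matrices `U, V : Fin m → ℝⁿ`. -/
def dotM {m n : ℕ} (M : Matrix (Fin n) (Fin n) ℂ) (U V : Fin m → Fin n → ℝ) :
    Fin n → ℝ :=
  ∑ i, sprod M (astarR M (U i)) (V i)

section Aux

variable {n : ℕ}

/-- From the conjugate-row condition and invertibility, build a bijection `f` with
`M (f j) k = conj (M j k)`. -/
lemma exists_conj_row (M : Matrix (Fin n) (Fin n) ℂ) (hM : IsUnit M.det)
    (hcr : ConjRows M) :
    ∃ f : Fin n → Fin n, Function.Bijective f ∧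
      ∀ j k, M (f j) k = (starRingEnd ℂ) (M j k) := by
  have hex : ∀ j, ∃ l, ∀ k, M l k = (starRingEnd ℂ) (M j k) := by
    intro j
    rcases hcr j with h | ⟨l, ⟨_, hl⟩, _⟩
    · exact ⟨j, fun k => (Complex.conj_eq_iff_im.mpr (h k)).symm⟩
    · exact ⟨l, hl⟩
  choose f hf using hex
  refine ⟨f, ?_, hf⟩
  rw [← Finite.injective_iff_bijective]
  intro j1 j2 hj
  by_contra hne
  have hrow : M j1 = M j2 := by
    funext k
    have := (hf j1 k).symm.trans (hj ▸ hf j2 k)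
    exact star_injective this
  exact hM.ne_zero (Matrix.det_zero_of_row_eq hne hrow)

/-- If `x` satisfies the compatibility condition, then `M⁻¹ *ᵥ x` is real. -/
lemma inv_mulVec_real (M : Matrix (Fin n) (Fin n) ℂ) (hM : IsUnit M.det)
    (f : Fin n → Fin n) (hfb : Function.Bijective f)
    (hf : ∀ j k, M (f j) k = (starRingEnd ℂ) (M j k))
    (x : Fin n → ℂ) (hx : ∀ j, x (f j) = (starRingEnd ℂ) (x j)) :
    ∀ i, (starRingEnd ℂ) ((M⁻¹ *ᵥ x) i) = (M⁻¹ *ᵥ x) i := by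
  set y := M⁻¹ *ᵥ x with hy
  have hMy : M *ᵥ y = x := by
    rw [hy, Matrix.mulVec_mulVec, Matrix.mul_nonsing_inv _ hM, Matrix.one_mulVec]
  have h2 : M *ᵥ (fun i => (starRingEnd ℂ) (y i)) = x := by
    funext j
    obtain ⟨j', rfl⟩ := hfb.surjective j
    have : (M *ᵥ fun i => (starRingEnd ℂ) (y i)) (f j')
        = (starRingEnd ℂ) ((M *ᵥ y) j') := by
      simp only [Matrix.mulVec, dotProduct, map_sum, _root_.map_mul, hf]
    rw [this, hMy, ← hx]
  have hcancel : ∀ z : Fin n → ℂ, M⁻¹ *ᵥ (M *ᵥ z) = z := by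
    intro z
    rw [Matrix.mulVec_mulVec, Matrix.nonsing_inv_mul _ hM, Matrix.one_mulVec]
  have : (fun i => (starRingEnd ℂ) (y i)) = y := by
    calc (fun i => (starRingEnd ℂ) (y i))
        = M⁻¹ *ᵥ (M *ᵥ fun i => (starRingEnd ℂ) (y i)) := (hcancel _).symm
      _ = M⁻¹ *ᵥ x := by rw [h2]
      _ = y := rfl
  intro i
  exact congrFun this i

end Aux

/-- `M (U ·_M U)` is real entrywise nonnegative, and
`U ·_M U = 0` iff `U = 0`. -/
theorem stmt9 {n m : ℕ} (M : Matrix (Fin n) (Fin n) ℂ) (hM : IsUnit M.det)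
    (hcr : ConjRows M) (U : Fin m → Fin n → ℝ) :
    (∀ s, ((M *ᵥ cvec (dotM M U U)) s).im = 0 ∧ 0 ≤ ((M *ᵥ cvec (dotM M U U)) s).re) ∧
    (dotM M U U = 0 ↔ U = 0) := by
  obtain ⟨f, hfb, hf⟩ := exists_conj_row M hM hcr
  have hcancel : ∀ z : Fin n → ℂ, M⁻¹ *ᵥ (M *ᵥ z) = z := fun z => by
    rw [Matrix.mulVec_mulVec, Matrix.nonsing_inv_mul _ hM, Matrix.one_mulVec]
  have hcancel' : ∀ z : Fin n → ℂ, M *ᵥ (M⁻¹ *ᵥ z) = z := fun z => by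
    rw [Matrix.mulVec_mulVec, Matrix.mul_nonsing_inv _ hM, Matrix.one_mulVec]
  set w : Fin m → Fin n → ℂ := fun i => M *ᵥ cvec (U i) with hw
  have hwa : ∀ (a : Fin n → ℝ) (s), (M *ᵥ cvec a) (f s) = (starRingEnd ℂ) ((M *ᵥ cvec a) s) := by
    intro a s
    simp only [Matrix.mulVec, dotProduct, map_sum, _root_.map_mul, hf, cvec,
      Complex.conj_ofReal]
  have hstar : ∀ a : Fin n → ℝ,
      M *ᵥ cvec (astarR M a) = fun k => (starRingEnd ℂ) ((M *ᵥ cvec a) k) := by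
    intro a
    set xa : Fin n → ℂ := fun k => (starRingEnd ℂ) ((M *ᵥ cvec a) k) with hxa
    have hx : ∀ j, xa (f j) = (starRingEnd ℂ) (xa j) := by
      intro j
      simp only [hxa, hwa a j, Complex.conj_conj]
    have hreal := inv_mulVec_real M hM f hfb hf xa hx
    have hcv : cvec (astarR M a) = M⁻¹ *ᵥ xa := by
      funext i
      exact Complex.conj_eq_iff_re.mp (hreal i)
    rw [hcv, hcancel']
  set v : Fin n → ℂ := ∑ i, (fun k => (starRingEnd ℂ) (w i k)) * w i with hv
  have hxcond : ∀ i : Fin m, ∀ j,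
      ((fun k => (starRingEnd ℂ) (w i k)) * w i) (f j)
        = (starRingEnd ℂ) (((fun k => (starRingEnd ℂ) (w i k)) * w i) j) := by
    intro i j
    simp only [Pi.mul_apply, _root_.map_mul, Complex.conj_conj, hw, hwa (U i) j]
  have hvconj : ∀ s, v (f s) = (starRingEnd ℂ) (v s) := by
    intro s
    simp only [hv, Finset.sum_apply, map_sum]
    exact Finset.sum_congr rfl fun i _ => hxcond i s
  set z : Fin n → ℂ := M⁻¹ *ᵥ v with hz
  have hzreal := inv_mulVec_real M hM f hfb hf v hvconj
  have hdot : ∀ s, ((dotM M U U s : ℝ) : ℂ) = z s := by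
    intro s
    have h1 : dotM M U U s
        = ∑ i, ((M⁻¹ *ᵥ ((fun k => (starRingEnd ℂ) (w i k)) * w i)) s).re := by
      simp only [dotM, Finset.sum_apply, sprod, starC]
      refine Finset.sum_congr rfl fun i _ => ?_
      rw [hstar (U i)]
    have h2 : z s = ∑ i, ((M⁻¹ *ᵥ ((fun k => (starRingEnd ℂ) (w i k)) * w i)) s) := by
      rw [hz, hv, ← Matrix.mulVecLin_apply, map_sum]
      simp [Matrix.mulVecLin_apply]
    rw [h1, h2, Complex.ofReal_sum]
    refine Finset.sum_congr rfl fun i _ => ?_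
    exact Complex.conj_eq_iff_re.mp
      (inv_mulVec_real M hM f hfb hf _ (hxcond i) s)
  have hcvz : cvec (dotM M U U) = z := funext fun s => hdot s
  have hMz : M *ᵥ cvec (dotM M U U) = v := by rw [hcvz, hz, hcancel']
  have hvval : ∀ s, v s = ((∑ i, Complex.normSq (w i s) : ℝ) : ℂ) := by
    intro s
    simp only [hv, Finset.sum_apply, Pi.mul_apply, Complex.ofReal_sum]
    exact Finset.sum_congr rfl fun i _ => (Complex.normSq_eq_conj_mul_self).symm
  constructor
  · intro s
    rw [hMz, hvval s]
    refine ⟨by simp, ?_⟩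
    simp only [Complex.ofReal_re]
    exact Finset.sum_nonneg fun i _ => Complex.normSq_nonneg _
  · constructor
    · intro h0
      have hv0 : v = 0 := by
        rw [← hMz, h0]
        funext t
        simp [cvec, Matrix.mulVec, dotProduct]
      funext i s
      have hsum : ∑ j, Complex.normSq (w j s) = 0 := by
        have h := congrFun hv0 s
        rw [hvval s, Pi.zero_apply] at h
        exact_mod_cast h
      have hws : ∀ t, w i t = 0 := by
        intro t
        have hsumt : ∑ j, Complex.normSq (w j t) = 0 := by
          have h := congrFun hv0 t
          rw [hvval t, Pi.zero_apply] at h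
          exact_mod_cast h
        have := (Finset.sum_eq_zero_iff_of_nonneg
          (fun j _ => Complex.normSq_nonneg (w j t))).mp hsumt i (Finset.mem_univ i)
        exact Complex.normSq_eq_zero.mp this
      have hwi0 : w i = 0 := funext hws
      have hU0 : cvec (U i) = 0 := by
        rw [← hcancel (cvec (U i))]
        change M⁻¹ *ᵥ (w i) = 0
        rw [hwi0, Matrix.mulVec_zero]
      have := congrFun hU0 s
      rw [Pi.zero_apply] at this
      have h2 : (U i s : ℂ) = 0 := this
      exact_mod_cast h2
    · intro h0
      subst h0
      have hw0 : ∀ i : Fin m, w i = 0 := by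
        intro i
        funext t
        simp [hw, cvec, Matrix.mulVec, dotProduct]
      have hv0 : v = 0 := by
        rw [hv]
        refine Finset.sum_eq_zero fun i _ => ?_
        rw [hw0 i]
        simp
      funext s
      have h := hdot s
      rw [hz, hv0, Matrix.mulVec_zero, Pi.zero_apply] at h
      rw [Pi.zero_apply]
      exact_mod_cast h
end
end

section
/- Let M ∈ ℂ^{n×n} with M = DW where D is an invertible real diagonal matrix and W is unitary, and suppose M satisfies the conjugate-row condition. Then for all a, x, y ∈ ℝⁿ, ⟨a ★_M x, y⟩ = ⟨x, a* ★_M y⟩, where ⟨u, v⟩ = uᵀv is the real dot product and a* := M⁻¹·conj(Ma). -/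
open Matrix

noncomputable section

/-- if `M = D W` with `D` an invertible real diagonal matrix and `W`
unitary, then `⟨a ★_M x, y⟩ = ⟨x, a* ★_M y⟩` for the real dot product. -/
theorem stmt10 {n : ℕ} (M : Matrix (Fin n) (Fin n) ℂ)
    (d : Fin n → ℝ) (hd : ∀ i, d i ≠ 0)
    (W : Matrix (Fin n) (Fin n) ℂ) (hW : W ∈ Matrix.unitaryGroup (Fin n) ℂ)
    (hMDW : M = Matrix.diagonal (fun i => (d i : ℂ)) * W)
    (hcr : ConjRows M) :
    ∀ a x y : Fin n → ℝ,
      ∑ i, sprod M a x i * y i = ∑ i, x i * sprod M (astarR M a) y i := by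
  classical
  -- unitarity
  have hW1 : W * star W = 1 := (Matrix.mem_unitaryGroup_iff).1 hW
  have hW2 : star W * W = 1 := (Matrix.mem_unitaryGroup_iff').1 hW
  -- invertibility of M
  have hdet : IsUnit M.det := by
    rw [hMDW, Matrix.det_mul]
    refine IsUnit.mul ?_ (Matrix.isUnit_det_of_left_inverse hW2)
    rw [Matrix.det_diagonal]
    exact isUnit_iff_ne_zero.2 (Finset.prod_ne_zero_iff.2 fun i _ =>
      Complex.ofReal_ne_zero.2 (hd i))
  have hMinv : M * M⁻¹ = 1 := Matrix.mul_nonsing_inv M hdet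
  have hMinv' : M⁻¹ * M = 1 := Matrix.nonsing_inv_mul M hdet
  -- entries of M
  have hMjk : ∀ j k, M j k = (d j : ℂ) * W j k := by
    intro j k; rw [hMDW, Matrix.diagonal_mul]
  -- rows of invertible matrix are distinct
  have hrowinj : ∀ j l, (∀ k, M j k = M l k) → j = l := by
    intro j l hjl
    by_contra hne
    have h1 : (M * M⁻¹) j j = 1 := by rw [hMinv]; simp
    have h0 : (M * M⁻¹) l j = 0 := by rw [hMinv]; exact Matrix.one_apply_ne (Ne.symm hne)
    rw [Matrix.mul_apply] at h1 h0
    have : (1 : ℂ) = 0 := by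
      rw [← h1, ← h0]
      exact Finset.sum_congr rfl fun k _ => by rw [hjl k]
    exact one_ne_zero this
  -- the row-conjugation map
  set σ : Fin n → Fin n := fun j =>
    if h : ∃! l, l ≠ j ∧ ∀ k, M l k = (starRingEnd ℂ) (M j k) then h.choose else j with hσdef
  have hσ : ∀ j k, M (σ j) k = (starRingEnd ℂ) (M j k) := by
    intro j k
    by_cases h : ∃! l, l ≠ j ∧ ∀ k, M l k = (starRingEnd ℂ) (M j k)
    · rw [hσdef]; simp only [dif_pos h]; exact h.choose_spec.1.2 k
    · rw [hσdef]; simp only [dif_neg h]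
      rcases hcr j with hre | hl
      · exact (Complex.conj_eq_iff_im.2 (hre k)).symm
      · exact absurd hl h
  have hσσ : ∀ j, σ (σ j) = j := by
    intro j
    by_cases h : ∃! l, l ≠ j ∧ ∀ k, M l k = (starRingEnd ℂ) (M j k)
    · have hj : σ j = h.choose := by rw [hσdef]; simp only [dif_pos h]
      obtain ⟨hlne, hlc⟩ := h.choose_spec.1
      have hjw : (j ≠ h.choose ∧ ∀ k, M j k = (starRingEnd ℂ) (M h.choose k)) :=
        ⟨Ne.symm hlne, fun k => by rw [hlc k, RingHomCompTriple.comp_apply, RingHom.id_apply]⟩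
      rcases hcr h.choose with hre | hEx
      · exfalso
        have heq : ∀ k, M j k = M h.choose k := fun k => by
          rw [hjw.2 k, Complex.conj_eq_iff_im.2 (hre k)]
        exact hlne (hrowinj j h.choose heq).symm
      · have hσl : σ h.choose = hEx.choose := by rw [hσdef]; simp only [dif_pos hEx]
        rw [hj, hσl, ← hEx.choose_spec.2 j hjw]
    · rw [hσdef]; simp only [dif_neg h]
  let e : Equiv.Perm (Fin n) := Function.Involutive.toPerm σ hσσ
  -- conjugation of M *ᵥ (real vector)
  have hσconj : ∀ (v : Fin n → ℝ) j,
      (M *ᵥ cvec v) (σ j) = (starRingEnd ℂ) ((M *ᵥ cvec v) j) := by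
    intro v j
    simp only [Matrix.mulVec, dotProduct, cvec, map_sum, _root_.map_mul,
      Complex.conj_ofReal]
    exact Finset.sum_congr rfl fun k _ => by rw [hσ j k]
  -- d² is σ-invariant
  have hrownorm : ∀ j, ∑ k, Complex.normSq (M j k) = (d j) ^ 2 := by
    intro j
    have hWrow : (∑ k, Complex.normSq (W j k) : ℂ) = 1 := by
      have := congrFun (congrFun hW1 j) j
      rw [Matrix.mul_apply, Matrix.one_apply_eq] at this
      rw [← this]
      exact Finset.sum_congr rfl fun k _ => by
        rw [Matrix.star_apply, ← Complex.mul_conj]; rfl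
    have hWrow' : ∑ k, Complex.normSq (W j k) = 1 := by exact_mod_cast hWrow
    calc ∑ k, Complex.normSq (M j k) = ∑ k, (d j)^2 * Complex.normSq (W j k) := by
          refine Finset.sum_congr rfl fun k _ => ?_
          rw [hMjk, Complex.normSq_mul, Complex.normSq_ofReal]; ring
      _ = (d j)^2 := by rw [← Finset.mul_sum, hWrow', mul_one]
  have hd2 : ∀ j, (d (σ j)) ^ 2 = (d j) ^ 2 := by
    intro j
    rw [← hrownorm, ← hrownorm]
    exact Finset.sum_congr rfl fun k _ => by rw [hσ j k, Complex.normSq_conj]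
  have hd2C : ∀ j, ((d (σ j) : ℂ)) ^ 2 = (d j : ℂ) ^ 2 := fun j => by
    exact_mod_cast congrArg (Complex.ofReal) (hd2 j)
  -- weighted column orthogonality
  have horth : ∀ k i, ∑ j, ((d j : ℂ) ^ 2)⁻¹ * (M j k * (starRingEnd ℂ) (M j i))
      = if k = i then 1 else 0 := by
    intro k i
    have h1 : ∀ j, ((d j : ℂ) ^ 2)⁻¹ * (M j k * (starRingEnd ℂ) (M j i))
        = (starRingEnd ℂ) ((starRingEnd ℂ) (W j k) * W j i) := by
      intro j
      rw [hMjk, hMjk]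
      have hdj : (d j : ℂ) ≠ 0 := Complex.ofReal_ne_zero.2 (hd j)
      simp only [_root_.map_mul, Complex.conj_ofReal, Complex.conj_conj]
      field_simp
    rw [Finset.sum_congr rfl fun j _ => h1 j, ← map_sum]
    have h2 : ∑ j, (starRingEnd ℂ) (W j k) * W j i = (star W * W) k i := by
      simp only [Matrix.mul_apply, Matrix.star_apply]
      rfl
    rw [h2, hW2]
    by_cases hki : k = i <;> simp [Matrix.one_apply, hki]
  -- formula for vecMul (cvec y) M⁻¹
  have hz : ∀ (v : Fin n → ℝ) j, ((cvec v) ᵥ* M⁻¹) j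
      = ((d j : ℂ) ^ 2)⁻¹ * (M *ᵥ cvec v) (σ j) := by
    intro v
    set w : Fin n → ℂ := fun j => ((d j : ℂ) ^ 2)⁻¹ * (M *ᵥ cvec v) (σ j) with hw
    have hwM : w ᵥ* M = cvec v := by
      funext i
      simp only [Matrix.vecMul, dotProduct]
      show ∑ j, w j * M j i = cvec v i
      calc ∑ j, w j * M j i
          = ∑ j, w (σ j) * M (σ j) i := (Equiv.sum_comp e (fun j => w j * M j i)).symm
        _ = ∑ j, ((d j : ℂ)^2)⁻¹ * (M *ᵥ cvec v) j * (starRingEnd ℂ) (M j i) := by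
            refine Finset.sum_congr rfl fun j _ => ?_
            rw [hw]
            simp only
            rw [hσσ j, hd2C j, hσ j i]
        _ = ∑ j, ∑ k, (cvec v k) * (((d j : ℂ)^2)⁻¹ * (M j k * (starRingEnd ℂ) (M j i))) := by
            refine Finset.sum_congr rfl fun j _ => ?_
            simp only [Matrix.mulVec, dotProduct, Finset.mul_sum, Finset.sum_mul]
            exact Finset.sum_congr rfl fun k _ => by ring
        _ = ∑ k, (cvec v k) * (if k = i then 1 else 0) := by
            rw [Finset.sum_comm]
            refine Finset.sum_congr rfl fun k _ => ?_
            rw [← Finset.mul_sum, horth]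
        _ = cvec v i := by simp
    have hfin : (cvec v) ᵥ* M⁻¹ = w := by
      calc (cvec v) ᵥ* M⁻¹ = (w ᵥ* M) ᵥ* M⁻¹ := by rw [hwM]
        _ = w ᵥ* (M * M⁻¹) := by rw [Matrix.vecMul_vecMul]
        _ = w := by rw [hMinv, Matrix.vecMul_one]
    intro j
    rw [hfin]
  
  -- injectivity of mulVec
  have hinj : ∀ p q : Fin n → ℂ, M *ᵥ p = M *ᵥ q → p = q := by
    intro p q h
    have h1 := congrArg (fun t => M⁻¹ *ᵥ t) h
    simpa [Matrix.mulVec_mulVec, hMinv', Matrix.one_mulVec] using h1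
  intro a x y
  set u : Fin n → ℂ := fun k => (starRingEnd ℂ) ((M *ᵥ cvec a) k) with hu
  set ac : Fin n → ℂ := M⁻¹ *ᵥ u with hac
  have hMac : M *ᵥ ac = u := by
    rw [hac, Matrix.mulVec_mulVec, hMinv, Matrix.one_mulVec]
  have huσ : ∀ j, u (σ j) = (M *ᵥ cvec a) j := by
    intro j
    rw [hu]
    simp only
    rw [hσconj a j, Complex.conj_conj]
  have hacreal : ∀ i, (starRingEnd ℂ) (ac i) = ac i := by
    have h2 : (fun i => (starRingEnd ℂ) (ac i)) = ac := by
      apply hinj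
      rw [hMac]
      funext j
      have h3 : (starRingEnd ℂ) ((M *ᵥ fun i => (starRingEnd ℂ) (ac i)) j)
          = (M *ᵥ ac) (σ j) := by
        simp only [Matrix.mulVec, dotProduct, map_sum]
        refine Finset.sum_congr rfl fun k _ => ?_
        rw [_root_.map_mul, Complex.conj_conj, hσ j k]
      have h4 := congrArg (starRingEnd ℂ) h3
      rw [Complex.conj_conj] at h4
      rw [h4, hMac, huσ j, hu]
    exact fun i => congrFun h2 i
  have hcva : cvec (astarR M a) = ac := by
    funext i
    simp only [cvec, astarR]
    rw [← hu, ← hac]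
    exact Complex.conj_eq_iff_re.1 (hacreal i)
  have key : ∀ (q : Fin n → ℝ) (g : Fin n → ℂ),
      ∑ i, (M⁻¹ *ᵥ g) i * ((q i : ℝ) : ℂ) = ∑ j, ((cvec q) ᵥ* M⁻¹) j * g j := by
    intro q g
    simp only [Matrix.mulVec, Matrix.vecMul, dotProduct, cvec,
      Finset.sum_mul, Finset.mul_sum]
    rw [Finset.sum_comm]
    exact Finset.sum_congr rfl fun j _ => Finset.sum_congr rfl fun i _ => by ring
  have hstar2 : starC M (astarR M a) y = M⁻¹ *ᵥ (u * (M *ᵥ cvec y)) := by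
    rw [starC, hcva, hMac]
  have hmain : ∑ i, starC M a x i * ((y i : ℝ) : ℂ)
      = ∑ i, ((x i : ℝ) : ℂ) * starC M (astarR M a) y i := by
    calc ∑ i, starC M a x i * ((y i : ℝ) : ℂ)
        = ∑ j, ((d j : ℂ)^2)⁻¹ * (M *ᵥ cvec y) (σ j)
            * ((M *ᵥ cvec a) j * (M *ᵥ cvec x) j) := by
          rw [starC, key y]
          refine Finset.sum_congr rfl fun j _ => ?_
          rw [hz y j, Pi.mul_apply]
      _ = ∑ j, ((d j : ℂ)^2)⁻¹ * (M *ᵥ cvec x) (σ j) * (u j * (M *ᵥ cvec y) j) := by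
          rw [← Equiv.sum_comp e
            (fun j => ((d j : ℂ)^2)⁻¹ * (M *ᵥ cvec x) (σ j) * (u j * (M *ᵥ cvec y) j))]
          refine Finset.sum_congr rfl fun j _ => ?_
          have he : e j = σ j := rfl
          rw [he, hσσ j, hd2C j, huσ j]
          ring
      _ = ∑ i, ((x i : ℝ) : ℂ) * starC M (astarR M a) y i := by
          rw [hstar2]
          rw [show ∑ i, ((x i : ℝ) : ℂ) * (M⁻¹ *ᵥ (u * (M *ᵥ cvec y))) i
              = ∑ i, (M⁻¹ *ᵥ (u * (M *ᵥ cvec y))) i * ((x i : ℝ) : ℂ) from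
            Finset.sum_congr rfl fun i _ => mul_comm _ _, key x]
          refine Finset.sum_congr rfl fun j _ => ?_
          rw [hz x j, Pi.mul_apply]
  have hre1 : ∀ i, sprod M a x i * y i = (starC M a x i * ((y i : ℝ) : ℂ)).re := fun i => by
    simp [sprod, Complex.mul_re]
  have hre2 : ∀ i, x i * sprod M (astarR M a) y i
      = (((x i : ℝ) : ℂ) * starC M (astarR M a) y i).re := fun i => by
    simp [sprod, Complex.mul_re]
  calc ∑ i, sprod M a x i * y i = (∑ i, starC M a x i * ((y i : ℝ) : ℂ)).re := by
        rw [Complex.re_sum]; exact Finset.sum_congr rfl fun i _ => hre1 i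
    _ = (∑ i, ((x i : ℝ) : ℂ) * starC M (astarR M a) y i).re := by rw [hmain]
    _ = ∑ i, x i * sprod M (astarR M a) y i := by
        rw [Complex.re_sum]; exact (Finset.sum_congr rfl fun i _ => hre2 i).symm
end
end

section
/- Let M ∈ ℂ^{n×n} with M = DW where D is an invertible real diagonal matrix and W is unitary, and suppose M satisfies the conjugate-row condition. Let A : Fin m → Fin p → ℝⁿ be a third-order tensor viewed as a matrix of tubes, and let X : Fin p → ℝⁿ and Y : Fin m → ℝⁿ. Define (A ★_M X)ᵢ := Σ_{j=1}^{p} A_{ij} ★_M X_j and (A^H ★_M Y)_j := Σ_{i=1}^{m} (A_{ij})* ★_M Y_i, where a* := M⁻¹·conj(Ma). Then Σ_{i=1}^{m} ⟨(A ★_M X)ᵢ, Yᵢ⟩ = Σ_{j=1}^{p} ⟨X_j, (A^H ★_M Y)_j⟩, where ⟨u, v⟩ = uᵀv is the real dot product on ℝⁿ. -/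
open Matrix

noncomputable section

lemma conjrows_sigma {n : ℕ} (M : Matrix (Fin n) (Fin n) ℂ) (hcr : ConjRows M) :
    ∃ σ : Fin n → Fin n, (∀ j, σ (σ j) = j) ∧
      (∀ j k, M (σ j) k = (starRingEnd ℂ) (M j k)) := by
  classical
  refine ⟨fun j => if h : ∀ k, (M j k).im = 0 then j else
      ((hcr j).resolve_left h).choose, ?_, ?_⟩
  case refine_2 =>
    intro j k
    by_cases h : ∀ k, (M j k).im = 0
    · simp only [dif_pos h]
      exact (Complex.conj_eq_iff_im.mpr (h k)).symm
    · simp only [dif_neg h]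
      exact ((hcr j).resolve_left h).choose_spec.1.2 k
  intro j
  by_cases h : ∀ k, (M j k).im = 0
  · simp only [dif_pos h]
  · simp only [dif_neg h]
    set l := ((hcr j).resolve_left h).choose with hl
    have hls := ((hcr j).resolve_left h).choose_spec
    have hlconj : ∀ k, M l k = (starRingEnd ℂ) (M j k) := hls.1.2
    have hlnr : ¬ ∀ k, (M l k).im = 0 := by
      intro hr
      apply h
      intro k
      have := hr k
      rw [hlconj k] at this
      simpa using this
    rw [dif_neg hlnr]
    have hspec := (hcr l).resolve_left hlnr
    have h1 : hspec.choose ≠ l ∧ ∀ k, M hspec.choose k = (starRingEnd ℂ) (M l k) :=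
      hspec.choose_spec.1
    have h2 : j ≠ l ∧ ∀ k, M j k = (starRingEnd ℂ) (M l k) := by
      constructor
      · intro hjl
        apply h
        intro k
        have := hlconj k
        rw [← hjl] at this
        have him := congrArg Complex.im this
        simp at him
        linarith [him]
      · intro k
        rw [hlconj k]
        simp
    exact (hspec.choose_spec.2 j h2).symm


lemma astar_real {n : ℕ} (M : Matrix (Fin n) (Fin n) ℂ) (hcr : ConjRows M)
    (hdet : IsUnit M.det) (a : Fin n → ℝ) :
    ∀ i, ((M⁻¹ *ᵥ fun k => (starRingEnd ℂ) ((M *ᵥ cvec a) k)) i).im = 0 := by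
  obtain ⟨σ, hσ2, hσc⟩ := conjrows_sigma M hcr
  set v : Fin n → ℂ := M⁻¹ *ᵥ fun k => (starRingEnd ℂ) ((M *ᵥ cvec a) k) with hv
  have hMv : M *ᵥ v = fun k => (starRingEnd ℂ) ((M *ᵥ cvec a) k) := by
    rw [hv, Matrix.mulVec_mulVec, Matrix.mul_nonsing_inv M hdet, Matrix.one_mulVec]
  -- conj of each entry of M *ᵥ cvec a : (M *ᵥ v) j = conj ((M *ᵥ cvec a) j)
  have hMvs : M *ᵥ (fun k => (starRingEnd ℂ) (v k)) = M *ᵥ v := by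
    funext j
    have e1 : (M *ᵥ fun k => (starRingEnd ℂ) (v k)) j
        = (starRingEnd ℂ) ((M *ᵥ v) (σ j)) := by
      simp only [Matrix.mulVec, dotProduct, map_sum, _root_.map_mul]
      congr 1
      funext k
      rw [hσc j k]
      simp [mul_comm]
    rw [e1, hMv]
    have e2 : ((M *ᵥ cvec a) (σ j)) = (starRingEnd ℂ) ((M *ᵥ cvec a) j) := by
      simp only [Matrix.mulVec, dotProduct, map_sum, _root_.map_mul]
      congr 1
      funext k
      rw [hσc j k, cvec]
      simp
    simp only [e2]
    simp
  have hveq : (fun k => (starRingEnd ℂ) (v k)) = v := by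
    have := congrArg (fun w => M⁻¹ *ᵥ w) hMvs
    simpa [Matrix.mulVec_mulVec, Matrix.nonsing_inv_mul M hdet, Matrix.one_mulVec] using this
  intro i
  have := congrFun hveq i
  have him := congrArg Complex.im this
  simp at him
  linarith

lemma key {n : ℕ} (M : Matrix (Fin n) (Fin n) ℂ)
    (d : Fin n → ℝ) (hd : ∀ i, d i ≠ 0)
    (W : Matrix (Fin n) (Fin n) ℂ) (hW : W ∈ Matrix.unitaryGroup (Fin n) ℂ)
    (hMDW : M = Matrix.diagonal (fun i => (d i : ℂ)) * W)
    (hcr : ConjRows M) (a b c : Fin n → ℝ) :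
    ∑ s, sprod M a b s * c s = ∑ s, b s * sprod M (astarR M a) c s := by
  classical
  -- determinant is a unit
  have hdetW : IsUnit W.det := by
    have h1 : W * star W = 1 := (Matrix.mem_unitaryGroup_iff).mp hW
    have := congrArg Matrix.det h1
    rw [Matrix.det_mul] at this
    simp at this
    exact isUnit_iff_exists_inv.mpr ⟨_, this⟩
  have hdet : IsUnit M.det := by
    rw [hMDW, Matrix.det_mul, Matrix.det_diagonal]
    refine IsUnit.mul ?_ hdetW
    simp only [isUnit_iff_ne_zero]
    exact Finset.prod_ne_zero_iff.mpr fun i _ => Complex.ofReal_ne_zero.mpr (hd i)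
  -- inverse formula
  have hMinv : M⁻¹ = star W * Matrix.diagonal (fun i => ((d i : ℂ))⁻¹) := by
    apply Matrix.inv_eq_right_inv
    rw [hMDW, Matrix.mul_assoc, ← Matrix.mul_assoc W]
    have h1 : W * star W = 1 := (Matrix.mem_unitaryGroup_iff).mp hW
    rw [h1, Matrix.one_mul, Matrix.diagonal_mul_diagonal]
    have : (fun i => (d i : ℂ) * ((d i : ℂ))⁻¹) = fun _ => (1 : ℂ) :=
      funext fun i => mul_inv_cancel₀ (Complex.ofReal_ne_zero.mpr (hd i))
    rw [this, Matrix.diagonal_one]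
  -- the transpose-of-inverse vector identity
  have hT : ∀ (c : Fin n → ℝ) (k : Fin n),
      (∑ s, M⁻¹ s k * (c s : ℂ)) =
      ((d k : ℂ))⁻¹ * ((d k : ℂ))⁻¹ * (starRingEnd ℂ) ((M *ᵥ cvec c) k) := by
    intro c k
    have hMik : ∀ s, M⁻¹ s k = (starRingEnd ℂ) (W k s) * ((d k : ℂ))⁻¹ := by
      intro s
      rw [hMinv, Matrix.mul_diagonal]
      congr 1
    have hMk : ∀ s, M k s = (d k : ℂ) * W k s := by
      intro s; rw [hMDW, Matrix.diagonal_mul]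
    simp only [Matrix.mulVec, dotProduct, cvec, map_sum, _root_.map_mul, Finset.mul_sum]
    refine Finset.sum_congr rfl fun s _ => ?_
    rw [hMik s, hMk s]
    simp only [_root_.map_mul, Complex.conj_ofReal]
    have hdk : ((d k : ℂ)) ≠ 0 := Complex.ofReal_ne_zero.mpr (hd k)
    field_simp
  -- astar is real: M *ᵥ cvec (astarR M a) = conj ∘ (M *ᵥ cvec a)
  have hastar : M *ᵥ cvec (astarR M a) = fun k => (starRingEnd ℂ) ((M *ᵥ cvec a) k) := by
    have hre := astar_real M hcr hdet a
    have hc : cvec (astarR M a) = M⁻¹ *ᵥ fun k => (starRingEnd ℂ) ((M *ᵥ cvec a) k) := by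
      funext i
      apply Complex.ext
      · simp [cvec, astarR]
      · simp [cvec, hre i]
    rw [hc, Matrix.mulVec_mulVec, Matrix.mul_nonsing_inv M hdet, Matrix.one_mulVec]
  -- swap sums helper
  have hswap : ∀ (w : Fin n → ℂ) (c : Fin n → ℝ),
      ∑ s, (M⁻¹ *ᵥ w) s * (c s : ℂ) = ∑ k, w k * (∑ s, M⁻¹ s k * (c s : ℂ)) := by
    intro w c
    simp only [Matrix.mulVec, dotProduct, Finset.sum_mul, Finset.mul_sum]
    rw [Finset.sum_comm]
    exact Finset.sum_congr rfl fun k _ => Finset.sum_congr rfl fun s _ => by ring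
  have hre_mul : ∀ (z : ℂ) (r : ℝ), (z * (r : ℂ)).re = z.re * r := by
    intro z r; simp [Complex.mul_re]
  have L : ∑ s, sprod M a b s * c s =
      (∑ k, (M *ᵥ cvec a) k * (M *ᵥ cvec b) k *
        (((d k : ℂ))⁻¹ * ((d k : ℂ))⁻¹ * (starRingEnd ℂ) ((M *ᵥ cvec c) k))).re := by
    have e1 : ∑ s, sprod M a b s * c s
        = (∑ s, (M⁻¹ *ᵥ ((M *ᵥ cvec a) * (M *ᵥ cvec b))) s * ((c s : ℝ) : ℂ)).re := by
      rw [Complex.re_sum]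
      exact Finset.sum_congr rfl fun s _ => (hre_mul _ _).symm
    rw [e1, hswap]
    congr 1
    refine Finset.sum_congr rfl fun k _ => ?_
    rw [hT c k]
    simp [Pi.mul_apply]
  have R : ∑ s, b s * sprod M (astarR M a) c s =
      (∑ k, (starRingEnd ℂ) ((M *ᵥ cvec a) k) * (M *ᵥ cvec c) k *
        (((d k : ℂ))⁻¹ * ((d k : ℂ))⁻¹ * (starRingEnd ℂ) ((M *ᵥ cvec b) k))).re := by
    have e1 : ∑ s, b s * sprod M (astarR M a) c s
        = (∑ s, (M⁻¹ *ᵥ ((M *ᵥ cvec (astarR M a)) * (M *ᵥ cvec c))) s * ((b s : ℝ) : ℂ)).re := by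
      rw [Complex.re_sum]
      refine Finset.sum_congr rfl fun s _ => ?_
      rw [hre_mul, mul_comm]
      rfl
    rw [e1, hswap]
    congr 1
    refine Finset.sum_congr rfl fun k _ => ?_
    rw [hT b k]
    simp only [Pi.mul_apply, hastar]
  rw [L, R]
  have hconjsum : (∑ k, (starRingEnd ℂ) ((M *ᵥ cvec a) k) * (M *ᵥ cvec c) k *
        (((d k : ℂ))⁻¹ * ((d k : ℂ))⁻¹ * (starRingEnd ℂ) ((M *ᵥ cvec b) k)))
      = (starRingEnd ℂ) (∑ k, (M *ᵥ cvec a) k * (M *ᵥ cvec b) k *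
        (((d k : ℂ))⁻¹ * ((d k : ℂ))⁻¹ * (starRingEnd ℂ) ((M *ᵥ cvec c) k))) := by
    rw [map_sum]
    refine Finset.sum_congr rfl fun k _ => ?_
    simp only [_root_.map_mul, map_inv₀, Complex.conj_ofReal, Complex.conj_conj]
    ring
  rw [hconjsum, Complex.conj_re]

/-- for `M = D W` (`D` invertible real diagonal, `W` unitary), the
★_M-Hermitian transpose realizes the adjoint with respect to the real (Frobenius)
dot product: `⟨A ★_M X, Y⟩ = ⟨X, A^H ★_M Y⟩`. -/
theorem stmt11 {n m p : ℕ} (M : Matrix (Fin n) (Fin n) ℂ)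
    (d : Fin n → ℝ) (hd : ∀ i, d i ≠ 0)
    (W : Matrix (Fin n) (Fin n) ℂ) (hW : W ∈ Matrix.unitaryGroup (Fin n) ℂ)
    (hMDW : M = Matrix.diagonal (fun i => (d i : ℂ)) * W)
    (hcr : ConjRows M)
    (A : Fin m → Fin p → Fin n → ℝ) (X : Fin p → Fin n → ℝ) (Y : Fin m → Fin n → ℝ) :
    ∑ i, ∑ s, (∑ j, sprod M (A i j) (X j)) s * Y i s =
    ∑ j, ∑ s, X j s * (∑ i, sprod M (astarR M (A i j)) (Y i)) s := by
  have hkey := key M d hd W hW hMDW hcr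
  have e1 : ∀ i, ∑ s, (∑ j, sprod M (A i j) (X j)) s * Y i s
      = ∑ j, ∑ s, sprod M (A i j) (X j) s * Y i s := by
    intro i
    rw [Finset.sum_comm]
    refine Finset.sum_congr rfl fun s _ => ?_
    simp [Finset.sum_apply, Finset.sum_mul]
  have e2 : ∀ j, ∑ s, X j s * (∑ i, sprod M (astarR M (A i j)) (Y i)) s
      = ∑ i, ∑ s, X j s * sprod M (astarR M (A i j)) (Y i) s := by
    intro j
    rw [Finset.sum_comm]
    refine Finset.sum_congr rfl fun s _ => ?_
    simp [Finset.sum_apply, Finset.mul_sum]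
  simp only [e1, e2]
  rw [Finset.sum_comm]
  exact Finset.sum_congr rfl fun j _ => Finset.sum_congr rfl fun i _ =>
    hkey (A i j) (X j) (Y i)
end
end

section
/- Let M = cW ∈ ℂ^{n×n} where W is unitary, c is a nonzero scalar, and M satisfies the conjugate-row condition. Let U : Fin m → Fin m → ℝⁿ be a ★_M-unitary tensor, i.e., U^H ★_M U = U ★_M U^H = I, where (U^H)_{ij} := (U_{ji})* with a* := M⁻¹·conj(Ma), and I is the tensor with the unit tube e_M = M⁻¹𝟙 on the diagonal and zero tubes off the diagonal. Then for every tensor B : Fin m → Fin p → ℝⁿ, the Frobenius norm is preserved: Σ_{i,j,s} ((U ★_M B)_{ij})_s² = Σ_{i,j,s} (B_{ij})_s². -/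
open Matrix

noncomputable section

/-- ★_M-product of two tensors viewed as matrices of tubes. -/
def tmulT {m p l n : ℕ} (M : Matrix (Fin n) (Fin n) ℂ)
    (A : Fin m → Fin p → Fin n → ℝ) (B : Fin p → Fin l → Fin n → ℝ) :
    Fin m → Fin l → Fin n → ℝ :=
  fun i j => ∑ k, sprod M (A i k) (B k j)

/-- ★_M-Hermitian transpose of a tensor. -/
def htr {m p n : ℕ} (M : Matrix (Fin n) (Fin n) ℂ)
    (A : Fin m → Fin p → Fin n → ℝ) : Fin p → Fin m → Fin n → ℝ :=
  fun j i => astarR M (A i j)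

/-- The identity tensor: the unit tube `e_M` on the diagonal, zero tubes off it. -/
def idT {m n : ℕ} (M : Matrix (Fin n) (Fin n) ℂ) : Fin m → Fin m → Fin n → ℝ :=
  fun i j => if i = j then eM M else 0

/-! ### Auxiliary lemmas -/

/-- Slice of a tensor in the transform domain. -/
def tslice {q r n : ℕ} (M : Matrix (Fin n) (Fin n) ℂ)
    (A : Fin q → Fin r → Fin n → ℝ) (s : Fin n) : Matrix (Fin q) (Fin r) ℂ :=
  fun i j => (M *ᵥ cvec (A i j)) s

lemma aux_sigma {n : ℕ} {M : Matrix (Fin n) (Fin n) ℂ} (hcr : ConjRows M) :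
    ∃ σ : Fin n → Fin n, ∀ j k, M j k = (starRingEnd ℂ) (M (σ j) k) := by
  have h : ∀ j, ∃ l, ∀ k, M j k = (starRingEnd ℂ) (M l k) := by
    intro j
    rcases hcr j with h1 | ⟨l, ⟨_, hl⟩, _⟩
    · exact ⟨j, fun k => (Complex.conj_eq_iff_im.2 (h1 k)).symm⟩
    · exact ⟨l, fun k => by rw [hl k, Complex.conj_conj]⟩
  choose σ hσ using h
  exact ⟨σ, hσ⟩

lemma aux_conj_mulVec {n : ℕ} {M : Matrix (Fin n) (Fin n) ℂ} {σ : Fin n → Fin n}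
    (hσ : ∀ j k, M j k = (starRingEnd ℂ) (M (σ j) k)) (a : Fin n → ℝ) (j : Fin n) :
    (M *ᵥ cvec a) (σ j) = (starRingEnd ℂ) ((M *ᵥ cvec a) j) := by
  show (∑ k, M (σ j) k * cvec a k) = (starRingEnd ℂ) (∑ k, M j k * cvec a k)
  rw [map_sum]
  refine Finset.sum_congr rfl fun k _ => ?_
  rw [_root_.map_mul, hσ j k, Complex.conj_conj]
  congr 1
  exact (Complex.conj_ofReal _).symm

lemma aux_real {n : ℕ} {M : Matrix (Fin n) (Fin n) ℂ}
    (hMM : M * M⁻¹ = 1) (hMM' : M⁻¹ * M = 1)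
    {σ : Fin n → Fin n} (hσ : ∀ j k, M j k = (starRingEnd ℂ) (M (σ j) k))
    (v : Fin n → ℂ) (hv : ∀ j, v (σ j) = (starRingEnd ℂ) (v j)) (i : Fin n) :
    ((M⁻¹ *ᵥ v) i).im = 0 := by
  set w : Fin n → ℂ := M⁻¹ *ᵥ v with hw
  have hMw : M *ᵥ w = v := by rw [hw, mulVec_mulVec, hMM, one_mulVec]
  have key : M *ᵥ (fun k => (starRingEnd ℂ) (w k)) = v := by
    funext j
    have : (M *ᵥ fun k => (starRingEnd ℂ) (w k)) j
        = (starRingEnd ℂ) ((M *ᵥ w) (σ j)) := by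
      show (∑ k, M j k * (starRingEnd ℂ) (w k)) = (starRingEnd ℂ) (∑ k, M (σ j) k * w k)
      rw [map_sum]
      refine Finset.sum_congr rfl fun k _ => ?_
      rw [_root_.map_mul, ← hσ j k]
    rw [this, hMw, hv j, Complex.conj_conj]
  have : (fun k => (starRingEnd ℂ) (w k)) = w := by
    have h2 : M⁻¹ *ᵥ (M *ᵥ fun k => (starRingEnd ℂ) (w k)) = M⁻¹ *ᵥ v := by rw [key]
    rwa [mulVec_mulVec, hMM', one_mulVec, ← hw] at h2
  have h3 : (starRingEnd ℂ) (w i) = w i := congrFun this i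
  have := Complex.conj_eq_iff_im.mp h3
  exact this

lemma aux_cvec_re {n : ℕ} (v : Fin n → ℂ) (h : ∀ i, (v i).im = 0) :
    cvec (fun i => (v i).re) = v := by
  funext i
  exact Complex.ext rfl (by simp [cvec, h i])

lemma aux_sprod {n : ℕ} {M : Matrix (Fin n) (Fin n) ℂ}
    (hMM : M * M⁻¹ = 1) (hMM' : M⁻¹ * M = 1)
    {σ : Fin n → Fin n} (hσ : ∀ j k, M j k = (starRingEnd ℂ) (M (σ j) k))
    (a b : Fin n → ℝ) :
    M *ᵥ cvec (sprod M a b) = (M *ᵥ cvec a) * (M *ᵥ cvec b) := by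
  have hreal : ∀ i, (starC M a b i).im = 0 := by
    intro i
    refine aux_real hMM hMM' hσ _ (fun j => ?_) i
    show ((M *ᵥ cvec a) * (M *ᵥ cvec b)) (σ j) = _
    simp only [Pi.mul_apply, _root_.map_mul]
    rw [aux_conj_mulVec hσ a j, aux_conj_mulVec hσ b j]
  have : cvec (sprod M a b) = starC M a b := aux_cvec_re _ hreal
  rw [this, starC, mulVec_mulVec, hMM, one_mulVec]

lemma aux_astar {n : ℕ} {M : Matrix (Fin n) (Fin n) ℂ}
    (hMM : M * M⁻¹ = 1) (hMM' : M⁻¹ * M = 1)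
    {σ : Fin n → Fin n} (hσ : ∀ j k, M j k = (starRingEnd ℂ) (M (σ j) k))
    (a : Fin n → ℝ) :
    M *ᵥ cvec (astarR M a) = fun k => (starRingEnd ℂ) ((M *ᵥ cvec a) k) := by
  have hreal : ∀ i, ((M⁻¹ *ᵥ fun k => (starRingEnd ℂ) ((M *ᵥ cvec a) k)) i).im = 0 := by
    intro i
    refine aux_real hMM hMM' hσ _ (fun j => ?_) i
    show (starRingEnd ℂ) ((M *ᵥ cvec a) (σ j)) = (starRingEnd ℂ) ((starRingEnd ℂ) ((M *ᵥ cvec a) j))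
    rw [aux_conj_mulVec hσ a j]
  have : cvec (astarR M a) = M⁻¹ *ᵥ fun k => (starRingEnd ℂ) ((M *ᵥ cvec a) k) :=
    aux_cvec_re _ hreal
  rw [this, mulVec_mulVec, hMM, one_mulVec]

lemma aux_eM {n : ℕ} {M : Matrix (Fin n) (Fin n) ℂ}
    (hMM : M * M⁻¹ = 1) (hMM' : M⁻¹ * M = 1)
    {σ : Fin n → Fin n} (hσ : ∀ j k, M j k = (starRingEnd ℂ) (M (σ j) k)) :
    M *ᵥ cvec (eM M) = fun _ => (1 : ℂ) := by
  have hreal : ∀ i, ((M⁻¹ *ᵥ fun _ => (1 : ℂ)) i).im = 0 := by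
    intro i
    exact aux_real hMM hMM' hσ _ (fun j => by simp) i
  have : cvec (eM M) = M⁻¹ *ᵥ fun _ => (1 : ℂ) := aux_cvec_re _ hreal
  rw [this, mulVec_mulVec, hMM, one_mulVec]

lemma aux_cvec_zero {n : ℕ} (M : Matrix (Fin n) (Fin n) ℂ) :
    M *ᵥ cvec (0 : Fin n → ℝ) = 0 := by
  have : cvec (0 : Fin n → ℝ) = 0 := by funext i; simp [cvec]
  rw [this, mulVec_zero]

lemma aux_parseval {n : ℕ} {M W : Matrix (Fin n) (Fin n) ℂ} {c : ℂ}
    (hW : W ∈ Matrix.unitaryGroup (Fin n) ℂ) (hMcW : M = c • W) (x : Fin n → ℝ) :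
    ∑ s, Complex.normSq ((M *ᵥ cvec x) s) = Complex.normSq c * ∑ s, (x s) ^ 2 := by
  have hWW : Wᴴ * W = 1 := Matrix.mem_unitaryGroup_iff'.mp hW
  have h1 : ∀ s, (M *ᵥ cvec x) s = c * (W *ᵥ cvec x) s := by
    intro s; rw [hMcW]; simp [smul_mulVec]
  have key : (∑ s, (Complex.normSq ((W *ᵥ cvec x) s) : ℂ))
      = ∑ s, (Complex.normSq (cvec x s) : ℂ) := by
    have hdot : star (W *ᵥ cvec x) ⬝ᵥ (W *ᵥ cvec x) = star (cvec x) ⬝ᵥ cvec x := by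
      rw [star_mulVec, dotProduct_mulVec, vecMul_vecMul, hWW, vecMul_one]
    simpa [dotProduct, Pi.star_apply, Complex.normSq_eq_conj_mul_self] using hdot
  have key' : ∑ s, Complex.normSq ((W *ᵥ cvec x) s) = ∑ s, Complex.normSq (cvec x s) := by
    have := key
    push_cast at this
    exact_mod_cast this
  calc ∑ s, Complex.normSq ((M *ᵥ cvec x) s)
      = ∑ s, Complex.normSq c * Complex.normSq ((W *ᵥ cvec x) s) := by
        refine Finset.sum_congr rfl fun s _ => ?_
        rw [h1 s, Complex.normSq_mul]
    _ = Complex.normSq c * ∑ s, Complex.normSq ((W *ᵥ cvec x) s) := by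
        rw [Finset.mul_sum]
    _ = Complex.normSq c * ∑ s, (x s) ^ 2 := by
        rw [key']
        congr 1
        refine Finset.sum_congr rfl fun s _ => ?_
        simp [cvec, Complex.normSq_ofReal, sq]

lemma aux_mulVec_sum {n q : ℕ} (M : Matrix (Fin n) (Fin n) ℂ) (g : Fin q → Fin n → ℝ)
    (s : Fin n) :
    (M *ᵥ cvec (∑ k, g k)) s = ∑ k, (M *ᵥ cvec (g k)) s := by
  simp only [mulVec, dotProduct, cvec, Finset.sum_apply, Complex.ofReal_sum,
    Finset.mul_sum]
  exact Finset.sum_comm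

lemma aux_unitary_norm {m p : ℕ} (Q : Matrix (Fin m) (Fin m) ℂ)
    (hQ : Qᴴ * Q = 1) (X : Matrix (Fin m) (Fin p) ℂ) :
    ∑ i, ∑ j, Complex.normSq ((Q * X) i j) = ∑ i, ∑ j, Complex.normSq (X i j) := by
  have htr : ∀ Z : Matrix (Fin m) (Fin p) ℂ,
      (∑ i, ∑ j, (Complex.normSq (Z i j) : ℂ)) = (Zᴴ * Z).trace := by
    intro Z
    rw [Matrix.trace, Finset.sum_comm]
    refine Finset.sum_congr rfl fun i _ => ?_
    simp [Matrix.diag, Matrix.mul_apply, conjTranspose_apply,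
      Complex.normSq_eq_conj_mul_self]
  have hmat : ((Q * X)ᴴ * (Q * X)) = Xᴴ * X := by
    rw [conjTranspose_mul, Matrix.mul_assoc, ← Matrix.mul_assoc Qᴴ, hQ,
      Matrix.one_mul]
  have key : (∑ i, ∑ j, (Complex.normSq ((Q * X) i j) : ℂ))
      = ∑ i, ∑ j, (Complex.normSq (X i j) : ℂ) := by
    rw [htr, htr, hmat]
  push_cast at key
  exact_mod_cast key

/-- for `M = c W` (`W` unitary, `c ≠ 0`), multiplication by a
★_M-unitary tensor preserves the Frobenius norm. -/
theorem stmt13 {n m p : ℕ} (M : Matrix (Fin n) (Fin n) ℂ)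
    (c : ℂ) (hc : c ≠ 0)
    (W : Matrix (Fin n) (Fin n) ℂ) (hW : W ∈ Matrix.unitaryGroup (Fin n) ℂ)
    (hMcW : M = c • W) (hcr : ConjRows M)
    (U : Fin m → Fin m → Fin n → ℝ)
    (hU1 : tmulT M (htr M U) U = idT M)
    (hU2 : tmulT M U (htr M U) = idT M)
    (B : Fin m → Fin p → Fin n → ℝ) :
    ∑ i, ∑ j, ∑ s, (tmulT M U B i j s) ^ 2 = ∑ i, ∑ j, ∑ s, (B i j s) ^ 2 := by
  obtain ⟨σ, hσ⟩ := aux_sigma hcr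
  -- invertibility of M
  have hWW : W * Wᴴ = 1 := Matrix.mem_unitaryGroup_iff.mp hW
  have hWW' : Wᴴ * W = 1 := Matrix.mem_unitaryGroup_iff'.mp hW
  have hright : M * (c⁻¹ • Wᴴ) = 1 := by
    rw [hMcW, Matrix.smul_mul, Matrix.mul_smul, hWW, smul_smul,
      mul_inv_cancel₀ hc, one_smul]
  have hMinv : M⁻¹ = c⁻¹ • Wᴴ := inv_eq_right_inv hright
  have hMM : M * M⁻¹ = 1 := by rw [hMinv]; exact hright
  have hMM' : M⁻¹ * M = 1 := by
    rw [hMinv, hMcW, Matrix.smul_mul, Matrix.mul_smul, hWW', smul_smul,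
      inv_mul_cancel₀ hc, one_smul]
  -- slice of the product
  have htslice_mul : ∀ s, tslice M (tmulT M U B) s = tslice M U s * tslice M B s := by
    intro s
    funext i j
    show (M *ᵥ cvec (∑ k, sprod M (U i k) (B k j))) s = _
    rw [aux_mulVec_sum, Matrix.mul_apply]
    refine Finset.sum_congr rfl fun k _ => ?_
    rw [aux_sprod hMM hMM' hσ]
    rfl
  -- slice of U is unitary
  have hQ : ∀ s, (tslice M U s)ᴴ * tslice M U s = 1 := by
    intro s
    funext i j
    rw [Matrix.mul_apply]
    have hrow : ∀ k, (tslice M U s)ᴴ i k * tslice M U s k j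
        = (M *ᵥ cvec (sprod M (htr M U i k) (U k j))) s := by
      intro k
      rw [aux_sprod hMM hMM' hσ]
      show _ = ((M *ᵥ cvec (astarR M (U k i))) * (M *ᵥ cvec (U k j))) s
      rw [aux_astar hMM hMM' hσ]
      simp only [tslice, conjTranspose_apply, Pi.mul_apply, RingHom.coe_coe]
      rfl
    have hsum : ∑ k, (tslice M U s)ᴴ i k * tslice M U s k j
        = (M *ᵥ cvec (tmulT M (htr M U) U i j)) s := by
      show _ = (M *ᵥ cvec (∑ k, sprod M (htr M U i k) (U k j))) s
      rw [aux_mulVec_sum]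
      exact Finset.sum_congr rfl fun k _ => hrow k
    rw [hsum, hU1]
    by_cases hij : i = j
    · subst hij
      show (M *ᵥ cvec (if i = i then eM M else 0)) s = _
      rw [if_pos rfl, aux_eM hMM hMM' hσ]
      simp
    · simp only [idT, if_neg hij]
      rw [aux_cvec_zero]
      simp [Matrix.one_apply, hij]
  -- swap sums helper
  have hswap : ∀ (f : Fin m → Fin p → Fin n → ℝ),
      (∑ i, ∑ j, ∑ s, f i j s) = ∑ s, ∑ i, ∑ j, f i j s := by
    intro f
    have h1 : (∑ i, ∑ j, ∑ s, f i j s) = ∑ i, ∑ s, ∑ j, f i j s :=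
      Finset.sum_congr rfl fun i _ => Finset.sum_comm
    rw [h1, Finset.sum_comm]
  have hnc : Complex.normSq c ≠ 0 := (Complex.normSq_pos.mpr hc).ne'
  have main : Complex.normSq c * (∑ i, ∑ j, ∑ s, (tmulT M U B i j s) ^ 2)
      = Complex.normSq c * (∑ i, ∑ j, ∑ s, (B i j s) ^ 2) := by
    calc Complex.normSq c * (∑ i, ∑ j, ∑ s, (tmulT M U B i j s) ^ 2)
        = ∑ i, ∑ j, Complex.normSq c * ∑ s, (tmulT M U B i j s) ^ 2 := by
          rw [Finset.mul_sum]; exact Finset.sum_congr rfl fun i _ => Finset.mul_sum _ _ _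
      _ = ∑ i, ∑ j, ∑ s, Complex.normSq ((M *ᵥ cvec (tmulT M U B i j)) s) := by
          refine Finset.sum_congr rfl fun i _ => Finset.sum_congr rfl fun j _ => ?_
          rw [aux_parseval hW hMcW]
      _ = ∑ s, ∑ i, ∑ j, Complex.normSq ((tslice M U s * tslice M B s) i j) := by
          rw [← hswap]
          refine Finset.sum_congr rfl fun i _ => Finset.sum_congr rfl fun j _ =>
            Finset.sum_congr rfl fun s _ => ?_
          rw [← htslice_mul s]
          rfl
      _ = ∑ s, ∑ i, ∑ j, Complex.normSq (tslice M B s i j) := by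
          exact Finset.sum_congr rfl fun s _ => aux_unitary_norm _ (hQ s) _
      _ = ∑ i, ∑ j, ∑ s, Complex.normSq ((M *ᵥ cvec (B i j)) s) := by
          rw [hswap (fun i j s => Complex.normSq ((M *ᵥ cvec (B i j)) s))]
          rfl
      _ = ∑ i, ∑ j, Complex.normSq c * ∑ s, (B i j s) ^ 2 := by
          refine Finset.sum_congr rfl fun i _ => Finset.sum_congr rfl fun j _ => ?_
          rw [aux_parseval hW hMcW]
      _ = Complex.normSq c * (∑ i, ∑ j, ∑ s, (B i j s) ^ 2) := by
          rw [Finset.mul_sum]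
          exact Finset.sum_congr rfl fun i _ => (Finset.mul_sum _ _ _).symm
  exact mul_left_cancel₀ hnc main
end
end

section
/- Let M ∈ ℂ^{n×n} be an invertible matrix satisfying the conjugate-row condition. For every tensor A : Fin m → Fin p → ℝⁿ viewed as a matrix of tubes, there exist tensors U : Fin m → Fin m → ℝⁿ, V : Fin p → Fin p → ℝⁿ, and S : Fin m → Fin p → ℝⁿ such that: U and V are ★_M-unitary (U^H ★_M U = U ★_M U^H is the identity tensor, and likewise for V); S is f-diagonal, i.e., S_{ij} = 0 ∈ ℝⁿ whenever i ≠ j; A = U ★_M S ★_M V^H; and the diagonal tubes σᵢ := S_{ii} satisfy that M·σᵢ is real entrywise nonnegative for each i, and M·(σᵢ − σ_{i+1}) is real entrywise nonnegative for each i < min(m,p). -/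
open Matrix

noncomputable section

/-- `M v` is real and entrywise nonnegative. -/
def NonnegTube {n : ℕ} (M : Matrix (Fin n) (Fin n) ℂ) (v : Fin n → ℝ) : Prop :=
  ∀ s, ((M *ᵥ cvec v) s).im = 0 ∧ 0 ≤ ((M *ᵥ cvec v) s).re

namespace TSVD
variable {𝕜 : Type*} [RCLike 𝕜]
theorem my_svd_exists {m p : ℕ} (B : Matrix (Fin m) (Fin p) 𝕜) :
    ∃ (U : Matrix (Fin m) (Fin m) 𝕜) (V : Matrix (Fin p) (Fin p) 𝕜) (d : Fin p → ℝ),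
      Uᴴ * U = 1 ∧ U * Uᴴ = 1 ∧ Vᴴ * V = 1 ∧ V * Vᴴ = 1 ∧
      (∀ j, 0 ≤ d j) ∧ Antitone d ∧
      B = U * (Matrix.of fun (i : Fin m) (j : Fin p) => if (i : ℕ) = (j : ℕ) then (d j : 𝕜) else 0) * Vᴴ := by
  classical
  set G := Bᴴ * B with hGdef
  have hG : G.IsHermitian := isHermitian_conjTranspose_mul_self B
  let g : Equiv.Perm (Fin p) := Tuple.sort (fun i => - hG.eigenvalues i)
  have hanti : Antitone (fun j => hG.eigenvalues (g j)) := by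
    intro a b hab
    have h2 := Tuple.monotone_sort (fun i => - hG.eigenvalues i) hab
    simpa using h2
  have hmu0 : ∀ i, 0 ≤ hG.eigenvalues i := fun i =>
    Matrix.eigenvalues_conjTranspose_mul_self_nonneg B i
  set d : Fin p → ℝ := fun j => Real.sqrt (hG.eigenvalues (g j)) with hddef
  have hd0 : ∀ j, 0 ≤ d j := fun j => Real.sqrt_nonneg _
  have hdanti : Antitone d := fun a b hab => Real.sqrt_le_sqrt (hanti hab)
  have hdsq : ∀ j, (d j : ℝ)^2 = hG.eigenvalues (g j) := fun j => Real.sq_sqrt (hmu0 _)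
  set W : Matrix (Fin p) (Fin p) 𝕜 := (hG.eigenvectorUnitary : Matrix (Fin p) (Fin p) 𝕜) with hWdef
  have hWl : Wᴴ * W = 1 := by
    simpa [star_eq_conjTranspose] using (Unitary.coe_star_mul_self hG.eigenvectorUnitary)
  have hWr : W * Wᴴ = 1 := by
    simpa [star_eq_conjTranspose] using (Unitary.coe_mul_star_self hG.eigenvectorUnitary)
  set V : Matrix (Fin p) (Fin p) 𝕜 := W.submatrix id g with hVdef
  have hVl : Vᴴ * V = 1 := by
    have he : ∀ j j', (Vᴴ * V) j j' = (Wᴴ * W) (g j) (g j') := by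
      intro j j'
      simp [mul_apply, conjTranspose_apply, hVdef, submatrix_apply]
    ext j j'
    rw [he, hWl]
    by_cases h : j = j' <;> simp [one_apply, h, g.injective.eq_iff]
  have hVr : V * Vᴴ = 1 := mul_eq_one_comm.mp hVl
  -- diagonalization
  have hdiagW : Wᴴ * G * W = diagonal (RCLike.ofReal ∘ hG.eigenvalues) := by
    simpa [star_eq_conjTranspose, Unitary.conjStarAlgAut_star_apply, hWdef, Matrix.mul_assoc] using hG.conjStarAlgAut_star_eigenvectorUnitary
  set L : Matrix (Fin m) (Fin p) 𝕜 := B * V with hLdef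
  have hLL : Lᴴ * L = diagonal (fun j => ((d j : ℝ) : 𝕜)^2) := by
    have h1 : Lᴴ * L = Vᴴ * G * V := by
      rw [hLdef, conjTranspose_mul, hGdef]
      rw [Matrix.mul_assoc, Matrix.mul_assoc, Matrix.mul_assoc]
    have h2 : ∀ j j', (Vᴴ * G * V) j j' = (Wᴴ * G * W) (g j) (g j') := by
      intro j j'
      simp only [mul_apply, conjTranspose_apply, hVdef, submatrix_apply, id]
    ext j j'
    rw [h1, h2, hdiagW]
    by_cases h : j = j'
    · subst h
      simp [diagonal_apply_eq, ← hdsq, RCLike.ofReal_pow]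
    · rw [diagonal_apply_ne _ (fun hc => h (g.injective hc)), diagonal_apply_ne _ h]
  -- columns of L as Euclidean vectors
  let colL : Fin p → EuclideanSpace 𝕜 (Fin m) := fun j => WithLp.toLp 2 (fun i => L i j)
  have hinner : ∀ j j', (inner 𝕜 (colL j) (colL j') : 𝕜) = if j = j' then ((d j : ℝ) : 𝕜)^2 else 0 := by
    intro j j'
    have h1 : (inner 𝕜 (colL j) (colL j') : 𝕜) = (Lᴴ * L) j j' := by
      simp [PiLp.inner_apply, RCLike.inner_apply, mul_apply, conjTranspose_apply, colL, mul_comm]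
    rw [h1, hLL]
    by_cases h : j = j' <;> simp [h, diagonal_apply_ne]
  have hcol0 : ∀ j, d j = 0 → colL j = 0 := by
    intro j hj
    have h := hinner j j
    rw [if_pos rfl, hj] at h
    simp only [RCLike.ofReal_zero, ne_eq, OfNat.ofNat_ne_zero, not_false_eq_true, zero_pow] at h
    exact inner_self_eq_zero.mp h
  -- rank bound
  have hdm : ∀ j : Fin p, m ≤ (j : ℕ) → d j = 0 := by
    intro j hj
    by_contra hdj
    have hdjpos : ∀ k : Fin p, (k : ℕ) ≤ (j : ℕ) → d k ≠ 0 := by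
      intro k hk h0
      have h1 : d j ≤ d k := hdanti (by exact hk)
      have := hd0 j
      exact hdj (le_antisymm (h0 ▸ h1) (hd0 j))
    have hcast : ∀ a : Fin ((j : ℕ)+1), (a : ℕ) < p := fun a =>
      lt_of_le_of_lt (Nat.lt_succ_iff.mp a.isLt) j.isLt
    let cst : Fin ((j : ℕ)+1) → Fin p := fun a => ⟨(a : ℕ), hcast a⟩
    have hcstinj : Function.Injective cst := fun a b hab => by
      have h := congrArg Fin.val hab
      simp only [cst] at h
      exact Fin.ext h
    let u : Fin ((j : ℕ)+1) → EuclideanSpace 𝕜 (Fin m) := fun a =>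
      ((d (cst a) : ℝ) : 𝕜)⁻¹ • colL (cst a)
    have hu : Orthonormal 𝕜 u := by
      rw [orthonormal_iff_ite]
      intro a b
      have hda : d (cst a) ≠ 0 := hdjpos _ (Nat.lt_succ_iff.mp a.isLt)
      have hdb : d (cst b) ≠ 0 := hdjpos _ (Nat.lt_succ_iff.mp b.isLt)
      simp only [u, inner_smul_left, inner_smul_right, hinner, map_inv₀, RCLike.conj_ofReal]
      by_cases hab : a = b
      · subst hab
        simp only [if_pos rfl, ↓reduceIte]
        rw [show ((d (cst a) : ℝ) : 𝕜)^2 = ((d (cst a) : ℝ) : 𝕜) * ((d (cst a) : ℝ) : 𝕜) by ring]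
        have : ((d (cst a) : ℝ) : 𝕜) ≠ 0 := by
          simpa using hda
        field_simp
      · rw [if_neg (fun hc => hab (hcstinj hc)), if_neg hab]
        simp
    have hcard : Fintype.card (Fin ((j : ℕ)+1)) ≤ Module.finrank 𝕜 (EuclideanSpace 𝕜 (Fin m)) :=
      hu.linearIndependent.fintype_card_le_finrank
    simp [finrank_euclideanSpace_fin] at hcard
    omega
  -- extend to an orthonormal basis
  let s : Set (Fin m) := {i | ∃ h : (i : ℕ) < p, d ⟨(i : ℕ), h⟩ ≠ 0}
  let v : Fin m → EuclideanSpace 𝕜 (Fin m) := fun i =>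
    if h : (i : ℕ) < p then ((d ⟨(i : ℕ), h⟩ : ℝ) : 𝕜)⁻¹ • colL ⟨(i : ℕ), h⟩ else 0
  have hv : Orthonormal 𝕜 (s.restrict v) := by
    rw [orthonormal_iff_ite]
    rintro ⟨a, hap, hda⟩ ⟨b, hbp, hdb⟩
    have hva : s.restrict v ⟨a, hap, hda⟩ = ((d ⟨(a : ℕ), hap⟩ : ℝ) : 𝕜)⁻¹ • colL ⟨(a : ℕ), hap⟩ := by
      exact dif_pos hap
    have hvb : s.restrict v ⟨b, hbp, hdb⟩ = ((d ⟨(b : ℕ), hbp⟩ : ℝ) : 𝕜)⁻¹ • colL ⟨(b : ℕ), hbp⟩ := by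
      exact dif_pos hbp
    rw [hva, hvb]
    simp only [inner_smul_left, inner_smul_right, hinner, map_inv₀, RCLike.conj_ofReal]
    by_cases hab : a = b
    · subst hab
      simp only [if_pos rfl, Subtype.mk.injEq, ↓reduceIte]
      rw [show ((d ⟨(a : ℕ), hap⟩ : ℝ) : 𝕜)^2 = ((d ⟨(a : ℕ), hap⟩ : ℝ) : 𝕜) * ((d ⟨(a : ℕ), hap⟩ : ℝ) : 𝕜) by ring]
      have : ((d ⟨(a : ℕ), hap⟩ : ℝ) : 𝕜) ≠ 0 := by simpa using hda
      field_simp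
    · have h1 : (⟨(a : ℕ), hap⟩ : Fin p) ≠ ⟨(b : ℕ), hbp⟩ := by
        intro hc
        apply hab
        have h := congrArg Fin.val hc
        exact Fin.ext h
      rw [if_neg h1, if_neg (by simpa [Subtype.ext_iff] using hab)]
      simp
  obtain ⟨bE, hbE⟩ := hv.exists_orthonormalBasis_extension_of_card_eq
    (by simp [finrank_euclideanSpace_fin])
  set U : Matrix (Fin m) (Fin m) 𝕜 := Matrix.of (fun i k => bE k i) with hUdef
  have hUl : Uᴴ * U = 1 := by
    ext k k'
    have h1 : (Uᴴ * U) k k' = (inner 𝕜 (bE k) (bE k') : 𝕜) := by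
      simp [mul_apply, conjTranspose_apply, hUdef, PiLp.inner_apply, RCLike.inner_apply, mul_comm]
    rw [h1, orthonormal_iff_ite.mp bE.orthonormal]
    by_cases h : k = k' <;> simp [h, one_apply]
  have hUr : U * Uᴴ = 1 := mul_eq_one_comm.mp hUl
  -- the key factorization
  have hBV : B * V = U * (Matrix.of fun (i : Fin m) (j : Fin p) =>
      if (i : ℕ) = (j : ℕ) then (d j : 𝕜) else 0) := by
    ext i j
    have hLij : (B * V) i j = L i j := rfl
    rw [hLij, mul_apply]
    by_cases hjm : (j : ℕ) < m
    · have hsum : ∑ k, U i k * (Matrix.of fun (i : Fin m) (j : Fin p) =>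
          if (i : ℕ) = (j : ℕ) then (d j : 𝕜) else 0) k j
          = U i ⟨(j : ℕ), hjm⟩ * (d j : 𝕜) := by
        rw [Finset.sum_eq_single (⟨(j : ℕ), hjm⟩ : Fin m)]
        · simp
        · intro k _ hk
          have : (k : ℕ) ≠ (j : ℕ) := fun hc => hk (Fin.ext hc)
          simp [this]
        · simp
      rw [hsum]
      by_cases hdj : d j = 0
      · have h0 : colL j = 0 := hcol0 j hdj
        have : L i j = 0 := by simpa [colL] using congrArg (fun x : EuclideanSpace 𝕜 (Fin m) => x i) h0
        simp [this, hdj]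
      · have hmem : (⟨(j : ℕ), hjm⟩ : Fin m) ∈ s := by
          refine ⟨j.isLt, ?_⟩
          convert hdj using 2
        have hbEv := hbE _ hmem
        have hjeq : (⟨((⟨(j : ℕ), hjm⟩ : Fin m) : ℕ), (⟨j.isLt, by convert hdj using 2⟩ : (⟨(j : ℕ), hjm⟩ : Fin m) ∈ s).choose⟩ : Fin p) = j := Fin.ext rfl
        have hUij : U i ⟨(j : ℕ), hjm⟩ = ((d j : ℝ) : 𝕜)⁻¹ * L i j := by
          have h2 : U i ⟨(j : ℕ), hjm⟩ = v ⟨(j : ℕ), hjm⟩ i := by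
            rw [hUdef]
            simp only [Matrix.of_apply]
            rw [hbEv]
          rw [h2]
          simp only [v, dif_pos (show ((⟨(j : ℕ), hjm⟩ : Fin m) : ℕ) < p from j.isLt)]
          have hj2 : (⟨((⟨(j : ℕ), hjm⟩ : Fin m) : ℕ), (show ((⟨(j : ℕ), hjm⟩ : Fin m) : ℕ) < p from j.isLt)⟩ : Fin p) = j := Fin.ext rfl
          rw [hj2]
          rfl
        rw [hUij]
        have : ((d j : ℝ) : 𝕜) ≠ 0 := by simpa using hdj
        field_simp
    · have hdj : d j = 0 := hdm j (le_of_not_gt hjm)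
      have h0 : colL j = 0 := hcol0 j hdj
      have hL0 : L i j = 0 := by simpa [colL] using congrArg (fun x : EuclideanSpace 𝕜 (Fin m) => x i) h0
      rw [hL0]
      rw [Finset.sum_eq_zero]
      intro k _
      have : (k : ℕ) ≠ (j : ℕ) := by omega
      simp [this]
  refine ⟨U, V, d, hUl, hUr, hVl, hVr, hd0, hdanti, ?_⟩
  calc B = B * (V * Vᴴ) := by rw [hVr, Matrix.mul_one]
  _ = (B * V) * Vᴴ := by rw [Matrix.mul_assoc]
  _ = _ := by rw [hBV]

end TSVD

namespace TSVD

variable {n : ℕ} (M : Matrix (Fin n) (Fin n) ℂ)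

/-- The transform. -/
def Phi (a : Fin n → ℝ) : Fin n → ℂ := M *ᵥ cvec a

/-- The conjugation involution on slice indices. -/
def sig (hcr : ConjRows M) : Fin n → Fin n := fun j =>
  if h : ∀ k, (M j k).im = 0 then j else ((hcr j).resolve_left h).exists.choose

lemma sig_spec (hcr : ConjRows M) (j : Fin n) (k : Fin n) :
    M (sig M hcr j) k = (starRingEnd ℂ) (M j k) := by
  unfold sig
  by_cases h : ∀ k, (M j k).im = 0
  · rw [dif_pos h]
    exact (Complex.conj_eq_iff_im.mpr (h k)).symm
  · rw [dif_neg h]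
    exact ((hcr j).resolve_left h).exists.choose_spec.2 k

lemma sig_not_real (hcr : ConjRows M) (j : Fin n) (h : ¬ ∀ k, (M j k).im = 0) :
    sig M hcr j ≠ j := by
  unfold sig
  rw [dif_neg h]
  exact ((hcr j).resolve_left h).exists.choose_spec.1

lemma sig_invol (hcr : ConjRows M) (j : Fin n) : sig M hcr (sig M hcr j) = j := by
  by_cases h : ∀ k, (M j k).im = 0
  · have hj : sig M hcr j = j := by unfold sig; rw [dif_pos h]
    rw [hj, hj]
  · set l := sig M hcr j with hl
    have hlrow : ∀ k, M l k = (starRingEnd ℂ) (M j k) := sig_spec M hcr j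
    have hlnotreal : ¬ ∀ k, (M l k).im = 0 := by
      intro hc
      apply h
      intro k
      have := hc k
      rw [hlrow k] at this
      simpa using this
    have hlj : l ≠ j := sig_not_real M hcr j h
    -- sig l is the unique conjugate partner of l; j is one
    have hEU := (hcr l).resolve_left hlnotreal
    have hspec : sig M hcr l ≠ l ∧ ∀ k, M (sig M hcr l) k = (starRingEnd ℂ) (M l k) := by
      constructor
      · exact sig_not_real M hcr l hlnotreal
      · exact sig_spec M hcr l
    have hjspec : j ≠ l ∧ ∀ k, M j k = (starRingEnd ℂ) (M l k) := by
      refine ⟨hlj.symm, fun k => ?_⟩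
      rw [hlrow k]
      simp
    obtain ⟨w, _, hw⟩ := hEU
    rw [hw _ hspec, hw _ hjspec]

/-- Symmetric (transform-space real-representable) families. -/
def Sym (hcr : ConjRows M) (w : Fin n → ℂ) : Prop :=
  ∀ j, w (sig M hcr j) = (starRingEnd ℂ) (w j)

lemma Phi_sym (hcr : ConjRows M) (a : Fin n → ℝ) : Sym M hcr (Phi M a) := by
  intro j
  simp only [Phi, mulVec, dotProduct, cvec]
  rw [map_sum]
  refine Finset.sum_congr rfl fun k _ => ?_
  rw [sig_spec M hcr j k]
  simp [Complex.conj_ofReal]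

lemma Sym.mul {hcr : ConjRows M} {w w' : Fin n → ℂ} (h : Sym M hcr w) (h' : Sym M hcr w') :
    Sym M hcr (w * w') := fun j => by simp [Pi.mul_apply, h j, h' j]

lemma Sym.conj {hcr : ConjRows M} {w : Fin n → ℂ} (h : Sym M hcr w) :
    Sym M hcr (fun k => (starRingEnd ℂ) (w k)) := fun j => by
  have h2 := congrArg (starRingEnd ℂ) (h j)
  simp only [RingHomCompTriple.comp_apply, RingHom.id_apply, starRingEnd_self_apply] at h2
  have h3 := h (sig M hcr j)
  rw [sig_invol M hcr j] at h3
  simp [h3]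

lemma Sym.one (hcr : ConjRows M) : Sym M hcr (fun _ => 1) := fun j => by simp

/-- Inverse transform. -/
def itr (w : Fin n → ℂ) : Fin n → ℝ := fun t => ((M⁻¹ *ᵥ w) t).re

lemma sym_inv_real (hM : IsUnit M.det) (hcr : ConjRows M) {w : Fin n → ℂ}
    (hw : Sym M hcr w) : ∀ t, ((M⁻¹ *ᵥ w) t).im = 0 := by
  set x := M⁻¹ *ᵥ w with hx
  have hMx : M *ᵥ x = w := by
    rw [hx, mulVec_mulVec, Matrix.mul_nonsing_inv M hM, one_mulVec]
  set y : Fin n → ℂ := fun t => (starRingEnd ℂ) (x t) with hy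
  have hMy : M *ᵥ y = w := by
    funext j
    have : (M *ᵥ y) j = (starRingEnd ℂ) ((M *ᵥ x) (sig M hcr j)) := by
      simp only [mulVec, dotProduct, hy]
      rw [map_sum]
      refine Finset.sum_congr rfl fun k _ => ?_
      rw [sig_spec M hcr j k]
      simp [mul_comm]
    rw [this, hMx, hw j]
    simp
  have hxy : y = x := by
    have h1 : y = M⁻¹ *ᵥ (M *ᵥ y) := by
      rw [mulVec_mulVec, Matrix.nonsing_inv_mul M hM, one_mulVec]
    rw [h1, hMy, hx]
  intro t
  have := congrFun hxy t
  simp only [hy] at this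
  have him := congrArg Complex.im this
  simp only [Complex.conj_im] at him
  linarith [him]

lemma cvec_itr (hM : IsUnit M.det) (hcr : ConjRows M) {w : Fin n → ℂ}
    (hw : Sym M hcr w) : cvec (itr M w) = M⁻¹ *ᵥ w := by
  funext t
  have him := sym_inv_real M hM hcr hw t
  apply Complex.ext
  · simp [cvec, itr]
  · simp [cvec, him]

lemma Phi_itr (hM : IsUnit M.det) (hcr : ConjRows M) {w : Fin n → ℂ}
    (hw : Sym M hcr w) : Phi M (itr M w) = w := by
  rw [Phi, cvec_itr M hM hcr hw, mulVec_mulVec, Matrix.mul_nonsing_inv M hM, one_mulVec]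

lemma Phi_sprod (hM : IsUnit M.det) (hcr : ConjRows M) (a b : Fin n → ℝ) :
    Phi M (sprod M a b) = Phi M a * Phi M b := by
  have h : sprod M a b = itr M (Phi M a * Phi M b) := rfl
  rw [h, Phi_itr M hM hcr ((Phi_sym M hcr a).mul M (Phi_sym M hcr b))]

lemma Phi_astar (hM : IsUnit M.det) (hcr : ConjRows M) (a : Fin n → ℝ) :
    Phi M (astarR M a) = fun k => (starRingEnd ℂ) (Phi M a k) := by
  have h : astarR M a = itr M (fun k => (starRingEnd ℂ) (Phi M a k)) := rfl
  rw [h, Phi_itr M hM hcr ((Phi_sym M hcr a).conj M)]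

lemma Phi_eM (hM : IsUnit M.det) (hcr : ConjRows M) :
    Phi M (eM M) = fun _ => 1 := by
  have h : eM M = itr M (fun _ => 1) := rfl
  rw [h, Phi_itr M hM hcr (Sym.one M hcr)]

lemma Phi_zero : Phi M 0 = 0 := by
  have : cvec (0 : Fin n → ℝ) = 0 := by funext t; simp [cvec]
  simp [Phi, this]

lemma Phi_apply (a : Fin n → ℝ) (s : Fin n) : Phi M a s = ∑ k, M s k * (a k : ℂ) := rfl

lemma Phi_sum {ι : Type*} (u : Finset ι) (f : ι → Fin n → ℝ) (s : Fin n) :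
    Phi M (∑ t ∈ u, f t) s = ∑ t ∈ u, Phi M (f t) s := by
  simp only [Phi_apply]
  rw [Finset.sum_comm]
  refine Finset.sum_congr rfl fun k _ => ?_
  rw [← Finset.mul_sum]
  congr 1
  push_cast
  simp

lemma Phi_sub (a b : Fin n → ℝ) (s : Fin n) :
    Phi M (a - b) s = Phi M a s - Phi M b s := by
  simp only [Phi_apply]
  rw [← Finset.sum_sub_distrib]
  refine Finset.sum_congr rfl fun k _ => ?_
  have : ((a - b) k : ℂ) = (a k : ℂ) - (b k : ℂ) := by
    simp [Pi.sub_apply]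
  rw [this]
  ring

lemma Phi_inj (hM : IsUnit M.det) : Function.Injective (Phi M) := by
  intro a b hab
  have h1 : cvec a = cvec b := by
    have := congrArg (fun w => M⁻¹ *ᵥ w) hab
    simpa [Phi, mulVec_mulVec, Matrix.nonsing_inv_mul M hM, one_mulVec] using this
  funext t
  have := congrFun h1 t
  simpa [cvec, Complex.ofReal_inj] using this

/-- Slice of a tensor in the transform domain. -/
def hatT {m p : ℕ} (A : Fin m → Fin p → Fin n → ℝ) (s : Fin n) :
    Matrix (Fin m) (Fin p) ℂ :=
  Matrix.of fun i j => Phi M (A i j) s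

lemma hat_tmul (hM : IsUnit M.det) (hcr : ConjRows M) {m p l : ℕ}
    (A : Fin m → Fin p → Fin n → ℝ) (B : Fin p → Fin l → Fin n → ℝ) (s : Fin n) :
    hatT M (tmulT M A B) s = hatT M A s * hatT M B s := by
  ext i j
  simp only [hatT, Matrix.of_apply, tmulT, mul_apply]
  rw [Phi_sum]
  refine Finset.sum_congr rfl fun k _ => ?_
  rw [Phi_sprod M hM hcr]
  rfl

lemma hat_htr (hM : IsUnit M.det) (hcr : ConjRows M) {m p : ℕ}
    (A : Fin m → Fin p → Fin n → ℝ) (s : Fin n) :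
    hatT M (htr M A) s = (hatT M A s)ᴴ := by
  ext j i
  simp only [hatT, Matrix.of_apply, htr, conjTranspose_apply]
  rw [Phi_astar M hM hcr]
  rfl

lemma hat_id (hM : IsUnit M.det) (hcr : ConjRows M) {m : ℕ} (s : Fin n) :
    hatT M (idT M (m := m)) s = 1 := by
  ext i j
  simp only [hatT, Matrix.of_apply, idT]
  by_cases h : i = j
  · subst h
    simp [Phi_eM M hM hcr, one_apply]
  · simp [h, Phi_zero, one_apply]

lemma hat_inj (hM : IsUnit M.det) {m p : ℕ} {A B : Fin m → Fin p → Fin n → ℝ}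
    (h : ∀ s, hatT M A s = hatT M B s) : A = B := by
  funext i j
  apply Phi_inj M hM
  funext s
  have := congrFun (congrFun (congrArg (fun C => (C : Matrix (Fin m) (Fin p) ℂ)) (h s)) i) j
  simpa [hatT] using this

end TSVD

namespace TSVD

/-- Bundled singular value decomposition of a matrix. -/
structure SVDOf {𝕜 : Type*} [RCLike 𝕜] {m p : ℕ} (B : Matrix (Fin m) (Fin p) 𝕜) where
  U : Matrix (Fin m) (Fin m) 𝕜
  V : Matrix (Fin p) (Fin p) 𝕜
  d : Fin p → ℝ
  hUl : Uᴴ * U = 1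
  hUr : U * Uᴴ = 1
  hVl : Vᴴ * V = 1
  hVr : V * Vᴴ = 1
  hd0 : ∀ j, 0 ≤ d j
  hanti : Antitone d
  factor : B = U * (Matrix.of fun (i : Fin m) (j : Fin p) =>
    if (i : ℕ) = (j : ℕ) then (d j : 𝕜) else 0) * Vᴴ

noncomputable def svdOf {𝕜 : Type*} [RCLike 𝕜] {m p : ℕ} (B : Matrix (Fin m) (Fin p) 𝕜) :
    SVDOf B :=
  Classical.choice (by
    obtain ⟨U, V, d, h1, h2, h3, h4, h5, h6, h7⟩ := my_svd_exists B
    exact ⟨⟨U, V, d, h1, h2, h3, h4, h5, h6, h7⟩⟩)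

/-- Transport an SVD along an equality of matrices. -/
def SVDOf.cast {𝕜 : Type*} [RCLike 𝕜] {m p : ℕ} {B B' : Matrix (Fin m) (Fin p) 𝕜}
    (h : B = B') (S : SVDOf B) : SVDOf B' :=
  ⟨S.U, S.V, S.d, S.hUl, S.hUr, S.hVl, S.hVr, S.hd0, S.hanti, h ▸ S.factor⟩

/-- Complexify a real SVD. -/
def SVDOf.complexify {m p : ℕ} {B : Matrix (Fin m) (Fin p) ℝ} (S : SVDOf B) :
    SVDOf (B.map (Complex.ofRealHom)) where
  U := S.U.map Complex.ofRealHom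
  V := S.V.map Complex.ofRealHom
  d := S.d
  hUl := by
    rw [← Matrix.conjTranspose_map _ (fun x => by simp [Complex.conj_ofReal]),
      ← Matrix.map_mul, S.hUl, Matrix.map_one _ (map_zero _) (map_one _)]
  hUr := by
    rw [← Matrix.conjTranspose_map _ (fun x => by simp [Complex.conj_ofReal]),
      ← Matrix.map_mul, S.hUr, Matrix.map_one _ (map_zero _) (map_one _)]
  hVl := by
    rw [← Matrix.conjTranspose_map _ (fun x => by simp [Complex.conj_ofReal]),
      ← Matrix.map_mul, S.hVl, Matrix.map_one _ (map_zero _) (map_one _)]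
  hVr := by
    rw [← Matrix.conjTranspose_map _ (fun x => by simp [Complex.conj_ofReal]),
      ← Matrix.map_mul, S.hVr, Matrix.map_one _ (map_zero _) (map_one _)]
  hd0 := S.hd0
  hanti := S.hanti
  factor := by
    conv_lhs => rw [S.factor]
    rw [Matrix.map_mul, Matrix.map_mul,
      ← Matrix.conjTranspose_map _ (fun x => by simp [Complex.conj_ofReal])]
    congr 1
    congr 1
    ext i j
    by_cases h : (i : ℕ) = (j : ℕ) <;> simp [h, RCLike.ofReal_real_eq_id]

/-- Conjugate an SVD. -/
def SVDOf.conjug {m p : ℕ} {B : Matrix (Fin m) (Fin p) ℂ} (S : SVDOf B) :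
    SVDOf (B.map (starRingEnd ℂ)) where
  U := S.U.map (starRingEnd ℂ)
  V := S.V.map (starRingEnd ℂ)
  d := S.d
  hUl := by
    rw [← Matrix.conjTranspose_map _ (fun x => by simp),
      ← Matrix.map_mul, S.hUl, Matrix.map_one _ (map_zero _) (map_one _)]
  hUr := by
    rw [← Matrix.conjTranspose_map _ (fun x => by simp),
      ← Matrix.map_mul, S.hUr, Matrix.map_one _ (map_zero _) (map_one _)]
  hVl := by
    rw [← Matrix.conjTranspose_map _ (fun x => by simp),
      ← Matrix.map_mul, S.hVl, Matrix.map_one _ (map_zero _) (map_one _)]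
  hVr := by
    rw [← Matrix.conjTranspose_map _ (fun x => by simp),
      ← Matrix.map_mul, S.hVr, Matrix.map_one _ (map_zero _) (map_one _)]
  hd0 := S.hd0
  hanti := S.hanti
  factor := by
    conv_lhs => rw [S.factor]
    rw [Matrix.map_mul, Matrix.map_mul,
      ← Matrix.conjTranspose_map _ (fun x => by simp)]
    congr 1
    congr 1
    ext i j
    by_cases h : (i : ℕ) = (j : ℕ) <;> simp [h, RCLike.conj_ofReal]

end TSVD

namespace TSVD
section Assemble
variable {n m p : ℕ} (M : Matrix (Fin n) (Fin n) ℂ)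
  (hcr : ConjRows M) (A : Fin m → Fin p → Fin n → ℝ)

/-- The real part of a slice. -/
def Are (s : Fin n) : Matrix (Fin m) (Fin p) ℝ :=
  Matrix.of fun i j => (Phi M (A i j) s).re

lemma hat_conj (s : Fin n) :
    hatT M A (sig M hcr s) = (hatT M A s).map (starRingEnd ℂ) := by
  ext i j
  simp only [hatT, Matrix.of_apply, Matrix.map_apply]
  exact Phi_sym M hcr (A i j) s

lemma hat_fixed (s : Fin n) (h : sig M hcr s = s) :
    (Are M A s).map Complex.ofRealHom = hatT M A s := by
  ext i j
  have h1 := Phi_sym M hcr (A i j) s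
  rw [h] at h1
  have him : (Phi M (A i j) s).im = 0 := by
    have h2 := congrArg Complex.im h1
    simp only [Complex.conj_im] at h2
    linarith
  simp only [Are, hatT, Matrix.map_apply, Matrix.of_apply, Complex.ofRealHom_eq_coe]
  exact Complex.ext rfl (by simp [him])

/-- Slice-wise SVD, chosen compatibly with the conjugation symmetry. -/
noncomputable def svdAt (s : Fin n) : SVDOf (hatT M A s) :=
  if h1 : sig M hcr s = s then
    (svdOf (Are M A s)).complexify.cast (hat_fixed M hcr A s h1)
  else if h2 : s < sig M hcr s then svdOf (hatT M A s)
  else ((svdOf (hatT M A (sig M hcr s))).conjug).cast (by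
    have h := hat_conj M hcr A (sig M hcr s)
    rw [sig_invol M hcr s] at h
    exact h.symm)

lemma svdAt_sym (s : Fin n) :
    (svdAt M hcr A (sig M hcr s)).U = ((svdAt M hcr A s).U).map (starRingEnd ℂ) ∧
    (svdAt M hcr A (sig M hcr s)).V = ((svdAt M hcr A s).V).map (starRingEnd ℂ) ∧
    (svdAt M hcr A (sig M hcr s)).d = (svdAt M hcr A s).d := by
  by_cases h1 : sig M hcr s = s
  · rw [h1]
    have he : svdAt M hcr A s = (svdOf (Are M A s)).complexify.cast (hat_fixed M hcr A s h1) := by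
      unfold svdAt
      rw [dif_pos h1]
    rw [he]
    refine ⟨?_, ?_, rfl⟩ <;>
    · simp only [SVDOf.cast, SVDOf.complexify]
      ext i j
      simp [Complex.conj_ofReal]
  · by_cases h2 : s < sig M hcr s
    · have he : svdAt M hcr A s = svdOf (hatT M A s) := by
        unfold svdAt
        rw [dif_neg h1, dif_pos h2]
      have hc1 : ¬ sig M hcr (sig M hcr s) = sig M hcr s := by
        rw [sig_invol M hcr s]
        exact fun hc => h1 hc.symm
      have hc2 : ¬ sig M hcr s < sig M hcr (sig M hcr s) := by
        rw [sig_invol M hcr s]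
        exact not_lt.mpr (le_of_lt h2)
      have he2 : svdAt M hcr A (sig M hcr s) =
          ((svdOf (hatT M A (sig M hcr (sig M hcr s)))).conjug).cast (by
            have h := hat_conj M hcr A (sig M hcr (sig M hcr s))
            rw [sig_invol M hcr (sig M hcr s)] at h
            exact h.symm) := by
        unfold svdAt
        rw [dif_neg hc1, dif_neg hc2]
      rw [he, he2]
      have hAA : hatT M A (sig M hcr (sig M hcr s)) = hatT M A s := by
        rw [sig_invol M hcr s]
      simp only [SVDOf.cast, SVDOf.conjug]
      exact ⟨by rw [hAA], by rw [hAA], by rw [hAA]⟩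
    · have h3 : sig M hcr s < s := lt_of_le_of_ne (not_lt.mp h2) h1
      have he : svdAt M hcr A s = ((svdOf (hatT M A (sig M hcr s))).conjug).cast (by
            have h := hat_conj M hcr A (sig M hcr s)
            rw [sig_invol M hcr s] at h
            exact h.symm) := by
        unfold svdAt
        rw [dif_neg h1, dif_neg h2]
      have hc1 : ¬ sig M hcr (sig M hcr s) = sig M hcr s := by
        rw [sig_invol M hcr s]
        exact fun hc => h1 hc.symm
      have hc2 : sig M hcr s < sig M hcr (sig M hcr s) := by
        rw [sig_invol M hcr s]
        exact h3
      have he2 : svdAt M hcr A (sig M hcr s) = svdOf (hatT M A (sig M hcr s)) := by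
        unfold svdAt
        rw [dif_neg hc1, dif_pos hc2]
      rw [he, he2]
      simp only [SVDOf.cast, SVDOf.conjug]
      refine ⟨?_, ?_, trivial⟩
      · ext i j
        simp
      · ext i j
        simp

end Assemble
end TSVD

open TSVD

/-- existence of the ★_M-SVD: every tensor `A` factors as
`A = U ★_M S ★_M V^H` with `U, V` ★_M-unitary and `S` f-diagonal with ordered
nonnegative singular tubes. -/
theorem stmt14 {n m p : ℕ} (M : Matrix (Fin n) (Fin n) ℂ) (hM : IsUnit M.det)
    (hcr : ConjRows M) (A : Fin m → Fin p → Fin n → ℝ) :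
    ∃ (U : Fin m → Fin m → Fin n → ℝ) (V : Fin p → Fin p → Fin n → ℝ)
      (S : Fin m → Fin p → Fin n → ℝ),
      tmulT M (htr M U) U = idT M ∧ tmulT M U (htr M U) = idT M ∧
      tmulT M (htr M V) V = idT M ∧ tmulT M V (htr M V) = idT M ∧
      (∀ (i : Fin m) (j : Fin p), (i : ℕ) ≠ (j : ℕ) → S i j = 0) ∧
      A = tmulT M U (tmulT M S (htr M V)) ∧
      (∀ (i : Fin m) (j : Fin p), (i : ℕ) = (j : ℕ) → NonnegTube M (S i j)) ∧
      (∀ (i i' : Fin m) (j j' : Fin p), (i : ℕ) = (j : ℕ) → (i' : ℕ) = (j' : ℕ) →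
        (i' : ℕ) = (i : ℕ) + 1 → NonnegTube M (S i j - S i' j')) := by
    classical
  set UU : Fin m → Fin m → Fin n → ℝ :=
    fun i j => itr M (fun s => (svdAt M hcr A s).U i j) with hUUdef
  set VV : Fin p → Fin p → Fin n → ℝ :=
    fun i j => itr M (fun s => (svdAt M hcr A s).V i j) with hVVdef
  set SS : Fin m → Fin p → Fin n → ℝ :=
    fun i j => itr M (fun s => if (i : ℕ) = (j : ℕ)
      then (((svdAt M hcr A s).d j : ℝ) : ℂ) else 0) with hSSdef
  -- symmetry of the chosen slice data
  have hUsym : ∀ i j, Sym M hcr (fun s => (svdAt M hcr A s).U i j) := by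
    intro i j s
    show (svdAt M hcr A (sig M hcr s)).U i j = (starRingEnd ℂ) ((svdAt M hcr A s).U i j)
    rw [(svdAt_sym M hcr A s).1]
    simp [Matrix.map_apply]
  have hVsym : ∀ i j, Sym M hcr (fun s => (svdAt M hcr A s).V i j) := by
    intro i j s
    show (svdAt M hcr A (sig M hcr s)).V i j = (starRingEnd ℂ) ((svdAt M hcr A s).V i j)
    rw [(svdAt_sym M hcr A s).2.1]
    simp [Matrix.map_apply]
  have hSsym : ∀ (i : Fin m) (j : Fin p), Sym M hcr (fun s => if (i : ℕ) = (j : ℕ)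
      then (((svdAt M hcr A s).d j : ℝ) : ℂ) else 0) := by
    intro i j s
    show (if (i : ℕ) = (j : ℕ) then (((svdAt M hcr A (sig M hcr s)).d j : ℝ) : ℂ) else 0)
      = (starRingEnd ℂ) (if (i : ℕ) = (j : ℕ) then (((svdAt M hcr A s).d j : ℝ) : ℂ) else 0)
    by_cases h : (i : ℕ) = (j : ℕ)
    · simp only [if_pos h]
      rw [(svdAt_sym M hcr A s).2.2]
      simp [Complex.conj_ofReal]
    · simp [h]
  have hPhiU : ∀ i j, Phi M (UU i j) = fun s => (svdAt M hcr A s).U i j :=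
    fun i j => Phi_itr M hM hcr (hUsym i j)
  have hPhiV : ∀ i j, Phi M (VV i j) = fun s => (svdAt M hcr A s).V i j :=
    fun i j => Phi_itr M hM hcr (hVsym i j)
  have hPhiS : ∀ (i : Fin m) (j : Fin p), Phi M (SS i j) = fun s => if (i : ℕ) = (j : ℕ)
      then (((svdAt M hcr A s).d j : ℝ) : ℂ) else 0 :=
    fun i j => Phi_itr M hM hcr (hSsym i j)
  have hhatU : ∀ s, hatT M UU s = (svdAt M hcr A s).U := by
    intro s
    ext i j
    simp only [hatT, Matrix.of_apply]
    rw [hPhiU i j]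
  have hhatV : ∀ s, hatT M VV s = (svdAt M hcr A s).V := by
    intro s
    ext i j
    simp only [hatT, Matrix.of_apply]
    rw [hPhiV i j]
  have hhatS : ∀ s, hatT M SS s = Matrix.of fun (i : Fin m) (j : Fin p) =>
      if (i : ℕ) = (j : ℕ) then (((svdAt M hcr A s).d j : ℝ) : ℂ) else 0 := by
    intro s
    ext i j
    simp only [hatT, Matrix.of_apply]
    rw [hPhiS i j]
  refine ⟨UU, VV, SS, ?_, ?_, ?_, ?_, ?_, ?_, ?_, ?_⟩
  · apply hat_inj M hM
    intro s
    rw [hat_tmul M hM hcr, hat_htr M hM hcr, hhatU, hat_id M hM hcr,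
      (svdAt M hcr A s).hUl]
  · apply hat_inj M hM
    intro s
    rw [hat_tmul M hM hcr, hat_htr M hM hcr, hhatU, hat_id M hM hcr,
      (svdAt M hcr A s).hUr]
  · apply hat_inj M hM
    intro s
    rw [hat_tmul M hM hcr, hat_htr M hM hcr, hhatV, hat_id M hM hcr,
      (svdAt M hcr A s).hVl]
  · apply hat_inj M hM
    intro s
    rw [hat_tmul M hM hcr, hat_htr M hM hcr, hhatV, hat_id M hM hcr,
      (svdAt M hcr A s).hVr]
  · intro i j hij
    have h0 : (fun s : Fin n => if (i : ℕ) = (j : ℕ)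
        then (((svdAt M hcr A s).d j : ℝ) : ℂ) else 0) = 0 := by
      funext s
      simp [hij]
    rw [hSSdef]
    simp only [h0]
    funext t
    simp [itr, Matrix.mulVec_zero]
  · apply hat_inj M hM
    intro s
    rw [hat_tmul M hM hcr, hat_tmul M hM hcr, hat_htr M hM hcr, hhatU, hhatS, hhatV,
      ← Matrix.mul_assoc]
    exact (svdAt M hcr A s).factor
  · intro i j hij
    intro s
    have h : (M *ᵥ cvec (SS i j)) s = (((svdAt M hcr A s).d j : ℝ) : ℂ) := by
      have h1 := congrFun (hPhiS i j) s
      rw [if_pos hij] at h1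
      exact h1
    rw [h]
    exact ⟨by simp, by simpa using (svdAt M hcr A s).hd0 j⟩
  · intro i i' j j' hij hij' hii'
    intro s
    have hsub : (M *ᵥ cvec (SS i j - SS i' j')) s
        = Phi M (SS i j) s - Phi M (SS i' j') s := Phi_sub M (SS i j) (SS i' j') s
    have h1 := congrFun (hPhiS i j) s
    rw [if_pos hij] at h1
    have h2 := congrFun (hPhiS i' j') s
    rw [if_pos hij'] at h2
    rw [hsub, h1, h2]
    have hle : j ≤ j' := by
      rw [Fin.le_def]
      omega
    have := (svdAt M hcr A s).hanti hle
    constructor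
    · simp
    · simp only [Complex.sub_re, Complex.ofReal_re]
      linarith
end
end

section
/- Let M = cW ∈ ℂ^{n×n} where W is unitary, c is a nonzero scalar, and M satisfies the conjugate-row condition. Let A : Fin m → Fin p → ℝⁿ be a tensor viewed as a matrix of tubes, and for each s ∈ Fin n let Â_s ∈ ℂ^{m×p} denote the s-th frontal slice of the transformed tensor, with (i,j) entry (M·A_{ij})_s. Given a tuple r : Fin n → ℕ with r_s ≤ rank(Â_s) for all s, there exists a tensor A_r : Fin m → Fin p → ℝⁿ with rank((Â_r)_s) ≤ r_s for all s, such that for every tensor B : Fin m → Fin p → ℝⁿ with rank(B̂_s) ≤ r_s for all s, the Frobenius norm satisfies Σ_{i,j,s} (A_{ij} − (A_r)_{ij})_s² ≤ Σ_{i,j,s} (A_{ij} − B_{ij})_s². -/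
open Matrix

noncomputable section

/-- The `s`-th frontal slice of the transformed tensor `Â` (mode-3 product by `M`). -/
def hatSlice {m p n : ℕ} (M : Matrix (Fin n) (Fin n) ℂ)
    (A : Fin m → Fin p → Fin n → ℝ) (s : Fin n) : Matrix (Fin m) (Fin p) ℂ :=
  Matrix.of fun i j => (M *ᵥ cvec (A i j)) s

/-! ### Auxiliary lemmas: lower semicontinuity of matrix rank -/

/-- Rank of an arbitrary submatrix is at most the rank of the matrix. -/
lemma aux_rank_submatrix_le {m p a b : ℕ} (A : Matrix (Fin m) (Fin p) ℂ)
    (f : Fin a → Fin m) (g : Fin b → Fin p) :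
    (A.submatrix f g).rank ≤ A.rank := by
  have h1 : (A.submatrix id g).rank ≤ A.rank := by
    rw [Matrix.rank_eq_finrank_span_cols, Matrix.rank_eq_finrank_span_cols]
    apply Submodule.finrank_mono
    apply Submodule.span_mono
    rintro x ⟨i, rfl⟩
    exact ⟨g i, by ext j; rfl⟩
  have h2 : A.submatrix f g = (A.submatrix id g).submatrix f id := by
    ext i j; rfl
  rw [h2]
  refine le_trans ?_ h1
  rw [Matrix.rank_eq_finrank_span_row, Matrix.rank_eq_finrank_span_row]
  apply Submodule.finrank_mono
  apply Submodule.span_mono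
  rintro x ⟨i, rfl⟩
  exact ⟨f i, by ext j; rfl⟩

/-- From a family spanning a space of dimension at least `k`, one can extract a
linearly independent subfamily of size `k`. -/
lemma aux_exists_li {q k : ℕ} {V : Type*} [AddCommGroup V] [Module ℂ V]
    (v : Fin q → V) (h : k ≤ Module.finrank ℂ (Submodule.span ℂ (Set.range v))) :
    ∃ g : Fin k → Fin q, LinearIndependent ℂ (v ∘ g) := by
  obtain ⟨s, hsub, hspan, hli⟩ := exists_linearIndependent ℂ (Set.range v)
  have hfin : s.Finite := (Set.finite_range v).subset hsub
  haveI := hfin.fintype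
  rw [← hspan, finrank_span_set_eq_card hli] at h
  have hcard : Fintype.card (Fin k) ≤ Fintype.card s := by
    simpa [Set.toFinset_card] using h
  obtain ⟨e⟩ := Function.Embedding.nonempty_of_card_le hcard
  have hmem : ∀ i : Fin k, ∃ j : Fin q, v j = ((e i : s) : V) := fun i => hsub (e i).2
  choose g hg using hmem
  refine ⟨g, ?_⟩
  have hvg : v ∘ g = fun i => ((e i : s) : V) := funext fun i => hg i
  rw [hvg]
  exact hli.comp e e.injective

/-- A matrix of rank at least `k` has an invertible `k × k` submatrix. -/
lemma aux_exists_unit_submatrix {m p k : ℕ} (A : Matrix (Fin m) (Fin p) ℂ)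
    (h : k ≤ A.rank) :
    ∃ (f : Fin k → Fin m) (g : Fin k → Fin p), IsUnit (A.submatrix f g) := by
  rw [Matrix.rank_eq_finrank_span_cols] at h
  obtain ⟨g, hg⟩ := aux_exists_li Aᵀ h
  have hY : (A.submatrix id g).rank = k := by
    have hEq : (A.submatrix id g)ᵀ = Matrix.of (Aᵀ ∘ g) := by ext i j; rfl
    have h1 : ((A.submatrix id g)ᵀ).rank = k := by
      rw [hEq]
      have := (show LinearIndependent ℂ
          (Matrix.of (Aᵀ ∘ g) : Matrix (Fin k) (Fin m) ℂ) from hg).rank_matrix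
      simpa using this
    rw [← Matrix.rank_transpose]; exact h1
  have h2 : k ≤ Module.finrank ℂ (Submodule.span ℂ (Set.range (A.submatrix id g))) := by
    exact le_of_eq (hY.symm.trans (Matrix.rank_eq_finrank_span_row _))
  obtain ⟨f, hf⟩ := aux_exists_li (fun i => A.submatrix id g i) h2
  refine ⟨f, g, ?_⟩
  rw [← Matrix.linearIndependent_rows_iff_isUnit]
  exact hf

/-- The sublevel sets of the rank function are closed. -/
lemma aux_isClosed_rank_le {m p : ℕ} (r : ℕ) :
    IsClosed {X : Matrix (Fin m) (Fin p) ℂ | X.rank ≤ r} := by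
  rw [← isOpen_compl_iff, isOpen_iff_mem_nhds]
  intro X hX
  simp only [Set.mem_compl_iff, Set.mem_setOf_eq, not_le] at hX
  obtain ⟨f, g, hfg⟩ := aux_exists_unit_submatrix X (Nat.succ_le_of_lt hX)
  have hdet : (X.submatrix f g).det ≠ 0 :=
    ((Matrix.isUnit_iff_isUnit_det _).mp hfg).ne_zero
  have hcont : Continuous fun Y : Matrix (Fin m) (Fin p) ℂ => (Y.submatrix f g).det :=
    (continuous_id.matrix_submatrix f g).matrix_det
  have hnh : {Y : Matrix (Fin m) (Fin p) ℂ | (Y.submatrix f g).det ≠ 0} ∈ nhds X :=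
    (isOpen_compl_singleton.preimage hcont).mem_nhds hdet
  filter_upwards [hnh] with Y hY
  simp only [Set.mem_compl_iff, Set.mem_setOf_eq, not_le]
  have hu : IsUnit (Y.submatrix f g) :=
    (Matrix.isUnit_iff_isUnit_det _).mpr (isUnit_iff_ne_zero.mpr hY)
  have hrk : (Y.submatrix f g).rank = r + 1 := by
    rw [Matrix.rank_of_isUnit _ hu, Fintype.card_fin]
  calc r < r + 1 := Nat.lt_succ_self r
    _ = (Y.submatrix f g).rank := hrk.symm
    _ ≤ Y.rank := aux_rank_submatrix_le Y f g

/-- Eckart–Young for multirank truncation: for `M = c W` (`W` unitary,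
`c ≠ 0`) and any multirank bound `r` below the multirank of `A`, there is a tensor of
multirank at most `r` that is a best Frobenius-norm approximation of `A` among all
tensors of multirank at most `r`. -/
theorem stmt15 {n m p : ℕ} (M : Matrix (Fin n) (Fin n) ℂ)
    (c : ℂ) (hc : c ≠ 0)
    (W : Matrix (Fin n) (Fin n) ℂ) (hW : W ∈ Matrix.unitaryGroup (Fin n) ℂ)
    (hMcW : M = c • W) (hcr : ConjRows M)
    (A : Fin m → Fin p → Fin n → ℝ) (r : Fin n → ℕ)
    (hr : ∀ s, r s ≤ (hatSlice M A s).rank) :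
    ∃ Ar : Fin m → Fin p → Fin n → ℝ,
      (∀ s, (hatSlice M Ar s).rank ≤ r s) ∧
      ∀ B : Fin m → Fin p → Fin n → ℝ, (∀ s, (hatSlice M B s).rank ≤ r s) →
        ∑ i, ∑ j, ∑ s, (A i j s - Ar i j s) ^ 2 ≤
        ∑ i, ∑ j, ∑ s, (A i j s - B i j s) ^ 2 := by
  classical
  let E := EuclideanSpace ℝ (Fin m × Fin p × Fin n)
  let ψ : E → (Fin m → Fin p → Fin n → ℝ) := fun x i j s => x (i, j, s)
  let φ : (Fin m → Fin p → Fin n → ℝ) → E :=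
    fun C => (WithLp.equiv 2 _).symm (fun z => C z.1 z.2.1 z.2.2)
  have hψφ : ∀ C, ψ (φ C) = C := fun C => rfl
  have hφψ : ∀ x, φ (ψ x) = x := fun x => rfl
  let S : Set (Fin m → Fin p → Fin n → ℝ) := {B | ∀ s, (hatSlice M B s).rank ≤ r s}
  have hS0 : (0 : Fin m → Fin p → Fin n → ℝ) ∈ S := by
    intro s
    have hz : hatSlice M (0 : Fin m → Fin p → Fin n → ℝ) s = (0 : Matrix (Fin m) (Fin p) ℂ) := by
      ext i j
      simp [hatSlice, cvec, Matrix.mulVec, dotProduct]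
    rw [hz, Matrix.rank_zero]
    exact Nat.zero_le _
  have hScont : ∀ s : Fin n,
      Continuous fun B : Fin m → Fin p → Fin n → ℝ => hatSlice M B s := by
    intro s
    apply continuous_matrix
    intro i j
    have hEq : (fun B : Fin m → Fin p → Fin n → ℝ => hatSlice M B s i j)
        = fun B => ∑ k, M s k * ((B i j k : ℝ) : ℂ) := by
      funext B; rfl
    rw [hEq]
    refine continuous_finset_sum _ fun k _ => continuous_const.mul ?_
    exact Complex.continuous_ofReal.comp
      ((continuous_apply k).comp ((continuous_apply j).comp (continuous_apply i)))
  have hSclosed : IsClosed S := by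
    have hrepr : S = ⋂ s, (fun B => hatSlice M B s) ⁻¹' {X | X.rank ≤ r s} := by
      ext B; simp [S, Set.mem_iInter]
    rw [hrepr]
    exact isClosed_iInter fun s => (aux_isClosed_rank_le (r s)).preimage (hScont s)
  let S' : Set E := ψ ⁻¹' S
  have hψcont : Continuous ψ := by
    refine continuous_pi fun i => continuous_pi fun j => continuous_pi fun s => ?_
    exact (continuous_apply ((i, j, s) : Fin m × Fin p × Fin n)).comp
      (PiLp.continuous_ofLp 2 _)
  have hS'closed : IsClosed S' := hSclosed.preimage hψcont
  have hS'ne : S'.Nonempty := ⟨φ 0, show ψ (φ 0) ∈ S by rw [hψφ]; exact hS0⟩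
  obtain ⟨y, hyS', hy⟩ := hS'closed.exists_infDist_eq_dist hS'ne (φ A)
  have key : ∀ C : Fin m → Fin p → Fin n → ℝ,
      ∑ i, ∑ j, ∑ s, (A i j s - C i j s) ^ 2 = dist (φ A) (φ C) ^ 2 := by
    intro C
    have h1 : dist (φ A) (φ C)
        = Real.sqrt (∑ z : Fin m × Fin p × Fin n,
            (A z.1 z.2.1 z.2.2 - C z.1 z.2.1 z.2.2) ^ 2) := by
      rw [EuclideanSpace.dist_eq]
      congr 1
      refine Finset.sum_congr rfl fun z _ => ?_
      rw [Real.dist_eq, sq_abs]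
      rfl
    rw [h1, Real.sq_sqrt (by positivity)]
    rw [Fintype.sum_prod_type]
    refine Finset.sum_congr rfl fun i _ => ?_
    rw [Fintype.sum_prod_type]
  refine ⟨ψ y, hyS', fun B hB => ?_⟩
  have hBmem : φ B ∈ S' := show ψ (φ B) ∈ S by rw [hψφ]; exact hB
  have hd : dist (φ A) y ≤ dist (φ A) (φ B) := by
    rw [← hy]; exact Metric.infDist_le_dist_of_mem hBmem
  have h2 : dist (φ A) (φ (ψ y)) ≤ dist (φ A) (φ B) := by rw [hφψ]; exact hd
  rw [key (ψ y), key B]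
  exact pow_le_pow_left₀ dist_nonneg h2 2

end
end

section
/- Let · : ℝⁿ × ℝⁿ → ℝⁿ make (ℝⁿ, +, ·) a tubal ring, and for a ∈ ℝⁿ let R_a be its representation matrix. Let S ⊆ ℝⁿ be a set such that R_a is diagonalizable over ℂ for every a ∈ S. Then R_b is diagonalizable over ℂ for every b in the ℝ-linear span of S. -/
open Matrix

noncomputable section

/-- A real matrix is diagonalizable over ℂ. -/
def DiagOverC {n : ℕ} (A : Matrix (Fin n) (Fin n) ℝ) : Prop :=
  ∃ (P : Matrix (Fin n) (Fin n) ℂ) (d : Fin n → ℂ), IsUnit P.det ∧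
    A.map (fun x => (x : ℂ)) = P * Matrix.diagonal d * P⁻¹

open Polynomial Module
lemma tubal_conj_pow {n : ℕ} (P D Q : Matrix (Fin n) (Fin n) ℂ)
    (hPQ : P * Q = 1) (hQP : Q * P = 1) (k : ℕ) :
    (P * D * Q) ^ k = P * D ^ k * Q := by
  induction k with
  | zero => simpa using hPQ.symm
  | succ k ih =>
    rw [pow_succ, ih]
    calc P * D ^ k * Q * (P * D * Q)
        = P * D ^ k * ((Q * P) * (D * Q)) := by simp only [mul_assoc]
      _ = P * D ^ (k + 1) * Q := by
          rw [hQP, one_mul, pow_succ, ← mul_assoc, ← mul_assoc]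

lemma aeval_conj {n : ℕ} (P D Q : Matrix (Fin n) (Fin n) ℂ)
    (hPQ : P * Q = 1) (hQP : Q * P = 1) (p : ℂ[X]) :
    aeval (P * D * Q) p = P * aeval D p * Q := by
  induction p using Polynomial.induction_on' with
  | add p q hp hq => rw [map_add, map_add, hp, hq, mul_add, add_mul]
  | monomial k a =>
    rw [aeval_monomial, aeval_monomial, tubal_conj_pow P D Q hPQ hQP,
      Algebra.algebraMap_eq_smul_one]
    simp [smul_mul_assoc, mul_smul_comm, mul_assoc]

lemma diag_implies_ss {n : ℕ} {M P : Matrix (Fin n) (Fin n) ℂ} {d : Fin n → ℂ}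
    (hP : IsUnit P.det) (hM : M = P * Matrix.diagonal d * P⁻¹) :
    Module.End.IsSemisimple (Matrix.toLin' M : Module.End ℂ (Fin n → ℂ)) := by
  have hPQ : P * P⁻¹ = 1 := Matrix.mul_nonsing_inv P hP
  have hQP : P⁻¹ * P = 1 := Matrix.nonsing_inv_mul P hP
  set p : ℂ[X] := ∏ c ∈ Finset.univ.image d, (X - C c) with hp
  have hsf : Squarefree p := by
    refine Polynomial.Separable.squarefree ?_
    rw [hp]
    exact separable_prod_X_sub_C_iff'.mpr (fun x _ y _ h => h)
  have hdroot : aeval (d : Fin n → ℂ) p = 0 := by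
    funext i
    have : (aeval (d : Fin n → ℂ) p) i = eval (d i) p := by
      rw [aeval_pi_apply₂, coe_aeval_eq_eval]
    rw [this, hp, eval_prod]
    refine Finset.prod_eq_zero (Finset.mem_image_of_mem d (Finset.mem_univ i)) ?_
    simp
  have hDroot : aeval (Matrix.diagonal d) p = 0 := by
    have h0 := Polynomial.aeval_algHom_apply (Matrix.diagonalAlgHom (n := Fin n) ℂ) d p
    rw [show (Matrix.diagonalAlgHom (n := Fin n) ℂ) d = Matrix.diagonal d from rfl] at h0
    rw [h0, hdroot, map_zero]
  have hMroot : aeval M p = 0 := by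
    rw [hM, aeval_conj P _ P⁻¹ hPQ hQP, hDroot, mul_zero, zero_mul]
  refine Module.End.isSemisimple_of_squarefree_aeval_eq_zero hsf ?_
  have : aeval (Matrix.toLinAlgEquiv' M) p = Matrix.toLinAlgEquiv' (aeval M p) :=
    Polynomial.aeval_algHom_apply (Matrix.toLinAlgEquiv' : Matrix (Fin n) (Fin n) ℂ ≃ₐ[ℂ] _) M p
  have h2 : Matrix.toLinAlgEquiv' M = Matrix.toLin' M := rfl
  rw [h2] at this
  rw [this, hMroot, map_zero]

lemma ss_implies_diag {n : ℕ} {M : Matrix (Fin n) (Fin n) ℂ}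
    (h : Module.End.IsSemisimple (Matrix.toLin' M : Module.End ℂ (Fin n → ℂ))) :
    ∃ (P : Matrix (Fin n) (Fin n) ℂ) (d : Fin n → ℂ), IsUnit P.det ∧
      M = P * Matrix.diagonal d * P⁻¹ := by
  set f : Module.End ℂ (Fin n → ℂ) := Matrix.toLin' M with hf
  have h3 : ⨆ μ : ℂ, f.eigenspace μ = ⊤ := by
    have h1 := Module.End.iSup_maxGenEigenspace_eq_top f
    simp_rw [h.isFinitelySemisimple.maxGenEigenspace_eq_eigenspace] at h1
    exact h1
  have hI : DirectSum.IsInternal f.eigenspace :=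
    DirectSum.isInternal_submodule_of_iSupIndep_of_iSup_eq_top f.eigenspaces_iSupIndep h3
  let bs : ∀ μ : ℂ, Basis (Module.Free.ChooseBasisIndex ℂ (f.eigenspace μ)) ℂ (f.eigenspace μ) :=
    fun μ => Module.Free.chooseBasis ℂ _
  let b := hI.collectedBasis bs
  haveI : Fintype (Σ μ : ℂ, Module.Free.ChooseBasisIndex ℂ (f.eigenspace μ)) :=
    FiniteDimensional.fintypeBasisIndex b
  have hcard : Fintype.card (Σ μ : ℂ, Module.Free.ChooseBasisIndex ℂ (f.eigenspace μ)) = n := by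
    rw [← Module.finrank_eq_card_basis b]; simp
  let eq := Fintype.equivFinOfCardEq hcard
  let b' := b.reindex eq
  let d : Fin n → ℂ := fun i => (eq.symm i).1
  have hb' : ∀ i, f (b' i) = d i • b' i := by
    intro i
    have hm := hI.collectedBasis_mem bs (eq.symm i)
    rw [show b' i = b (eq.symm i) from Module.Basis.reindex_apply b eq i]
    exact Module.End.mem_eigenspace_iff.mp hm
  have hdiag : LinearMap.toMatrix b' b' f = Matrix.diagonal d := by
    ext i j
    rw [LinearMap.toMatrix_apply, hb' j, _root_.map_smul]
    simp only [Basis.repr_self, Finsupp.smul_single, smul_eq_mul, mul_one,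
      Finsupp.single_apply, Matrix.diagonal_apply]
    by_cases hij : i = j
    · subst hij; simp
    · simp [hij, Ne.symm hij]
  let pb := Pi.basisFun ℂ (Fin n)
  have key := basis_toMatrix_mul_linearMap_toMatrix_mul_basis_toMatrix pb b' pb b' f
  rw [hdiag, LinearMap.toMatrix_eq_toMatrix', hf, LinearMap.toMatrix'_toLin'] at key
  have hPQ : pb.toMatrix ⇑b' * b'.toMatrix ⇑pb = 1 := Basis.toMatrix_mul_toMatrix_flip pb b'
  have hdet : IsUnit (pb.toMatrix ⇑b').det :=
    IsUnit.of_mul_eq_one (b'.toMatrix ⇑pb).det (by rw [← Matrix.det_mul, hPQ, Matrix.det_one])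
  refine ⟨pb.toMatrix ⇑b', d, hdet, ?_⟩
  rw [Matrix.inv_eq_right_inv hPQ, key]

/-- in a tubal ring, if the representation matrices of all elements
of a set `S` are diagonalizable over ℂ, then so is the representation matrix of
every element of the ℝ-linear span of `S`. -/
theorem stmt17 {n : ℕ}
    (mul : (Fin n → ℝ) → (Fin n → ℝ) → (Fin n → ℝ))
    (hadd_left : ∀ a b c, mul (a + b) c = mul a c + mul b c)
    (hadd_right : ∀ a b c, mul a (b + c) = mul a b + mul a c)
    (hsmul_left : ∀ (r : ℝ) (a b : Fin n → ℝ), mul (r • a) b = r • mul a b)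
    (hsmul_right : ∀ (r : ℝ) (a b : Fin n → ℝ), mul a (r • b) = r • mul a b)
    (hcomm : ∀ a b, mul a b = mul b a)
    (hassoc : ∀ a b c, mul (mul a b) c = mul a (mul b c))
    (e : Fin n → ℝ) (hunit : ∀ a, mul e a = a)
    (hvnr : ∀ a, ∃ x, mul (mul a x) a = a)
    (R : (Fin n → ℝ) → Matrix (Fin n) (Fin n) ℝ)
    (hR : ∀ a x, R a *ᵥ x = mul a x)
    (S : Set (Fin n → ℝ)) (hS : ∀ a ∈ S, DiagOverC (R a)) :
    ∀ b ∈ Submodule.span ℝ S, DiagOverC (R b) := by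
  classical
  have matext : ∀ A B : Matrix (Fin n) (Fin n) ℝ, (∀ x, A *ᵥ x = B *ᵥ x) → A = B := by
    intro A B h
    have h2 : Matrix.toLin' A = Matrix.toLin' B :=
      LinearMap.ext fun x => by simpa [Matrix.toLin'_apply] using h x
    exact Matrix.toLin'.injective h2
  have hRadd : ∀ a b, R (a + b) = R a + R b := fun a b => matext _ _ fun x => by
    rw [hR, hadd_left, ← hR, ← hR, Matrix.add_mulVec]
  have hRsmul : ∀ (r : ℝ) a, R (r • a) = r • R a := fun r a => matext _ _ fun x => by
    rw [hR, hsmul_left, ← hR, Matrix.smul_mulVec]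
  have hRzero : R 0 = 0 := by
    have h0 := hRadd 0 0
    rw [add_zero] at h0
    have := congrArg (fun A => A - R 0) h0
    simpa using this.symm
  have hRmul : ∀ a b, R a * R b = R (mul a b) := fun a b => matext _ _ fun x => by
    rw [← Matrix.mulVec_mulVec, hR, hR, hR, hassoc]
  have hRcomm : ∀ a b, R a * R b = R b * R a := fun a b => by
    rw [hRmul, hRmul, hcomm]
  set Cm : Matrix (Fin n) (Fin n) ℝ → Matrix (Fin n) (Fin n) ℂ :=
    fun A => A.map (fun x => (x : ℂ)) with hCm
  have hCadd : ∀ A B, Cm (A + B) = Cm A + Cm B := fun A B => by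
    ext i j; simp [hCm]
  have hCmul : ∀ A B, Cm (A * B) = Cm A * Cm B := fun A B => by
    ext i j
    simp [hCm, Matrix.mul_apply]
  have hCsmul : ∀ (r : ℝ) A, Cm (r • A) = (r : ℂ) • Cm A := fun r A => by
    ext i j; simp [hCm]
  have hCzero : Cm 0 = 0 := by ext i j; simp [hCm]
  have key : ∀ b ∈ Submodule.span ℝ S,
      Module.End.IsSemisimple (Matrix.toLin' (Cm (R b)) : Module.End ℂ (Fin n → ℂ)) := by
    intro b hb
    induction hb using Submodule.span_induction with
    | mem a ha =>
      obtain ⟨P, d, hP, hPd⟩ := hS a ha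
      exact diag_implies_ss hP hPd
    | zero =>
      rw [hRzero, hCzero, map_zero]
      exact Module.End.isSemisimple_zero
    | add x y hxm hym hssx hssy =>
      rw [hRadd, hCadd, map_add]
      have hc : Commute (Cm (R x)) (Cm (R y)) := by
        unfold Commute SemiconjBy
        rw [← hCmul, ← hCmul, hRcomm]
      have hc2 : Commute (Matrix.toLin' (Cm (R x)) : Module.End ℂ (Fin n → ℂ))
          (Matrix.toLin' (Cm (R y))) := by
        have := hc.map (Matrix.toLinAlgEquiv' : Matrix (Fin n) (Fin n) ℂ ≃ₐ[ℂ] _)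
        exact this
      exact Module.End.IsSemisimple.add_of_commute hc2 hssx hssy
    | smul r x hxm hss =>
      rw [hRsmul, hCsmul, _root_.map_smul]
      exact Module.End.IsSemisimple_smul _ hss
  intro b hb
  obtain ⟨P, d, hP, hPd⟩ := ss_implies_diag (key b hb)
  exact ⟨P, d, hP, hPd⟩
end
end
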